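/- arXiv:1311.0152 — 11 statements merged into one kernel-verified Lean document; each statement's English description precedes it below -/
import Mathlib

section
/- The classical lattice potential KdV equation is consistent around the cube: if u_{[ij]} = u + 2(p_i+p_j)(u_{[i]} − u_{[j]})/(2(p_j−p_i) + u_{[i]} − u_{[j]}) for all pairs i≠j among {1,2,3}, and u_{[ijl]} = u_{[l]} + 2(p_i+p_j)(u_{[il]} − u_{[jl]})/(2(p_j−p_i) + u_{[il]} − u_{[jl]}), then u_{[123]} = u_{[231]} = u_{[312]}, all denominators being assumed nonzero. -/
/-!
The gauge `v := u - 2 p` (at a vertex shifted in the directions `i`, subtract `2 p_i` for each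
such direction) turns the lattice potential KdV equation into the H1 equation
`(v₁₂ - v) (v₁ - v₂) = α₁ - α₂` with `α_i = 4 p_i²`. For H1 the value at the far corner of the cube
is `(α₁ v₁ (v₂ - v₃) + α₂ v₂ (v₃ - v₁) + α₃ v₃ (v₁ - v₂)) / (α₁ (v₂ - v₃) + α₂ (v₃ - v₁) + α₃ (v₁ - v₂))`,
which is invariant under cyclic permutations of the directions.
-/

namespace LatticeKdV

variable {K : Type*} [Field K]

def lpkdv (p q u ua ub : K) : K := u + 2*(p + q)*(ua - ub)/(2*(q - p) + ua - ub)

def h1 (α β v va vb : K) : K := v + (α - β)/(va - vb)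

def h1Apex (α₁ α₂ α₃ v₁ v₂ v₃ : K) : K :=
  (α₁*v₁*(v₂ - v₃) + α₂*v₂*(v₃ - v₁) + α₃*v₃*(v₁ - v₂)) /
    (α₁*(v₂ - v₃) + α₂*(v₃ - v₁) + α₃*(v₁ - v₂))

theorem h1Apex_cycle (α₁ α₂ α₃ v₁ v₂ v₃ : K) :
    h1Apex α₂ α₃ α₁ v₂ v₃ v₁ = h1Apex α₁ α₂ α₃ v₁ v₂ v₃ := by
  unfold h1Apex
  congr 1 <;> ring

theorem h1_add_const (α β v va vb c : K) :
    h1 α β (v + c) (va + c) (vb + c) = h1 α β v va vb + c := by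
  simp only [h1, add_sub_add_right_eq_sub]
  ring

theorem h1_h1_eq_h1Apex (α₁ α₂ α₃ v v₁ v₂ v₃ : K) (h₁₃ : v₁ ≠ v₃) (h₂₃ : v₂ ≠ v₃)
    (h : h1 α₁ α₃ v v₁ v₃ ≠ h1 α₂ α₃ v v₂ v₃) :
    h1 α₁ α₂ v₃ (h1 α₁ α₃ v v₁ v₃) (h1 α₂ α₃ v v₂ v₃) = h1Apex α₁ α₂ α₃ v₁ v₂ v₃ := by
  have h₁₃' := sub_ne_zero.2 h₁₃
  have h₂₃' := sub_ne_zero.2 h₂₃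
  have hdiff : h1 α₁ α₃ v v₁ v₃ - h1 α₂ α₃ v v₂ v₃ =
      (α₁*(v₂ - v₃) + α₂*(v₃ - v₁) + α₃*(v₁ - v₂)) / ((v₁ - v₃)*(v₂ - v₃)) := by
    unfold h1
    field_simp
    ring
  have hS : α₁*(v₂ - v₃) + α₂*(v₃ - v₁) + α₃*(v₁ - v₂) ≠ 0 := by
    intro hS
    rw [hS, zero_div, sub_eq_zero] at hdiff
    exact h hdiff
  rw [h1, hdiff, h1Apex]
  field_simp
  ring

theorem lpkdv_eq_h1 (p q u ua ub : K) (h : 2*(q - p) + ua - ub ≠ 0) :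
    lpkdv p q u ua ub = h1 (4*p^2) (4*q^2) u (ua - 2*p) (ub - 2*q) + 2*(p + q) := by
  have hD : ua - 2*p - (ub - 2*q) = 2*(q - p) + ua - ub := by ring
  rw [h1, hD, lpkdv]
  field_simp
  ring

theorem lpkdv_lpkdv_eq_h1Apex (p₁ p₂ p₃ u u₁ u₂ u₃ : K)
    (h₁₃ : 2*(p₃ - p₁) + u₁ - u₃ ≠ 0) (h₂₃ : 2*(p₃ - p₂) + u₂ - u₃ ≠ 0)
    (h : 2*(p₂ - p₁) + lpkdv p₁ p₃ u u₁ u₃ - lpkdv p₂ p₃ u u₂ u₃ ≠ 0) :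
    lpkdv p₁ p₂ u₃ (lpkdv p₁ p₃ u u₁ u₃) (lpkdv p₂ p₃ u u₂ u₃) =
      h1Apex (4*p₁^2) (4*p₂^2) (4*p₃^2) (u₁ - 2*p₁) (u₂ - 2*p₂) (u₃ - 2*p₃)
        + 2*(p₁ + p₂ + p₃) := by
  rw [lpkdv_eq_h1 _ _ _ _ _ h₁₃, lpkdv_eq_h1 _ _ _ _ _ h₂₃] at h ⊢
  rw [lpkdv_eq_h1 _ _ _ _ _ h]
  set v₁₃ := h1 (4*p₁^2) (4*p₃^2) u (u₁ - 2*p₁) (u₃ - 2*p₃)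
  set v₂₃ := h1 (4*p₂^2) (4*p₃^2) u (u₂ - 2*p₂) (u₃ - 2*p₃)
  have hv₁₃ : u₁ - 2*p₁ ≠ u₃ - 2*p₃ := fun e ↦ h₁₃ (by linear_combination e)
  have hv₂₃ : u₂ - 2*p₂ ≠ u₃ - 2*p₃ := fun e ↦ h₂₃ (by linear_combination e)
  have hv : v₁₃ ≠ v₂₃ := fun e ↦ h (by linear_combination e)
  calc h1 (4*p₁^2) (4*p₂^2) u₃ (v₁₃ + 2*(p₁ + p₃) - 2*p₁) (v₂₃ + 2*(p₂ + p₃) - 2*p₂)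
          + 2*(p₁ + p₂)
      = h1 (4*p₁^2) (4*p₂^2) (u₃ - 2*p₃ + 2*p₃) (v₁₃ + 2*p₃) (v₂₃ + 2*p₃) + 2*(p₁ + p₂) := by
        ring_nf
    _ = h1 (4*p₁^2) (4*p₂^2) (u₃ - 2*p₃) v₁₃ v₂₃ + 2*(p₁ + p₂ + p₃) := by
        rw [h1_add_const]
        ring
    _ = _ := by rw [h1_h1_eq_h1Apex _ _ _ _ _ _ _ hv₁₃ hv₂₃ hv]

end LatticeKdV

open LatticeKdV in
theorem lpkdv_consistency_around_the_cube_general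
    {K : Type*} [Field K]
    (p1 p2 p3 u u1 u2 u3 : K)
    (u12 u21 u13 u31 u23 u32 u123 u231 u312 : K)
    (h12 : 2*(p2 - p1) + u1 - u2 ≠ 0)
    (h21 : 2*(p1 - p2) + u2 - u1 ≠ 0)
    (h13 : 2*(p3 - p1) + u1 - u3 ≠ 0)
    (h31 : 2*(p1 - p3) + u3 - u1 ≠ 0)
    (h23 : 2*(p3 - p2) + u2 - u3 ≠ 0)
    (h32 : 2*(p2 - p3) + u3 - u2 ≠ 0)
    (e12 : u12 = u + 2*(p1 + p2)*(u1 - u2)/(2*(p2 - p1) + u1 - u2))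
    (e21 : u21 = u + 2*(p2 + p1)*(u2 - u1)/(2*(p1 - p2) + u2 - u1))
    (e13 : u13 = u + 2*(p1 + p3)*(u1 - u3)/(2*(p3 - p1) + u1 - u3))
    (e31 : u31 = u + 2*(p3 + p1)*(u3 - u1)/(2*(p1 - p3) + u3 - u1))
    (e23 : u23 = u + 2*(p2 + p3)*(u2 - u3)/(2*(p3 - p2) + u2 - u3))
    (e32 : u32 = u + 2*(p3 + p2)*(u3 - u2)/(2*(p2 - p3) + u3 - u2))
    (h123 : 2*(p2 - p1) + u13 - u23 ≠ 0)
    (h231 : 2*(p3 - p2) + u21 - u31 ≠ 0)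
    (h312 : 2*(p1 - p3) + u32 - u12 ≠ 0)
    (e123 : u123 = u3 + 2*(p1 + p2)*(u13 - u23)/(2*(p2 - p1) + u13 - u23))
    (e231 : u231 = u1 + 2*(p2 + p3)*(u21 - u31)/(2*(p3 - p2) + u21 - u31))
    (e312 : u312 = u2 + 2*(p3 + p1)*(u32 - u12)/(2*(p1 - p3) + u32 - u12)) :
    u123 = u231 ∧ u231 = u312 := by
  change u12 = lpkdv p1 p2 u u1 u2 at e12
  change u21 = lpkdv p2 p1 u u2 u1 at e21
  change u13 = lpkdv p1 p3 u u1 u3 at e13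
  change u31 = lpkdv p3 p1 u u3 u1 at e31
  change u23 = lpkdv p2 p3 u u2 u3 at e23
  change u32 = lpkdv p3 p2 u u3 u2 at e32
  change u123 = lpkdv p1 p2 u3 u13 u23 at e123
  change u231 = lpkdv p2 p3 u1 u21 u31 at e231
  change u312 = lpkdv p3 p1 u2 u32 u12 at e312
  subst u12 u21 u13 u31 u23 u32
  rw [e123, e231, e312, lpkdv_lpkdv_eq_h1Apex _ _ _ _ _ _ _ h13 h23 h123,
    lpkdv_lpkdv_eq_h1Apex _ _ _ _ _ _ _ h21 h31 h231, lpkdv_lpkdv_eq_h1Apex _ _ _ _ _ _ _ h32 h12 h312,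
    h1Apex_cycle (4*p1^2), ← h1Apex_cycle (4*p3^2)]
  constructor <;> ring

/-- The classical lattice potential KdV equation is consistent around
the cube: with face values `u_{[ij]}` and triple values `u_{[ijl]}` defined by the
lpKdV quad equation (all denominators nonzero), one has
`u_{[123]} = u_{[231]} = u_{[312]}`. -/
theorem lpkdv_consistency_around_the_cube
    {K : Type*} [Field K] [CharZero K]
    (p1 p2 p3 u u1 u2 u3 : K)
    (u12 u21 u13 u31 u23 u32 u123 u231 u312 : K)
    (h12 : 2*(p2 - p1) + u1 - u2 ≠ 0)
    (h21 : 2*(p1 - p2) + u2 - u1 ≠ 0)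
    (h13 : 2*(p3 - p1) + u1 - u3 ≠ 0)
    (h31 : 2*(p1 - p3) + u3 - u1 ≠ 0)
    (h23 : 2*(p3 - p2) + u2 - u3 ≠ 0)
    (h32 : 2*(p2 - p3) + u3 - u2 ≠ 0)
    (e12 : u12 = u + 2*(p1 + p2)*(u1 - u2)/(2*(p2 - p1) + u1 - u2))
    (e21 : u21 = u + 2*(p2 + p1)*(u2 - u1)/(2*(p1 - p2) + u2 - u1))
    (e13 : u13 = u + 2*(p1 + p3)*(u1 - u3)/(2*(p3 - p1) + u1 - u3))
    (e31 : u31 = u + 2*(p3 + p1)*(u3 - u1)/(2*(p1 - p3) + u3 - u1))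
    (e23 : u23 = u + 2*(p2 + p3)*(u2 - u3)/(2*(p3 - p2) + u2 - u3))
    (e32 : u32 = u + 2*(p3 + p2)*(u3 - u2)/(2*(p2 - p3) + u3 - u2))
    (h123 : 2*(p2 - p1) + u13 - u23 ≠ 0)
    (h231 : 2*(p3 - p2) + u21 - u31 ≠ 0)
    (h312 : 2*(p1 - p3) + u32 - u12 ≠ 0)
    (e123 : u123 = u3 + 2*(p1 + p2)*(u13 - u23)/(2*(p2 - p1) + u13 - u23))
    (e231 : u231 = u1 + 2*(p2 + p3)*(u21 - u31)/(2*(p3 - p2) + u21 - u31))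
    (e312 : u312 = u2 + 2*(p3 + p1)*(u32 - u12)/(2*(p1 - p3) + u32 - u12)) :
    u123 = u231 ∧ u231 = u312 :=
  lpkdv_consistency_around_the_cube_general p1 p2 p3 u u1 u2 u3 u12 u21 u13 u31 u23 u32 u123 u231
    u312 h12 h21 h13 h31 h23 h32 e12 e21 e13 e31 e23 e32 h123 h231 h312 e123 e231 e312
end

section
/- For the lattice potential KdV cube, the value u_{[123]} can be written explicitly as u_{[123]} = (1/H)·Σ_cyc p_i²[u_{[i]}(u_{[l]} − u_{[j]}) + 2p_j(u_{[i]} − u_{[j]} + u_{[l]}) − 2p_l(u_{[i]} + u_{[j]} − u_{[l]})], where H = 2(p₁−p₂)(p₁−p₃)(p₂−p₃) + Σ_cyc (p_i² − p_j²)u_{[l]}, the cyclic sums running over (i,j,l) = (1,2,3),(2,3,1),(3,1,2); in particular u_{[123]} is independent of u and symmetric under permutations of the indices 1,2,3. -/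
/-!
Each face of the cube is the lattice potential KdV equation, so `u_{[ijl]}` is obtained by
applying the one-step map twice. Clearing the denominators of the two inner steps, the
denominator of the outer step becomes `-4H / (d_{il} d_{jl})` with
`d_{il} = 2(p_l − p_i) + u_{[i]} − u_{[l]}`; all dependence on `u` cancels and what remains is
the stated rational function of the `p`'s and `u_{[i]}`'s. Numerator and `H` are invariant under
cyclic permutation of the indices, so the three ways of reaching the far corner agree.
-/

namespace LatticePKdV

variable {K : Type*} [Field K]

/-- `step p q u ui uj` is the value `u_{[ij]}` determined by the lattice potential KdV equation
on the face with lattice parameters `p`, `q`. -/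
def step (p q u ui uj : K) : K :=
  u + 2*(p + q)*(ui - uj)/(2*(q - p) + ui - uj)

def cubeDen (p q r a b c : K) : K :=
  2*(p - q)*(p - r)*(q - r) + (p^2 - q^2)*c + (q^2 - r^2)*a + (r^2 - p^2)*b

def cubeNum (p q r a b c : K) : K :=
  p^2*(a*(c - b) + 2*q*(a - b + c) - 2*r*(a + b - c))
    + q^2*(b*(a - c) + 2*r*(b - c + a) - 2*p*(b + c - a))
    + r^2*(c*(b - a) + 2*p*(c - a + b) - 2*q*(c + a - b))

theorem cubeDen_cycle (p q r a b c : K) : cubeDen q r p b c a = cubeDen p q r a b c := by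
  unfold cubeDen; ring

theorem cubeNum_cycle (p q r a b c : K) : cubeNum q r p b c a = cubeNum p q r a b c := by
  unfold cubeNum; ring

theorem step_outer_denom_eq (p q r u a b c : K)
    (hpr : 2*(r - p) + a - c ≠ 0) (hqr : 2*(r - q) + b - c ≠ 0) :
    2*(q - p) + step p r u a c - step q r u b c
      = -4 * cubeDen p q r a b c / ((2*(r - p) + a - c)*(2*(r - q) + b - c)) := by
  unfold step cubeDen
  field_simp
  ring

theorem step_step_eq_cubeNum_div_cubeDen [NeZero (2 : K)] (p q r u a b c : K)
    (hpr : 2*(r - p) + a - c ≠ 0) (hqr : 2*(r - q) + b - c ≠ 0) (hH : cubeDen p q r a b c ≠ 0) :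
    step p q c (step p r u a c) (step q r u b c) = cubeNum p q r a b c / cubeDen p q r a b c := by
  have h4 : (4 : K) ≠ 0 := by
    rw [show (4 : K) = 2 * 2 by norm_num]; exact mul_ne_zero two_ne_zero two_ne_zero
  rw [step, step_outer_denom_eq p q r u a b c hpr hqr]
  unfold step cubeNum
  field_simp
  unfold cubeDen
  ring

end LatticePKdV

open LatticePKdV in
theorem lpkdv_u123_explicit_formula_general
    {K : Type*} [Field K] [CharZero K]
    (p1 p2 p3 u u1 u2 u3 : K)
    (u12 u21 u13 u31 u23 u32 u123 u231 u312 : K)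
    (h12 : 2*(p2 - p1) + u1 - u2 ≠ 0)
    (h21 : 2*(p1 - p2) + u2 - u1 ≠ 0)
    (h13 : 2*(p3 - p1) + u1 - u3 ≠ 0)
    (h31 : 2*(p1 - p3) + u3 - u1 ≠ 0)
    (h23 : 2*(p3 - p2) + u2 - u3 ≠ 0)
    (h32 : 2*(p2 - p3) + u3 - u2 ≠ 0)
    (e12 : u12 = u + 2*(p1 + p2)*(u1 - u2)/(2*(p2 - p1) + u1 - u2))
    (e21 : u21 = u + 2*(p2 + p1)*(u2 - u1)/(2*(p1 - p2) + u2 - u1))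
    (e13 : u13 = u + 2*(p1 + p3)*(u1 - u3)/(2*(p3 - p1) + u1 - u3))
    (e31 : u31 = u + 2*(p3 + p1)*(u3 - u1)/(2*(p1 - p3) + u3 - u1))
    (e23 : u23 = u + 2*(p2 + p3)*(u2 - u3)/(2*(p3 - p2) + u2 - u3))
    (e32 : u32 = u + 2*(p3 + p2)*(u3 - u2)/(2*(p2 - p3) + u3 - u2))
    (e123 : u123 = u3 + 2*(p1 + p2)*(u13 - u23)/(2*(p2 - p1) + u13 - u23))
    (e231 : u231 = u1 + 2*(p2 + p3)*(u21 - u31)/(2*(p3 - p2) + u21 - u31))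
    (e312 : u312 = u2 + 2*(p3 + p1)*(u32 - u12)/(2*(p1 - p3) + u32 - u12))
    (hH : 2*(p1 - p2)*(p1 - p3)*(p2 - p3)
        + (p1^2 - p2^2)*u3 + (p2^2 - p3^2)*u1 + (p3^2 - p1^2)*u2 ≠ 0) :
    u123 = (p1^2*(u1*(u3 - u2) + 2*p2*(u1 - u2 + u3) - 2*p3*(u1 + u2 - u3))
          + p2^2*(u2*(u1 - u3) + 2*p3*(u2 - u3 + u1) - 2*p1*(u2 + u3 - u1))
          + p3^2*(u3*(u2 - u1) + 2*p1*(u3 - u1 + u2) - 2*p2*(u3 + u1 - u2)))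
        / (2*(p1 - p2)*(p1 - p3)*(p2 - p3)
          + (p1^2 - p2^2)*u3 + (p2^2 - p3^2)*u1 + (p3^2 - p1^2)*u2)
      ∧ u123 = u231 ∧ u123 = u312 := by
  have hH231 : cubeDen p2 p3 p1 u2 u3 u1 ≠ 0 := by rwa [cubeDen_cycle]
  have hH312 : cubeDen p3 p1 p2 u3 u1 u2 ≠ 0 := by rwa [← cubeDen_cycle]
  have c123 : u123 = cubeNum p1 p2 p3 u1 u2 u3 / cubeDen p1 p2 p3 u1 u2 u3 := by
    subst e123 e13 e23; exact step_step_eq_cubeNum_div_cubeDen p1 p2 p3 u u1 u2 u3 h13 h23 hH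
  have c231 : u231 = cubeNum p2 p3 p1 u2 u3 u1 / cubeDen p2 p3 p1 u2 u3 u1 := by
    subst e231 e21 e31; exact step_step_eq_cubeNum_div_cubeDen p2 p3 p1 u u2 u3 u1 h21 h31 hH231
  have c312 : u312 = cubeNum p3 p1 p2 u3 u1 u2 / cubeDen p3 p1 p2 u3 u1 u2 := by
    subst e312 e32 e12; exact step_step_eq_cubeNum_div_cubeDen p3 p1 p2 u u3 u1 u2 h32 h12 hH312
  rw [cubeNum_cycle, cubeDen_cycle] at c231
  rw [← cubeNum_cycle, ← cubeDen_cycle] at c312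
  exact ⟨c123, c123.trans c231.symm, c123.trans c312.symm⟩

/-- Explicit formula for `u_{[123]}` of the lattice potential KdV cube:
`u_{[123]} = (1/H) Σ_cyc p_i²[u_i(u_l − u_j) + 2p_j(u_i − u_j + u_l) − 2p_l(u_i + u_j − u_l)]`
with `H = 2(p₁−p₂)(p₁−p₃)(p₂−p₃) + Σ_cyc (p_i² − p_j²)u_l`; in particular `u_{[123]}`
is independent of `u` and symmetric under permutations of the indices 1,2,3
(`u_{[123]} = u_{[231]} = u_{[312]}`). -/
theorem lpkdv_u123_explicit_formula
    {K : Type*} [Field K] [CharZero K]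
    (p1 p2 p3 u u1 u2 u3 : K)
    (u12 u21 u13 u31 u23 u32 u123 u231 u312 : K)
    (h12 : 2*(p2 - p1) + u1 - u2 ≠ 0)
    (h21 : 2*(p1 - p2) + u2 - u1 ≠ 0)
    (h13 : 2*(p3 - p1) + u1 - u3 ≠ 0)
    (h31 : 2*(p1 - p3) + u3 - u1 ≠ 0)
    (h23 : 2*(p3 - p2) + u2 - u3 ≠ 0)
    (h32 : 2*(p2 - p3) + u3 - u2 ≠ 0)
    (e12 : u12 = u + 2*(p1 + p2)*(u1 - u2)/(2*(p2 - p1) + u1 - u2))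
    (e21 : u21 = u + 2*(p2 + p1)*(u2 - u1)/(2*(p1 - p2) + u2 - u1))
    (e13 : u13 = u + 2*(p1 + p3)*(u1 - u3)/(2*(p3 - p1) + u1 - u3))
    (e31 : u31 = u + 2*(p3 + p1)*(u3 - u1)/(2*(p1 - p3) + u3 - u1))
    (e23 : u23 = u + 2*(p2 + p3)*(u2 - u3)/(2*(p3 - p2) + u2 - u3))
    (e32 : u32 = u + 2*(p3 + p2)*(u3 - u2)/(2*(p2 - p3) + u3 - u2))
    (h123 : 2*(p2 - p1) + u13 - u23 ≠ 0)
    (h231 : 2*(p3 - p2) + u21 - u31 ≠ 0)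
    (h312 : 2*(p1 - p3) + u32 - u12 ≠ 0)
    (e123 : u123 = u3 + 2*(p1 + p2)*(u13 - u23)/(2*(p2 - p1) + u13 - u23))
    (e231 : u231 = u1 + 2*(p2 + p3)*(u21 - u31)/(2*(p3 - p2) + u21 - u31))
    (e312 : u312 = u2 + 2*(p3 + p1)*(u32 - u12)/(2*(p1 - p3) + u32 - u12))
    (hH : 2*(p1 - p2)*(p1 - p3)*(p2 - p3)
        + (p1^2 - p2^2)*u3 + (p2^2 - p3^2)*u1 + (p3^2 - p1^2)*u2 ≠ 0) :
    u123 = (p1^2*(u1*(u3 - u2) + 2*p2*(u1 - u2 + u3) - 2*p3*(u1 + u2 - u3))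
          + p2^2*(u2*(u1 - u3) + 2*p3*(u2 - u3 + u1) - 2*p1*(u2 + u3 - u1))
          + p3^2*(u3*(u2 - u1) + 2*p1*(u3 - u1 + u2) - 2*p2*(u3 + u1 - u2)))
        / (2*(p1 - p2)*(p1 - p3)*(p2 - p3)
          + (p1^2 - p2^2)*u3 + (p2^2 - p3^2)*u1 + (p3^2 - p1^2)*u2)
      ∧ u123 = u231 ∧ u123 = u312 :=
  lpkdv_u123_explicit_formula_general p1 p2 p3 u u1 u2 u3 u12 u21 u13 u31 u23 u32 u123 u231 u312 h12
    h21 h13 h31 h23 h32 e12 e21 e13 e31 e23 e32 e123 e231 e312 hH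
end

section
/- The compatibility condition W_x + W L − L_{[1]} W = 0 of the 4×4 linear problems Ψ_x = LΨ and Ψ_{[1]} = WΨ holds if and only if Λ satisfies Λ_x + β_x − 2p₁Λ + Λ(𝒟Λ) = 0, where Λ = ½(β_{[1]} − β), i.e. iff the Bäcklund transformation (β_{[1]} + β)_x − 2p₁(β_{[1]} − β) + ½(β_{[1]} − β)𝒟(β_{[1]} − β) = 0 holds. -/
/-- A supercommutative (Grassmann) algebra structure on a ring `A`: a pair of parity
predicates with even elements central and odd elements pairwise anticommuting. -/
structure SuperCommRing (A : Type*) [Ring A] where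
  ev : A → Prop
  od : A → Prop
  ev_one : ev 1
  ev_add : ∀ {a b : A}, ev a → ev b → ev (a + b)
  od_add : ∀ {a b : A}, od a → od b → od (a + b)
  ev_neg : ∀ {a : A}, ev a → ev (-a)
  od_neg : ∀ {a : A}, od a → od (-a)
  ev_mul : ∀ {a b : A}, ev a → ev b → ev (a * b)
  od_mul_od : ∀ {a b : A}, od a → od b → ev (a * b)
  ev_mul_od : ∀ {a b : A}, ev a → od b → od (a * b)
  od_mul_ev : ∀ {a b : A}, od a → ev b → od (a * b)
  ev_comm : ∀ {a : A} (b : A), ev a → a * b = b * a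
  od_anticomm : ∀ {a b : A}, od a → od b → a * b = -(b * a)

/-- A pair of derivations on a supercommutative algebra: the spatial derivative `dx`
(an even derivation) and the superderivative `ds` (an odd derivation, `𝒟 = ∂_θ + θ∂_x`)
with `𝒟² = ∂_x` and the graded Leibniz rule. -/
structure SuperDer {A : Type*} [Ring A] [Algebra ℚ A] (S : SuperCommRing A) where
  dx : A → A
  ds : A → A
  dx_add : ∀ a b : A, dx (a + b) = dx a + dx b
  dx_smul : ∀ (q : ℚ) (a : A), dx (q • a) = q • dx a
  dx_mul : ∀ a b : A, dx (a * b) = dx a * b + a * dx b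
  ds_add : ∀ a b : A, ds (a + b) = ds a + ds b
  ds_smul : ∀ (q : ℚ) (a : A), ds (q • a) = q • ds a
  ds_mul_ev : ∀ a b : A, S.ev a → ds (a * b) = ds a * b + a * ds b
  ds_mul_od : ∀ a b : A, S.od a → ds (a * b) = ds a * b - a * ds b
  ds_ds : ∀ a : A, ds (ds a) = dx a
  dx_ev : ∀ a : A, S.ev a → S.ev (dx a)
  dx_od : ∀ a : A, S.od a → S.od (dx a)
  ds_ev : ∀ a : A, S.ev a → S.od (ds a)
  ds_od : ∀ a : A, S.od a → S.ev (ds a)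

/-- The compatibility condition `W_x + WL − L₁W = 0` of the 4×4 linear
problems `Ψ_x = LΨ`, `Ψ₁ = WΨ` (for all values `λ²` of the spectral parameter, i.e.
for every even constant `lam2`) holds iff the Bäcklund transformation
`(β₁+β)_x − 2p₁(β₁−β) + ½(β₁−β)𝒟(β₁−β) = 0` holds, where `Λ = ½(β₁−β)`. -/
theorem super_kdv_lax_compatibility_iff_backlund
    {A : Type*} [Ring A] [Algebra ℚ A] (S : SuperCommRing A) (D : SuperDer S)
    (p1 : ℚ) (β β1 Λ : A)
    (hβ : S.od β) (hβ1 : S.od β1)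
    (hΛ : Λ = ((1:ℚ)/2) • (β1 - β)) :
    (∀ lam2 : A, S.ev lam2 → D.dx lam2 = 0 → D.ds lam2 = 0 →
      (let W : Matrix (Fin 4) (Fin 4) A :=
        !![p1 • (1:A), 1, -Λ, 0;
           lam2, p1 • (1:A), (D.ds Λ - (2*p1) • (1:A)) * Λ, -Λ;
           0, Λ, p1 • (1:A) - D.ds Λ, 1;
           lam2 * Λ, ((2*p1) • (1:A) - D.ds Λ) * Λ,
             lam2 - (2*p1) • D.ds Λ + D.ds Λ * D.ds Λ, p1 • (1:A) - D.ds Λ];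
      let L : Matrix (Fin 4) (Fin 4) A :=
        !![0, 1, 0, 0;
           lam2, 0, -(D.dx β), 0;
           0, 0, 0, 1;
           0, D.dx β, lam2 - D.ds (D.dx β), 0];
      let L1 : Matrix (Fin 4) (Fin 4) A :=
        !![0, 1, 0, 0;
           lam2, 0, -(D.dx β1), 0;
           0, 0, 0, 1;
           0, D.dx β1, lam2 - D.ds (D.dx β1), 0];
      W.map D.dx + W * L - L1 * W = 0))
    ↔ D.dx (β1 + β) - (2*p1) • (β1 - β)
        + ((1:ℚ)/2) • ((β1 - β) * D.ds (β1 - β)) = 0 := by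
    -- ===== general facts =====
  have half : ∀ x y : A, (2:ℚ) • x = (2:ℚ) • y → x = y := by
    intro x y h
    have h2 := congrArg (fun t => ((2:ℚ)⁻¹) • t) h
    simpa [smul_smul, show ((2:ℚ)⁻¹ * 2 : ℚ) = 1 by norm_num] using h2
  have hdx0 : D.dx 0 = 0 := by simpa using D.dx_smul 0 0
  have hds0 : D.ds 0 = 0 := by simpa using D.ds_smul 0 0
  have hdxneg : ∀ x : A, D.dx (-x) = -D.dx x := by
    intro x
    have h := D.dx_add x (-x)
    rw [add_neg_cancel, hdx0] at h
    exact eq_neg_of_add_eq_zero_right h.symm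
  have hdsneg : ∀ x : A, D.ds (-x) = -D.ds x := by
    intro x
    have h := D.ds_add x (-x)
    rw [add_neg_cancel, hds0] at h
    exact eq_neg_of_add_eq_zero_right h.symm
  have hdxsub : ∀ x y : A, D.dx (x - y) = D.dx x - D.dx y := by
    intro x y; rw [sub_eq_add_neg, D.dx_add, hdxneg, ← sub_eq_add_neg]
  have hdssub : ∀ x y : A, D.ds (x - y) = D.ds x - D.ds y := by
    intro x y; rw [sub_eq_add_neg, D.ds_add, hdsneg, ← sub_eq_add_neg]
  have hdx1 : D.dx (1:A) = 0 := by
    have h := D.dx_mul 1 1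
    simp only [mul_one, one_mul] at h
    exact left_eq_add.mp h
  have hμ : S.od (β1 - β) := by
    rw [sub_eq_add_neg]; exact S.od_add hβ1 (S.od_neg hβ)
  have h2Λ : (2:ℚ) • Λ = β1 - β := by
    rw [hΛ, smul_smul, show ((2:ℚ) * ((1:ℚ)/2) : ℚ) = 1 by norm_num, one_smul]
  have hβ1eq : β1 = β + (2:ℚ) • Λ := by rw [h2Λ]; abel
  have ha : S.od (D.dx β) := D.dx_od β hβ
  have hodd2Λ : S.od ((2:ℚ) • Λ) := by rw [h2Λ]; exact hμ
  have hsq : ∀ x : A, S.od x → x * x = 0 := by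
    intro x hx
    refine half _ _ ?_
    rw [smul_zero, two_smul]
    nth_rewrite 1 [S.od_anticomm hx hx]
    exact neg_add_cancel _
  have hΛΛ : Λ * Λ = 0 := by
    have h := hsq _ hodd2Λ
    rw [smul_mul_assoc, mul_smul_comm, smul_smul] at h
    have h2 := congrArg (fun t => ((4:ℚ)⁻¹) • t) h
    simpa [smul_smul, show ((4:ℚ)⁻¹ * ((2:ℚ) * 2) : ℚ) = 1 by norm_num] using h2
  have hΛodd : ∀ x : A, S.od x → Λ * x = -(x * Λ) := by
    intro x hx
    have h := S.od_anticomm hodd2Λ hx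
    rw [smul_mul_assoc, mul_smul_comm, ← smul_neg] at h
    exact half _ _ h
  have haΛ : D.dx β * Λ = -(Λ * D.dx β) := by rw [hΛodd _ ha, neg_neg]
  have haa : D.dx β * D.dx β = 0 := hsq _ ha
  have hκc : ∀ b : A, D.ds Λ * b = b * D.ds Λ := by
    intro b
    have hev := D.ds_od _ hμ
    have h := S.ev_comm b hev
    have h2 : (2:ℚ) • D.ds Λ = D.ds (β1 - β) := by rw [← D.ds_smul, h2Λ]
    rw [← h2, smul_mul_assoc, mul_smul_comm] at h
    exact half _ _ h
  have huev : S.ev (D.ds (D.dx β)) := D.ds_od _ ha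
  have huc : ∀ b : A, D.ds (D.dx β) * b = b * D.ds (D.dx β) := fun b => S.ev_comm b huev
  have hdsΛmul : ∀ b : A, D.ds (Λ * b) = D.ds Λ * b - Λ * D.ds b := by
    intro b
    have h := D.ds_mul_od (β1 - β) b hμ
    rw [← h2Λ] at h
    simp only [smul_mul_assoc, D.ds_smul, ← smul_sub] at h
    exact half _ _ h
  -- helpers for reordering under associativity
  have comm3 : ∀ x y : A, x * y = y * x → ∀ t : A, x * (y * t) = y * (x * t) := by
    intro x y h t; rw [← mul_assoc, h, mul_assoc]
  have acomm3 : ∀ x y : A, x * y = -(y * x) → ∀ t : A, x * (y * t) = -(y * (x * t)) := by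
    intro x y h t; rw [← mul_assoc, h, neg_mul, mul_assoc]
  have sq3 : ∀ x : A, x * x = 0 → ∀ t : A, x * (x * t) = 0 := by
    intro x h t; rw [← mul_assoc, h, zero_mul]
  -- key reformulation of the Bäcklund relation
  have key : D.dx (β1 + β) - (2*p1) • (β1 - β)
      + ((1:ℚ)/2) • ((β1 - β) * D.ds (β1 - β))
      = (2:ℚ) • (D.dx Λ + D.dx β - (2*p1) • Λ + Λ * D.ds Λ) := by
    rw [← h2Λ, hβ1eq]
    rw [D.dx_add, D.dx_add, D.dx_smul, D.ds_smul]
    simp only [smul_mul_assoc, mul_smul_comm, smul_smul, smul_add, smul_sub]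
    module
  rw [key]
  have hsmul0 : ∀ x : A, ((2:ℚ) • x = 0 ↔ x = 0) := by
    intro x
    constructor
    · intro h; exact half _ _ (by rw [h, smul_zero])
    · intro h; rw [h, smul_zero]
  rw [hsmul0]
  constructor
  · -- compatibility → Bäcklund
    intro H
    have hev0 : S.ev (0:A) := by
      have := S.ev_add S.ev_one (S.ev_neg S.ev_one)
      simpa using this
    have h := H 0 hev0 hdx0 hds0
    have h21 := congrArg (fun P : Matrix (Fin 4) (Fin 4) A => P 2 1) h
    simp only [Fin.zero_eta, Fin.mk_one, Fin.reduceFinMk, Matrix.add_apply,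
      Matrix.sub_apply, Matrix.map_apply, Matrix.mul_apply,
      Fin.sum_univ_four, Matrix.zero_apply, Matrix.cons_val', Matrix.cons_val_zero,
      Matrix.cons_val_one, Matrix.head_cons, Matrix.cons_val_two, Matrix.cons_val_three,
      Matrix.tail_cons, Matrix.head_fin_const, Matrix.empty_val',
      Matrix.cons_val_fin_one, Matrix.of_apply, Fin.isValue, mul_zero, zero_mul, mul_one,
      one_mul, add_zero, zero_add, sub_zero, zero_sub, sub_mul, smul_mul_assoc] at h21
    rw [← hκc Λ, ← h21]
    abel
  · -- Bäcklund → compatibility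
    intro hE0 lam2 hev hlx hls
    have hE : D.dx Λ = (2*p1) • Λ - Λ * D.ds Λ - D.dx β := by
      rw [← sub_eq_zero, ← hE0]; abel
    have hκx : D.dx (D.ds Λ) = D.ds (D.dx Λ) := by rw [← D.ds_ds Λ, D.ds_ds]
    have hκxval : D.dx (D.ds Λ) = (2*p1) • D.ds Λ - D.ds Λ * D.ds Λ
        - Λ * D.dx β - D.ds (D.dx β) := by
      rw [hκx, hE, hdssub, hdssub, D.ds_smul, hdsΛmul, D.ds_ds, hE]
      simp only [mul_sub, mul_smul_comm, hΛΛ, smul_zero, ← mul_assoc, zero_mul,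
        sub_zero, zero_sub, neg_neg, sub_neg_eq_add]
      abel
    have hdxb1 : D.dx β1 = D.dx β + (2:ℚ) • D.dx Λ := by
      rw [hβ1eq, D.dx_add, D.dx_smul]
    have hdsdxb1 : D.ds (D.dx β1) = D.ds (D.dx β) + (2:ℚ) • D.dx (D.ds Λ) := by
      rw [hdxb1, D.ds_add, D.ds_smul, ← hκx]
    -- atom-ordering rules
    have rLz : Λ * lam2 = lam2 * Λ := (S.ev_comm Λ hev).symm
    have raz : D.dx β * lam2 = lam2 * D.dx β := (S.ev_comm (D.dx β) hev).symm
    have rkz : D.ds Λ * lam2 = lam2 * D.ds Λ := hκc lam2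
    have ruz : D.ds (D.dx β) * lam2 = lam2 * D.ds (D.dx β) := huc lam2
    have ruk : D.ds (D.dx β) * D.ds Λ = D.ds Λ * D.ds (D.dx β) := (hκc _).symm
    have rLk : Λ * D.ds Λ = D.ds Λ * Λ := (hκc Λ).symm
    have rLu : Λ * D.ds (D.dx β) = D.ds (D.dx β) * Λ := (huc Λ).symm
    have rak : D.dx β * D.ds Λ = D.ds Λ * D.dx β := (hκc _).symm
    have rau : D.dx β * D.ds (D.dx β) = D.ds (D.dx β) * D.dx β := (huc _).symm
    refine Matrix.ext fun i j => ?_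
    fin_cases i <;> fin_cases j <;>
      simp only [Fin.zero_eta, Fin.mk_one, Fin.reduceFinMk, Matrix.add_apply,
        Matrix.sub_apply, Matrix.map_apply, Matrix.mul_apply,
        Fin.sum_univ_four, Matrix.zero_apply, Matrix.cons_val', Matrix.cons_val_zero,
        Matrix.cons_val_one, Matrix.head_cons, Matrix.cons_val_two, Matrix.cons_val_three,
        Matrix.tail_cons, Matrix.head_fin_const, Matrix.empty_val',
        Matrix.cons_val_fin_one, Matrix.of_apply, Fin.isValue] <;>
      (try simp only [hdsdxb1]) <;>
      simp only [D.dx_mul, D.dx_add, hdxsub, hdxneg, D.dx_smul, hdx1, hdx0, hlx,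
        hdxb1, hdsdxb1, hκxval, hE, smul_zero, zero_smul,
        mul_add, add_mul, mul_sub, sub_mul, neg_mul, mul_neg, neg_neg, sub_eq_add_neg,
        neg_add, smul_add, smul_sub, smul_neg, smul_smul, smul_mul_assoc, mul_smul_comm,
        mul_assoc, one_mul, mul_one, zero_mul, mul_zero, add_zero, zero_add, neg_zero,
        rLz, raz, rkz, ruz, ruk, rLk, rLu, rak, rau, haΛ, hΛΛ, haa,
        comm3 _ _ rLz, comm3 _ _ raz, comm3 _ _ rkz, comm3 _ _ ruz, comm3 _ _ ruk,
        comm3 _ _ rLk, comm3 _ _ rLu, comm3 _ _ rak, comm3 _ _ rau,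
        acomm3 _ _ haΛ, sq3 _ hΛΛ, sq3 _ haa]
    all_goals module
end

section
/- The superposition formula in components: if β = ξ + θu, β_{[1]} = ξ_{[1]} + θu_{[1]}, β_{[2]} = ξ_{[2]} + θu_{[2]}, β_{[12]} = ξ_{[12]} + θu_{[12]}, then the superfield relation β_{[12]} = β + 2(p₁+p₂)(β_{[1]}−β_{[2]})/(2(p₂−p₁) + 𝒟(β_{[1]}−β_{[2]})) is equivalent to ξ_{[12]} = ξ + 2(p₁+p₂)(ξ_{[1]}−ξ_{[2]})/D and u_{[12]} = u + 2(p₁+p₂)(u_{[1]}−u_{[2]})/D + 2(p₁+p₂)(ξ_{[1]}−ξ_{[2]})(ξ_{[1]}−ξ_{[2]})_x/D², where D = 2(p₂−p₁) + u_{[1]} − u_{[2]}. -/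
theorem eq_sub_mul_mul_of_mul_add_eq_one {R : Type*} [Ring R] {d d' n g : R}
    (hd : d * d' = 1) (hn : n * d' * n = 0) (hg : g * (d + n) = 1) :
    g = d' - d' * n * d' :=
  left_inv_eq_right_inv hg <|
    calc (d + n) * (d' - d' * n * d')
        = d * d' - d * d' * n * d' + n * d' - n * d' * n * d' := by noncomm_ring
      _ = 1 := by rw [hd, hn]; noncomm_ring

namespace SuperCommRing

variable {A : Type*} [Ring A] (S : SuperCommRing A)

theorem ev_sub {a b : A} (ha : S.ev a) (hb : S.ev b) : S.ev (a - b) := by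
  rw [sub_eq_add_neg]; exact S.ev_add ha (S.ev_neg hb)

theorem od_sub {a b : A} (ha : S.od a) (hb : S.od b) : S.od (a - b) := by
  rw [sub_eq_add_neg]; exact S.od_add ha (S.od_neg hb)

theorem commute_smul_one_add [Algebra ℚ A] (q : ℚ) {a : A} (ha : S.ev a) (x : A) :
    Commute (q • 1 + a) x :=
  ((Commute.one_left x).smul_left q).add_left (S.ev_comm x ha)

theorem mul_od_mul_eq_zero {θ ρ : A} (hθ : S.od θ) (hθθ : θ * θ = 0) (hρ : S.od ρ) :
    θ * ρ * θ = 0 := by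
  rw [mul_assoc, S.od_anticomm hρ hθ, mul_neg, ← mul_assoc, hθθ, zero_mul, neg_zero]

theorem od_add_mul_mul_add_mul {θ x y : A} (x' y' : A) (hθ : S.od θ) (hθθ : θ * θ = 0)
    (hx : S.od x) (hy : S.ev y) :
    (x + θ * y) * (x' + θ * y') = x * x' + θ * (y * x' - x * y') := by
  have hxθ : x * θ = -(θ * x) := S.od_anticomm hx hθ
  have hθyθ : θ * y * θ = 0 := by rw [mul_assoc, S.ev_comm θ hy, ← mul_assoc, hθθ, zero_mul]
  calc (x + θ * y) * (x' + θ * y')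
      = x * x' + x * θ * y' + θ * y * x' + θ * y * θ * y' := by noncomm_ring
    _ = x * x' + θ * (y * x' - x * y') := by rw [hxθ, hθyθ]; noncomm_ring

end SuperCommRing

namespace SuperDer

variable {A : Type*} [Ring A] [Algebra ℚ A] {S : SuperCommRing A} (D : SuperDer S)

theorem dx_zero : D.dx 0 = 0 := map_zero (AddMonoidHom.mk' D.dx D.dx_add)

theorem ds_zero : D.ds 0 = 0 := map_zero (AddMonoidHom.mk' D.ds D.ds_add)

theorem dx_sub (a b : A) : D.dx (a - b) = D.dx a - D.dx b :=
  map_sub (AddMonoidHom.mk' D.dx D.dx_add) a b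

theorem ds_sub (a b : A) : D.ds (a - b) = D.ds a - D.ds b :=
  map_sub (AddMonoidHom.mk' D.ds D.ds_add) a b

theorem dx_one : D.dx 1 = 0 := by
  simpa using D.dx_mul 1 1

theorem ds_one : D.ds 1 = 0 := by
  simpa using D.ds_mul_ev 1 1 S.ev_one

theorem dx_smul_one_add_mul (q : ℚ) (a b : A) :
    D.dx ((q • 1 + a) * b) = D.dx a * b + (q • 1 + a) * D.dx b := by
  rw [D.dx_mul, D.dx_add, D.dx_smul, dx_one, smul_zero, zero_add]

theorem ds_smul_one_add_mul (q : ℚ) {a : A} (ha : S.ev a) (b : A) :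
    D.ds ((q • 1 + a) * b) = D.ds a * b + (q • 1 + a) * D.ds b := by
  rw [add_mul, D.ds_add, smul_one_mul, D.ds_smul, D.ds_mul_ev a b ha, add_mul,
    smul_one_mul]
  abel

theorem ds_dx (a : A) : D.ds (D.dx a) = D.dx (D.ds a) := by
  rw [← D.ds_ds, D.ds_ds]

/-- Encodes that `a` does not depend on `θ`: then `𝒟 = ∂_θ + θ∂_x` acts on it as `θ∂_x`. -/
def IsThetaFree (θ a : A) : Prop := D.ds a = θ * D.dx a

variable {D} {θ : A}

theorem isThetaFree_one : D.IsThetaFree θ 1 := by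
  rw [IsThetaFree, ds_one, dx_one, mul_zero]

namespace IsThetaFree

theorem add {a b : A} (ha : D.IsThetaFree θ a) (hb : D.IsThetaFree θ b) :
    D.IsThetaFree θ (a + b) := by
  rw [IsThetaFree, D.ds_add, D.dx_add, mul_add, ha, hb]

theorem sub {a b : A} (ha : D.IsThetaFree θ a) (hb : D.IsThetaFree θ b) :
    D.IsThetaFree θ (a - b) := by
  rw [IsThetaFree, D.ds_sub, D.dx_sub, mul_sub, ha, hb]

theorem smul (q : ℚ) {a : A} (ha : D.IsThetaFree θ a) : D.IsThetaFree θ (q • a) := by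
  rw [IsThetaFree, D.ds_smul, D.dx_smul, ha, mul_smul_comm]

theorem mul_of_ev {a b : A} (hev : S.ev a) (ha : D.IsThetaFree θ a)
    (hb : D.IsThetaFree θ b) : D.IsThetaFree θ (a * b) := by
  rw [IsThetaFree, D.ds_mul_ev a b hev, ha, hb, D.dx_mul, ← mul_assoc a, S.ev_comm θ hev]
  noncomm_ring

theorem mul_of_od (hθ : S.od θ) {a b : A} (hod : S.od a) (ha : D.IsThetaFree θ a)
    (hb : D.IsThetaFree θ b) : D.IsThetaFree θ (a * b) := by
  rw [IsThetaFree, D.ds_mul_od a b hod, ha, hb, D.dx_mul, ← mul_assoc a,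
    S.od_anticomm hod hθ]
  noncomm_ring

theorem dx (hdxθ : D.dx θ = 0) {a : A} (ha : D.IsThetaFree θ a) :
    D.IsThetaFree θ (D.dx a) := by
  rw [IsThetaFree, ds_dx, ha, D.dx_mul, hdxθ, zero_mul, zero_add]

theorem inv_mul {q : ℚ} {a c b : A} (hev : S.ev a) (ha : D.IsThetaFree θ a)
    (hac : (q • 1 + a) * c = 1) (hca : c * (q • 1 + a) = 1) (hb : D.IsThetaFree θ b) :
    D.IsThetaFree θ (c * b) := by
  have hcancel : (q • 1 + a) * (c * b) = b := by rw [← mul_assoc, hac, one_mul]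
  have hds := congrArg D.ds hcancel
  have hdx := congrArg D.dx hcancel
  rw [D.ds_smul_one_add_mul q hev, ha, hb] at hds
  rw [D.dx_smul_one_add_mul] at hdx
  have key : (q • 1 + a) * D.ds (c * b) = (q • 1 + a) * (θ * D.dx (c * b)) :=
    calc (q • 1 + a) * D.ds (c * b)
        = θ * D.dx b - θ * D.dx a * (c * b) := eq_sub_of_add_eq' hds
      _ = θ * ((q • 1 + a) * D.dx (c * b)) := by rw [← hdx]; noncomm_ring
      _ = (q • 1 + a) * (θ * D.dx (c * b)) := by
          rw [← mul_assoc, ← mul_assoc, (S.commute_smul_one_add q hev θ).eq]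
  simpa only [IsThetaFree, ← mul_assoc, hca, one_mul] using congrArg (c * ·) key

theorem ds_theta_mul (hθ : S.od θ) (hθθ : θ * θ = 0) (hdsθ : D.ds θ = 1) {y : A}
    (hy : D.IsThetaFree θ y) : D.ds (θ * y) = y := by
  rw [D.ds_mul_od θ y hθ, hdsθ, hy, ← mul_assoc, hθθ, zero_mul, one_mul, sub_zero]

theorem ds_add_theta_mul (hθ : S.od θ) (hθθ : θ * θ = 0) (hdsθ : D.ds θ = 1) {x y : A}
    (hx : D.IsThetaFree θ x) (hy : D.IsThetaFree θ y) :
    D.ds (x + θ * y) = y + θ * D.dx x := by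
  rw [D.ds_add, ds_theta_mul hθ hθθ hdsθ hy, hx, add_comm]

theorem eq_zero_of_add_theta_mul_eq_zero (hθ : S.od θ) (hθθ : θ * θ = 0)
    (hdsθ : D.ds θ = 1) {x y : A} (hx : D.IsThetaFree θ x) (hy : D.IsThetaFree θ y)
    (h : x + θ * y = 0) : x = 0 ∧ y = 0 := by
  have hds : θ * D.dx x + y = 0 := by
    rw [← hx, ← ds_theta_mul hθ hθθ hdsθ hy, ← D.ds_add, h, D.ds_zero]
  have hθy : θ * y = 0 := by
    rw [← neg_eq_of_add_eq_zero_right hds, mul_neg, ← mul_assoc, hθθ, zero_mul, neg_zero]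
  have hx0 : x = 0 := by rwa [hθy, add_zero] at h
  refine ⟨hx0, ?_⟩
  rwa [hx0, D.dx_zero, mul_zero, zero_add] at hds

theorem add_theta_mul_inj (hθ : S.od θ) (hθθ : θ * θ = 0) (hdsθ : D.ds θ = 1)
    {x y x' y' : A} (hx : D.IsThetaFree θ x) (hy : D.IsThetaFree θ y)
    (hx' : D.IsThetaFree θ x') (hy' : D.IsThetaFree θ y') :
    x + θ * y = x' + θ * y' ↔ x = x' ∧ y = y' := by
  refine ⟨fun h ↦ ?_, fun ⟨rfl, rfl⟩ ↦ rfl⟩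
  have := eq_zero_of_add_theta_mul_eq_zero hθ hθθ hdsθ (hx.sub hx') (hy.sub hy')
    (by rw [mul_sub, ← sub_eq_zero.mpr h]; abel)
  exact ⟨sub_eq_zero.mp this.1, sub_eq_zero.mp this.2⟩

end IsThetaFree

theorem eq_of_mul_smul_one_add_ds_eq_one (hθ : S.od θ) (hθθ : θ * θ = 0) (hdsθ : D.ds θ = 1)
    {q : ℚ} {x y d g : A} (hx : S.od x) (hy : S.ev y) (hfx : D.IsThetaFree θ x)
    (hfy : D.IsThetaFree θ y) (hd₁ : (q • 1 + y) * d = 1) (hd₂ : d * (q • 1 + y) = 1)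
    (hg : g * (q • 1 + D.ds (x + θ * y)) = 1) :
    g = d + θ * -(D.dx x * (d * d)) := by
  have hd_comm (z : A) : Commute d z :=
    (S.commute_smul_one_add q hy z).units_inv_left (u := ⟨_, _, hd₁, hd₂⟩)
  rw [hfx.ds_add_theta_mul hθ hθθ hdsθ hfy, ← add_assoc] at hg
  have hnil : θ * D.dx x * d * (θ * D.dx x) = 0 :=
    calc θ * D.dx x * d * (θ * D.dx x) = θ * D.dx x * (d * θ) * D.dx x := by noncomm_ring
      _ = θ * D.dx x * θ * (d * D.dx x) := by rw [(hd_comm θ).eq]; noncomm_ring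
      _ = 0 := by rw [S.mul_od_mul_eq_zero hθ hθθ (D.dx_od x hx), zero_mul]
  rw [eq_sub_mul_mul_of_mul_add_eq_one hd₁ hnil hg, ← mul_assoc, (hd_comm θ).eq, mul_assoc θ,
    (hd_comm _).eq]
  noncomm_ring

theorem add_theta_mul_mul_eq_of_mul_smul_one_add_ds_eq_one (hθ : S.od θ) (hθθ : θ * θ = 0)
    (hdsθ : D.ds θ = 1) {q : ℚ} {x y d g : A} (hx : S.od x) (hy : S.ev y)
    (hfx : D.IsThetaFree θ x) (hfy : D.IsThetaFree θ y) (hd₁ : (q • 1 + y) * d = 1)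
    (hd₂ : d * (q • 1 + y) = 1) (hg : g * (q • 1 + D.ds (x + θ * y)) = 1) :
    (x + θ * y) * g = x * d + θ * (y * d + x * D.dx x * (d * d)) := by
  rw [eq_of_mul_smul_one_add_ds_eq_one hθ hθθ hdsθ hx hy hfx hfy hd₁ hd₂ hg,
    S.od_add_mul_mul_add_mul _ _ hθ hθθ hx hy]
  noncomm_ring

end SuperDer

theorem super_kdv_superposition_components_general
    {A : Type*} [Ring A] [Algebra ℚ A] (S : SuperCommRing A) (D : SuperDer S)
    (p1 p2 : ℚ) (θ ξ ξ1 ξ2 ξ12 u u1 u2 u12 Dinv G : A)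
    (hθ : S.od θ) (hξ1 : S.od ξ1) (hξ2 : S.od ξ2) (hu1 : S.ev u1) (hu2 : S.ev u2)
    (hθθ : θ * θ = 0) (hdsθ : D.ds θ = 1) (hdxθ : D.dx θ = 0)
    -- the component fields do not depend on θ: 𝒟 = θ∂_x on them and their derivatives
    (hdsξ : D.ds ξ = θ * D.dx ξ) (hdsξ1 : D.ds ξ1 = θ * D.dx ξ1)
    (hdsξ2 : D.ds ξ2 = θ * D.dx ξ2) (hdsξ12 : D.ds ξ12 = θ * D.dx ξ12)
    (hdsu : D.ds u = θ * D.dx u) (hdsu1 : D.ds u1 = θ * D.dx u1)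
    (hdsu2 : D.ds u2 = θ * D.dx u2) (hdsu12 : D.ds u12 = θ * D.dx u12)
    -- Dinv is the two-sided inverse of D = 2(p₂−p₁) + u₁ − u₂
    (hDinv1 : ((2*(p2 - p1)) • (1:A) + u1 - u2) * Dinv = 1)
    (hDinv2 : Dinv * ((2*(p2 - p1)) • (1:A) + u1 - u2) = 1)
    -- G is the two-sided inverse of 2(p₂−p₁) + 𝒟(β₁−β₂)
    (hG2 : G * ((2*(p2 - p1)) • (1:A) + D.ds ((ξ1 + θ * u1) - (ξ2 + θ * u2))) = 1) :
    ((ξ12 + θ * u12)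
        = (ξ + θ * u)
          + (2*(p1 + p2)) • (((ξ1 + θ * u1) - (ξ2 + θ * u2)) * G))
    ↔ (ξ12 = ξ + (2*(p1 + p2)) • ((ξ1 - ξ2) * Dinv)
      ∧ u12 = u + (2*(p1 + p2)) • ((u1 - u2) * Dinv)
          + (2*(p1 + p2)) • ((ξ1 - ξ2) * D.dx (ξ1 - ξ2) * (Dinv * Dinv))) := by
  open SuperDer IsThetaFree in
  have hδξ := S.od_sub hξ1 hξ2
  have hδu := S.ev_sub hu1 hu2
  have hfδξ : D.IsThetaFree θ (ξ1 - ξ2) := sub hdsξ1 hdsξ2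
  have hfδu : D.IsThetaFree θ (u1 - u2) := sub hdsu1 hdsu2
  rw [add_sub_assoc] at hDinv1 hDinv2
  have hfDinv : D.IsThetaFree θ Dinv := by
    simpa only [mul_one] using hfδu.inv_mul hδu hDinv1 hDinv2 isThetaFree_one
  have hregroup (x y y' : A) : ξ + θ * u + (2 * (p1 + p2)) • (x + θ * (y + y'))
      = ξ + (2 * (p1 + p2)) • x + θ * (u + (2 * (p1 + p2)) • y + (2 * (p1 + p2)) • y') := by
    simp only [smul_add, mul_add, mul_smul_comm]
    abel
  rw [show (ξ1 + θ * u1) - (ξ2 + θ * u2) = (ξ1 - ξ2) + θ * (u1 - u2) by noncomm_ring] at hG2 ⊢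
  rw [add_theta_mul_mul_eq_of_mul_smul_one_add_ds_eq_one hθ hθθ hdsθ hδξ hδu hfδξ hfδu hDinv1
    hDinv2 hG2, hregroup]
  exact add_theta_mul_inj hθ hθθ hdsθ hdsξ12 hdsu12
    (add hdsξ ((hfδξ.mul_of_od hθ hδξ hfDinv).smul _))
    ((add hdsu ((hfδu.mul_of_ev hδu hfDinv).smul _)).add
      (((hfδξ.mul_of_od hθ hδξ (hfδξ.dx hdxθ)).mul_of_ev (S.od_mul_od hδξ (D.dx_od _ hδξ))
        (hfδu.inv_mul hδu hDinv1 hDinv2 hfDinv)).smul _))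

/-- The superposition formula in components: with `β = ξ + θu`,
`β₁ = ξ₁ + θu₁`, `β₂ = ξ₂ + θu₂`, `β₁₂ = ξ₁₂ + θu₁₂`, the superfield relation
`β₁₂ = β + 2(p₁+p₂)(β₁−β₂)·(2(p₂−p₁) + 𝒟(β₁−β₂))⁻¹` is equivalent to
`ξ₁₂ = ξ + 2(p₁+p₂)(ξ₁−ξ₂)/D` and
`u₁₂ = u + 2(p₁+p₂)(u₁−u₂)/D + 2(p₁+p₂)(ξ₁−ξ₂)(ξ₁−ξ₂)_x/D²`,
where `D = 2(p₂−p₁) + u₁ − u₂` (with two-sided inverse `Dinv`) and `G` is the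
two-sided inverse of the even invertible superfield `2(p₂−p₁) + 𝒟(β₁−β₂)`. -/
theorem super_kdv_superposition_components
    {A : Type*} [Ring A] [Algebra ℚ A] (S : SuperCommRing A) (D : SuperDer S)
    (p1 p2 : ℚ) (θ ξ ξ1 ξ2 ξ12 u u1 u2 u12 Dinv G : A)
    (hθ : S.od θ) (hξ : S.od ξ) (hξ1 : S.od ξ1) (hξ2 : S.od ξ2) (hξ12 : S.od ξ12)
    (hu : S.ev u) (hu1 : S.ev u1) (hu2 : S.ev u2) (hu12 : S.ev u12)
    (hθθ : θ * θ = 0) (hdsθ : D.ds θ = 1) (hdxθ : D.dx θ = 0)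
    -- the component fields do not depend on θ: 𝒟 = θ∂_x on them and their derivatives
    (hdsξ : D.ds ξ = θ * D.dx ξ) (hdsξ1 : D.ds ξ1 = θ * D.dx ξ1)
    (hdsξ2 : D.ds ξ2 = θ * D.dx ξ2) (hdsξ12 : D.ds ξ12 = θ * D.dx ξ12)
    (hdsu : D.ds u = θ * D.dx u) (hdsu1 : D.ds u1 = θ * D.dx u1)
    (hdsu2 : D.ds u2 = θ * D.dx u2) (hdsu12 : D.ds u12 = θ * D.dx u12)
    -- Dinv is the two-sided inverse of D = 2(p₂−p₁) + u₁ − u₂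
    (hDinv1 : ((2*(p2 - p1)) • (1:A) + u1 - u2) * Dinv = 1)
    (hDinv2 : Dinv * ((2*(p2 - p1)) • (1:A) + u1 - u2) = 1)
    -- G is the two-sided inverse of 2(p₂−p₁) + 𝒟(β₁−β₂)
    (hG1 : ((2*(p2 - p1)) • (1:A) + D.ds ((ξ1 + θ * u1) - (ξ2 + θ * u2))) * G = 1)
    (hG2 : G * ((2*(p2 - p1)) • (1:A) + D.ds ((ξ1 + θ * u1) - (ξ2 + θ * u2))) = 1) :
    ((ξ12 + θ * u12)
        = (ξ + θ * u)
          + (2*(p1 + p2)) • (((ξ1 + θ * u1) - (ξ2 + θ * u2)) * G))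
    ↔ (ξ12 = ξ + (2*(p1 + p2)) • ((ξ1 - ξ2) * Dinv)
      ∧ u12 = u + (2*(p1 + p2)) • ((u1 - u2) * Dinv)
          + (2*(p1 + p2)) • ((ξ1 - ξ2) * D.dx (ξ1 - ξ2) * (Dinv * Dinv))) :=
  super_kdv_superposition_components_general S D p1 p2 θ ξ ξ1 ξ2 ξ12 u u1 u2 u12 Dinv G hθ hξ1 hξ2
    hu1 hu2 hθθ hdsθ hdxθ hdsξ hdsξ1 hdsξ2 hdsξ12 hdsu hdsu1 hdsu2 hdsu12 hDinv1 hDinv2 hG2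
end

section
/- Full continuum limit of the Kac–van Moerbeke-type equation: substituting u_{N±1} = u ± ε u_x + (ε²/2)u_{xx} ± (ε³/6)u_{xxx} + O(ε⁴) with ε = 1/p₁ into u_{N,τ} = 2(u_{N+1}−u_{N−1})/(u_{N+1}−u_{N−1}−4p₁) and using ∂_τ = −ε²∂_x − (ε⁴/6)∂_t, the leading nontrivial order in ε yields u_t = u_{xxx} + 3u_x², the potential KdV equation. -/
open Polynomial

/-!
Clearing the denominator leaves a polynomial identity in `ε = X`. The central difference
`u_{N+1} - u_{N-1} = 2 u_x ε + (1/3) u_{xxx} ε³` has no even terms, so the residual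
`u_τ (ε (u_{N+1} - u_{N-1}) - 4) - 2 ε (u_{N+1} - u_{N-1})` is
`(2/3)(u_t - u_{xxx} - 3 u_x²) ε⁴ + O(ε⁶)`: the orders `ε⁰, …, ε³` cancel identically and the
order `ε⁴` is the potential KdV equation. Only the invertibility of `6` matters: with
`6 s = 1` the factor `2/3` is the unit `4 s`.
-/

namespace Polynomial

variable {R : Type*} [CommRing R]

theorem smul_eq_C_algebraMap_mul {S : Type*} [CommSemiring S] [Algebra S R] (q : S) (p : R[X]) :
    q • p = C (algebraMap S R q) * p := by
  rw [← algebraMap_smul R q p, smul_eq_C_mul]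

theorem coeff_C_mul_X_pow_add_X_pow_succ_mul_eq_zero_iff (a : R) (n : ℕ) (q : R[X]) :
    (∀ k ≤ n, (C a * X ^ n + X ^ (n + 1) * q).coeff k = 0) ↔ a = 0 := by
  have hcoeff : ∀ k ≤ n, (C a * X ^ n + X ^ (n + 1) * q).coeff k = if k = n then a else 0 := by
    intro k hk
    rw [coeff_add, coeff_C_mul_X_pow, coeff_X_pow_mul', if_neg (by omega : ¬n + 1 ≤ k), add_zero]
  constructor
  · intro h
    simpa only [hcoeff n le_rfl, if_pos] using h n le_rfl
  · rintro rfl k hk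
    rw [hcoeff k hk, ite_self]

end Polynomial

section KacVanMoerbeke

variable {R : Type*} [CommRing R]

theorem kvm_residual_eq {s : R} (hs : 6 * s = 1) {ux uxxx ut : R} {D uτ : R[X]}
    (hD : D = 2 * C ux * X + 2 * C s * C uxxx * X ^ 3)
    (hτ : uτ = -(C ux * X ^ 2) - C s * (C ut * X ^ 4)) :
    uτ * (X * D - 4) - 2 • (X * D) =
      C (4 * s * (ut - uxxx - 3 * ux ^ 2)) * X ^ 4 +
        X ^ 5 * -(C (2 * s * (ux * uxxx + ut * ux)) * X + C (2 * s ^ 2 * ut * uxxx) * X ^ 3) := by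
  have hsC : 6 * C s = 1 := by rw [← map_ofNat C 6, ← map_mul, hs, map_one]
  subst hD hτ
  simp only [map_mul, map_sub, map_add, map_pow, map_ofNat]
  linear_combination (2 * C ux ^ 2 * X ^ 4) * hsC

theorem four_mul_mul_eq_zero_iff {s : R} (hs : 6 * s = 1) (r : R) : 4 * s * r = 0 ↔ r = 0 :=
  IsUnit.mul_right_eq_zero <| IsUnit.of_mul_eq_one (9 * s) (by linear_combination (6 * s + 1) * hs)

end KacVanMoerbeke

/-- Full continuum limit of the Kac–van Moerbeke-type equation
`u_{N,τ} = 2(u_{N+1}−u_{N−1})/(u_{N+1}−u_{N−1}−4p₁)`: substituting the formal Taylor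
expansions `u_{N±1} = u ± ε u_x + (ε²/2)u_{xx} ± (ε³/6)u_{xxx} + O(ε⁴)` with `ε = 1/p₁`
and `∂_τ = −ε²∂_x − (ε⁴/6)∂_t`, after clearing the denominator (multiplying the
equation by `ε`), all coefficients up to and including order `ε⁴` vanish iff the
potential KdV equation `u_t = u_{xxx} + 3u_x²` holds. -/
theorem kvm_full_continuum_limit_potential_kdv
    {R : Type*} [CommRing R] [Algebra ℚ R]
    (u ux uxx uxxx ut : R) :
    -- u_{N±1}, truncated at order ε³
    (∀ uN1 uN1m uτ : Polynomial R,
      uN1 = C u + C ux * X + ((1:ℚ)/2) • (C uxx * X^2) + ((1:ℚ)/6) • (C uxxx * X^3) →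
      uN1m = C u - C ux * X + ((1:ℚ)/2) • (C uxx * X^2) - ((1:ℚ)/6) • (C uxxx * X^3) →
      -- u_{N,τ} via ∂_τ = −ε²∂_x − (ε⁴/6)∂_t
      uτ = -(C ux * X^2) - ((1:ℚ)/6) • (C ut * X^4) →
      -- the equation multiplied by ε, i.e. u_{N,τ}(ε(u_{N+1}−u_{N−1}) − 4) = 2ε(u_{N+1}−u_{N−1})
      ((∀ k : ℕ, k ≤ 4 →
          (uτ * (X * (uN1 - uN1m) - 4) - 2 • (X * (uN1 - uN1m))).coeff k = 0)
        ↔ ut = uxxx + 3 * ux^2)) := by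
  intro uN1 uN1m uτ h1 h2 h3
  set s := algebraMap ℚ R (1 / 6)
  have hs : 6 * s = 1 := by
    rw [← map_ofNat (algebraMap ℚ R) 6, ← map_mul]
    norm_num
  have hD : uN1 - uN1m = 2 * C ux * X + 2 * C s * C uxxx * X ^ 3 := by
    rw [h1, h2]
    simp only [smul_eq_C_algebraMap_mul]
    ring
  have hτ : uτ = -(C ux * X ^ 2) - C s * (C ut * X ^ 4) := by
    rw [h3, smul_eq_C_algebraMap_mul]
  rw [kvm_residual_eq hs hD hτ, coeff_C_mul_X_pow_add_X_pow_succ_mul_eq_zero_iff,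
    four_mul_mul_eq_zero_iff hs, sub_sub, sub_eq_zero]
end

section
/- Continuum limit of the differential-difference super KdV (bosonic part): substituting ξ = 0, u_{n+1} = u + ε u_τ + (ε²/2)u_{ττ} + (ε³/6)u_{τττ} + O(ε⁴) with ε = 1/p₁ and ∂_τ = ∂_x + (ε²/12)∂_t into (u_{n+1}+u_n)_x = 2p₁(u_{n+1}−u_n) − ½(u_{n+1}−u_n)², the coefficient of the leading nontrivial power of ε gives u_t = u_{xxx} + 3u_x². -/
open Polynomial

/-- Continuum limit of the differential-difference super KdV (bosonic
part, `ξ = 0`): substituting `u_{n+1} = u + ε u_τ + (ε²/2)u_{ττ} + (ε³/6)u_{τττ} + O(ε⁴)`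
with `ε = 1/p₁` and `∂_τ = ∂_x + (ε²/12)∂_t` into
`(u_{n+1}+u_n)_x = 2p₁(u_{n+1}−u_n) − ½(u_{n+1}−u_n)²` (multiplied by `ε`), the
coefficients up to and including order `ε³` vanish iff `u_t = u_{xxx} + 3u_x²`. -/
theorem ddsuperkdv_continuum_limit_potential_kdv
    {R : Type*} [CommRing R] [Algebra ℚ R]
    (dx dt : R → R)
    (hdx_add : ∀ a b : R, dx (a + b) = dx a + dx b)
    (hdx_smul : ∀ (q : ℚ) (a : R), dx (q • a) = q • dx a)
    (hdx_mul : ∀ a b : R, dx (a * b) = dx a * b + a * dx b)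
    (u : R)
    -- x-derivation of a polynomial in ε: apply ∂_x to each coefficient
    (D2 : Polynomial R → Polynomial R)
    (hD2 : ∀ p : Polynomial R, D2 p = p.sum fun n a => C (dx a) * X ^ n)
    (uτ uττ uτττ un1 : Polynomial R)
    -- τ-derivatives of u via ∂_τ = ∂_x + (ε²/12)∂_t
    (huτ : uτ = C (dx u) + ((1:ℚ)/12) • (C (dt u) * X^2))
    (huττ : uττ = C (dx (dx u)) + ((1:ℚ)/6) • (C (dx (dt u)) * X^2))
    (huτττ : uτττ = C (dx (dx (dx u))) + ((1:ℚ)/4) • (C (dx (dx (dt u))) * X^2))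
    -- the Taylor expansion of u_{n+1}, truncated at order ε³
    (hun1 : un1 = C u + X * uτ + ((1:ℚ)/2) • (X^2 * uττ) + ((1:ℚ)/6) • (X^3 * uτττ)) :
    -- the equation multiplied by ε:
    -- ε(u_{n+1}+u_n)_x = 2(u_{n+1}−u_n) − (ε/2)(u_{n+1}−u_n)²
    ((∀ k : ℕ, k ≤ 3 →
        (X * D2 (un1 + C u)
          - (2 • (un1 - C u) - ((1:ℚ)/2) • (X * (un1 - C u)^2))).coeff k = 0)
      ↔ dt u = dx (dx (dx u)) + 3 * (dx u)^2) := by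
  have hdx0 : dx 0 = 0 := by simpa using (hdx_add 0 0).symm
  -- coefficient-wise description of D2
  have hD2c : ∀ (p : Polynomial R) (k : ℕ), (D2 p).coeff k = dx (p.coeff k) := by
    intro p k
    rw [hD2, Polynomial.coeff_sum, Polynomial.sum]
    simp only [coeff_C_mul, coeff_X_pow, mul_ite, mul_one, mul_zero]
    rw [Finset.sum_ite_eq p.support k (fun n => dx (p.coeff n))]
    split_ifs with h
    · rfl
    · rw [Polynomial.notMem_support_iff.mp h, hdx0]
  -- canonical form of un1 + C u
  have hS : un1 + C u = C (u + u) + C (dx u) * X + C (((1:ℚ)/2) • dx (dx u)) * X^2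
      + C (((1:ℚ)/12) • dt u + ((1:ℚ)/6) • dx (dx (dx u))) * X^3
      + C (((1:ℚ)/12) • dx (dt u)) * X^4 + C (((1:ℚ)/24) • dx (dx (dt u))) * X^5 := by
    rw [hun1, huτ, huττ, huτττ]
    simp only [C_add, ← smul_C, smul_add, mul_add, add_mul, mul_smul_comm, smul_mul_assoc,
      smul_smul]
    norm_num
    ring_nf
  -- canonical form of un1 - C u, with one power of X factored out
  have hW : un1 - C u = X * (C (dx u) + C (((1:ℚ)/2) • dx (dx u)) * X
      + C (((1:ℚ)/12) • dt u + ((1:ℚ)/6) • dx (dx (dx u))) * X^2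
      + C (((1:ℚ)/12) • dx (dt u)) * X^3 + C (((1:ℚ)/24) • dx (dx (dt u))) * X^4) := by
    rw [hun1, huτ, huττ, huτττ]
    simp only [C_add, ← smul_C, smul_add, mul_add, add_mul, mul_smul_comm, smul_mul_assoc,
      smul_smul]
    norm_num
    ring_nf
  set W : Polynomial R := C (dx u) + C (((1:ℚ)/2) • dx (dx u)) * X
      + C (((1:ℚ)/12) • dt u + ((1:ℚ)/6) • dx (dx (dx u))) * X^2
      + C (((1:ℚ)/12) • dx (dt u)) * X^3 + C (((1:ℚ)/24) • dx (dx (dt u))) * X^4 with hWdef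
  have hXP2 : X * (un1 - C u)^2 = W^2 * X^3 := by rw [hW]; ring
  -- coefficients of W
  have hW0 : W.coeff 0 = dx u := by
    rw [hWdef]; simp [add_mul, coeff_add, coeff_C_mul, coeff_X_pow, coeff_C]
  have hW1 : W.coeff 1 = ((1:ℚ)/2) • dx (dx u) := by
    rw [hWdef]; simp [add_mul, coeff_add, coeff_C_mul, coeff_X_pow, coeff_C]
  have hW2 : W.coeff 2 = ((1:ℚ)/12) • dt u + ((1:ℚ)/6) • dx (dx (dx u)) := by
    rw [hWdef]; simp [add_mul, coeff_add, coeff_C_mul, coeff_X_pow, coeff_C]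
  -- coefficients of un1 + C u
  have hS0 : (un1 + C u).coeff 0 = u + u := by
    rw [hS]; simp [add_mul, coeff_add, coeff_C_mul, coeff_X_pow, coeff_C]
  have hS1 : (un1 + C u).coeff 1 = dx u := by
    rw [hS]; simp [add_mul, coeff_add, coeff_C_mul, coeff_X_pow, coeff_C]
  have hS2 : (un1 + C u).coeff 2 = ((1:ℚ)/2) • dx (dx u) := by
    rw [hS]; simp [add_mul, coeff_add, coeff_C_mul, coeff_X_pow, coeff_C]
  -- scalar conversion
  have hq3 : (3:ℚ) • ((dx u)^2) = 3 * (dx u)^2 := by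
    rw [show (3:ℚ) = ((3:ℕ):ℚ) by norm_num, Nat.cast_smul_eq_nsmul, nsmul_eq_mul]
    norm_num
  -- the four coefficients of the equation
  have e0 : (X * D2 (un1 + C u)
      - (2 • (un1 - C u) - ((1:ℚ)/2) • (X * (un1 - C u)^2))).coeff 0 = 0 := by
    rw [coeff_sub, coeff_sub, coeff_smul, coeff_smul, hXP2, hW,
      mul_coeff_zero, mul_coeff_zero, coeff_X_zero, coeff_mul_X_pow']
    norm_num
  have e1 : (X * D2 (un1 + C u)
      - (2 • (un1 - C u) - ((1:ℚ)/2) • (X * (un1 - C u)^2))).coeff 1 = 0 := by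
    rw [coeff_sub, coeff_sub, coeff_smul, coeff_smul, hXP2, hW,
      show (1:ℕ) = 0 + 1 from rfl, coeff_X_mul, coeff_X_mul, hD2c, hS0,
      coeff_mul_X_pow', hW0, hdx_add]
    norm_num [two_smul]
  have e2 : (X * D2 (un1 + C u)
      - (2 • (un1 - C u) - ((1:ℚ)/2) • (X * (un1 - C u)^2))).coeff 2 = 0 := by
    rw [coeff_sub, coeff_sub, coeff_smul, coeff_smul, hXP2, hW,
      show (2:ℕ) = 1 + 1 from rfl, coeff_X_mul, coeff_X_mul, hD2c, hS1,
      coeff_mul_X_pow', hW1]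
    norm_num [two_smul]
    module
  have e3 : (X * D2 (un1 + C u)
      - (2 • (un1 - C u) - ((1:ℚ)/2) • (X * (un1 - C u)^2))).coeff 3 =
      ((1:ℚ)/6) • dx (dx (dx u)) - ((1:ℚ)/6) • dt u + ((1:ℚ)/2) • ((dx u)^2) := by
    rw [coeff_sub, coeff_sub, coeff_smul, coeff_smul, hXP2, hW,
      show (3:ℕ) = 2 + 1 from rfl, coeff_X_mul, coeff_X_mul, hD2c, hS2,
      coeff_mul_X_pow', hW2, hdx_smul]
    norm_num [pow_two, mul_coeff_zero, hW0, two_smul]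
    module
  constructor
  · intro h
    have h3 := h 3 (by norm_num)
    rw [e3] at h3
    have h6 := congrArg (fun z : R => (6:ℚ) • z) h3
    simp only [smul_add, smul_sub, smul_smul, smul_zero] at h6
    norm_num [one_smul] at h6
    rw [hq3] at h6
    linear_combination -h6
  · intro hkdv k hk
    interval_cases k
    · exact e0
    · exact e1
    · exact e2
    · rw [e3, hkdv, ← hq3]
      module
end

section
/- The component system v_t = v_{xxx} + 6vv_x − 3ρρ_{xx}, ρ_t = ρ_{xxx} + 3(vρ)_x is invariant under the substitution ṽ = ε ρ_x, ρ̃ = ε v where ε is an odd (Grassmann) parameter; i.e. if (v,ρ) solves the system then the infinitesimal transformation δv = ερ_x, δρ = εv maps solutions to solutions to first order: d/ds at s=0 of the system evaluated at (v + sερ_x, ρ + sεv) vanishes modulo the original equations. -/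
/-!
Since `ε` is an odd constant, `dx` and `dt` pass through it, and moving it to the front of
every monomial only costs the sign `ρ ε = -ε ρ`. Both components then become `ε` times an
identity for `(v, ρ)` alone: the first is the `x`-derivative of the `ρ`-equation, the second
is the `v`-equation itself, once `ρ_x ρ_x = 0` and `ρ_xx ρ = -ρ ρ_xx` are used.
-/

namespace SuperCommRing

variable {A : Type*} [Ring A] (S : SuperCommRing A)

theorem mul_left_comm_of_ev {a : A} (ha : S.ev a) (b c : A) : a * (b * c) = b * (a * c) := by
  rw [← mul_assoc, S.ev_comm b ha, mul_assoc]

theorem mul_left_anticomm_of_od {a b : A} (ha : S.od a) (hb : S.od b) (c : A) :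
    a * (b * c) = -(b * (a * c)) := by
  rw [← mul_assoc, S.od_anticomm ha hb, neg_mul, mul_assoc]

theorem mul_self_eq_zero_of_od [Algebra ℚ A] {a : A} (ha : S.od a) : a * a = 0 := by
  have h2 : (2 : ℚ) • (a * a) = 0 := by
    rw [two_smul]
    nth_rewrite 1 [S.od_anticomm ha ha]
    exact neg_add_cancel _
  simpa using h2

end SuperCommRing

theorem map_mul_left_of_map_eq_zero {A : Type*} [Ring A] {D : A → A}
    (hD : ∀ a b : A, D (a * b) = D a * b + a * D b) {c : A} (hc : D c = 0) (a : A) :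
    D (c * a) = c * D a := by
  rw [hD, hc, zero_mul, zero_add]

theorem skdv_supersymmetry_invariance_general
    {A : Type*} [Ring A] [Algebra ℚ A] (S : SuperCommRing A)
    (dx dt : A → A)
    (hdx_add : ∀ a b : A, dx (a + b) = dx a + dx b)
    (hdx_smul : ∀ (q : ℚ) (a : A), dx (q • a) = q • dx a)
    (hdx_mul : ∀ a b : A, dx (a * b) = dx a * b + a * dx b)
    (hdt_mul : ∀ a b : A, dt (a * b) = dt a * b + a * dt b)
    (hdxdt : ∀ a : A, dx (dt a) = dt (dx a))
    (hdx_ev : ∀ a : A, S.ev a → S.ev (dx a)) (hdx_od : ∀ a : A, S.od a → S.od (dx a))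
    (ρ v ε : A)
    (hρ : S.od ρ) (hv : S.ev v) (hε : S.od ε)
    (hdxε : dx ε = 0) (hdtε : dt ε = 0)
    -- (v, ρ) solves the supersymmetric KdV component system
    (heqv : dt v = dx (dx (dx v)) + (6:ℚ) • (v * dx v) - (3:ℚ) • (ρ * dx (dx ρ)))
    (heqρ : dt ρ = dx (dx (dx ρ)) + (3:ℚ) • dx (v * ρ)) :
    -- then (δv, δρ) = (ερ_x, εv) solves the linearized system
    dt (ε * dx ρ)
        = dx (dx (dx (ε * dx ρ)))
          + (6:ℚ) • ((ε * dx ρ) * dx v + v * dx (ε * dx ρ))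
          - (3:ℚ) • ((ε * v) * dx (dx ρ) + ρ * dx (dx (ε * v)))
    ∧ dt (ε * v)
        = dx (dx (dx (ε * v)))
          + (3:ℚ) • dx ((ε * dx ρ) * ρ + v * (ε * v)) := by
  have hvx := hdx_ev v hv
  have hρx := hdx_od ρ hρ
  simp only [map_mul_left_of_map_eq_zero hdt_mul hdtε, map_mul_left_of_map_eq_zero hdx_mul hdxε]
  constructor
  · rw [← hdxdt, heqρ]
    simp only [hdx_add, hdx_mul, hdx_smul, mul_assoc, S.mul_left_comm_of_ev hv ε,
      S.mul_left_anticomm_of_od hρ hε, S.ev_comm (dx ρ) hvx, S.ev_comm ρ (hdx_ev _ hvx),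
      mul_add, mul_smul_comm]
    module
  · rw [heqv]
    simp only [hdx_add, hdx_mul, hdxε, zero_mul, zero_add, add_zero, mul_assoc,
      S.mul_left_comm_of_ev hv ε, S.mul_self_eq_zero_of_od hρx,
      S.od_anticomm (hdx_od _ hρx) hρ, S.ev_comm v hvx, mul_add, mul_sub, mul_neg, mul_smul_comm]
    module

/-- The component system `v_t = v_{xxx} + 6vv_x − 3ρρ_{xx}`,
`ρ_t = ρ_{xxx} + 3(vρ)_x` is invariant under the (infinitesimal) supersymmetry
substitution `δv = ερ_x`, `δρ = εv` with `ε` an odd constant parameter: if `(v,ρ)`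
solves the system then `(δv, δρ)` solves the linearized system, i.e. the vector field
`(ερ_x, εv)` is a symmetry. -/
theorem skdv_supersymmetry_invariance
    {A : Type*} [Ring A] [Algebra ℚ A] (S : SuperCommRing A)
    (dx dt : A → A)
    (hdx_add : ∀ a b : A, dx (a + b) = dx a + dx b)
    (hdx_smul : ∀ (q : ℚ) (a : A), dx (q • a) = q • dx a)
    (hdx_mul : ∀ a b : A, dx (a * b) = dx a * b + a * dx b)
    (hdt_add : ∀ a b : A, dt (a + b) = dt a + dt b)
    (hdt_smul : ∀ (q : ℚ) (a : A), dt (q • a) = q • dt a)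
    (hdt_mul : ∀ a b : A, dt (a * b) = dt a * b + a * dt b)
    (hdxdt : ∀ a : A, dx (dt a) = dt (dx a))
    (hdx_ev : ∀ a : A, S.ev a → S.ev (dx a)) (hdx_od : ∀ a : A, S.od a → S.od (dx a))
    (hdt_ev : ∀ a : A, S.ev a → S.ev (dt a)) (hdt_od : ∀ a : A, S.od a → S.od (dt a))
    (ρ v ε : A)
    (hρ : S.od ρ) (hv : S.ev v) (hε : S.od ε)
    (hεε : ε * ε = 0) (hdxε : dx ε = 0) (hdtε : dt ε = 0)
    -- (v, ρ) solves the supersymmetric KdV component system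
    (heqv : dt v = dx (dx (dx v)) + (6:ℚ) • (v * dx v) - (3:ℚ) • (ρ * dx (dx ρ)))
    (heqρ : dt ρ = dx (dx (dx ρ)) + (3:ℚ) • dx (v * ρ)) :
    -- then (δv, δρ) = (ερ_x, εv) solves the linearized system
    dt (ε * dx ρ)
        = dx (dx (dx (ε * dx ρ)))
          + (6:ℚ) • ((ε * dx ρ) * dx v + v * dx (ε * dx ρ))
          - (3:ℚ) • ((ε * v) * dx (dx ρ) + ρ * dx (dx (ε * v)))
    ∧ dt (ε * v)
        = dx (dx (dx (ε * v)))
          + (3:ℚ) • dx ((ε * dx ρ) * ρ + v * (ε * v)) :=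
  skdv_supersymmetry_invariance_general S dx dt hdx_add hdx_smul hdx_mul hdt_mul hdxdt hdx_ev hdx_od
    ρ v ε hρ hv hε hdxε hdtε heqv heqρ
end

section
/- From the defining relations of the Darboux transformation one derives the Bäcklund transformation: if α = β_x, α_{[1]} = β_{[1],x}, Λ = ½(β_{[1]} − β), φ_{[0],x} = Λ(𝒟φ_{[0]}) − p₁φ_{[0]}, and φ_{[0],xx} = p₁²φ_{[0]} − β_x(𝒟φ_{[0]}), with 𝒟φ_{[0]} invertible, then Λ_x + β_x − 2p₁Λ + Λ(𝒟Λ) = 0. -/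
/-!
Differentiating `φ₀_x = Λ 𝒟φ₀ − p₁ φ₀` once more, and using `𝒟 ∂_x = ∂_x 𝒟`, the graded Leibniz
rule and `Λ² = 0` for the odd `Λ`, gives
`φ₀_xx = (Λ_x + Λ 𝒟Λ − 2p₁Λ) 𝒟φ₀ + p₁² φ₀`.
Comparing with `φ₀_xx = p₁² φ₀ − β_x 𝒟φ₀` leaves `(Λ_x + β_x − 2p₁Λ + Λ 𝒟Λ) 𝒟φ₀ = 0`, and `𝒟φ₀`
has a right inverse, so it can be cancelled.
-/

theorem SuperCommRing.mul_self_eq_zero_of_od_s16 {A : Type*} [Ring A] [IsAddTorsionFree A]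
    (S : SuperCommRing A) {a : A} (ha : S.od a) : a * a = 0 :=
  self_eq_neg.mp (S.od_anticomm ha ha)

namespace SuperDer

variable {A : Type*} [Ring A] [Algebra ℚ A] {S : SuperCommRing A} (D : SuperDer S)

theorem dx_ds (a : A) : D.dx (D.ds a) = D.ds (D.dx a) :=
  (D.ds_ds (D.ds a)).symm.trans (congrArg D.ds (D.ds_ds a))

variable {D} {Λ φ : A} {p : ℚ}

theorem ds_dx_of_dx_eq (hΛ : S.od Λ) (hφ : D.dx φ = Λ * D.ds φ - p • φ) :
    D.ds (D.dx φ) = D.ds Λ * D.ds φ - Λ * D.dx φ - p • D.ds φ := by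
  conv_lhs => rw [hφ]
  rw [D.ds_sub, D.ds_smul, D.ds_mul_od _ _ hΛ, D.ds_ds]

theorem dx_dx_of_dx_eq (hΛ : S.od Λ) (hφ : D.dx φ = Λ * D.ds φ - p • φ) :
    D.dx (D.dx φ) = (D.dx Λ + Λ * D.ds Λ - (2 * p) • Λ) * D.ds φ + p ^ 2 • φ := by
  have : IsAddTorsionFree A := .of_module_rat A
  have hΛΛ : Λ * Λ = 0 := S.mul_self_eq_zero_of_od_s16 hΛ
  have hΛ_ds_dx : Λ * D.ds (D.dx φ) = Λ * D.ds Λ * D.ds φ - p • (Λ * D.ds φ) := by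
    rw [ds_dx_of_dx_eq hΛ hφ, mul_sub, mul_sub, ← mul_assoc Λ Λ, hΛΛ, zero_mul, mul_smul_comm,
      mul_assoc, sub_zero]
  calc D.dx (D.dx φ) = D.dx Λ * D.ds φ + Λ * D.ds (D.dx φ) - p • D.dx φ := by
        conv_lhs => rw [hφ]
        rw [D.dx_sub, D.dx_smul, D.dx_mul, D.dx_ds]
    _ = _ := by
        rw [hΛ_ds_dx, hφ, sub_mul, add_mul, smul_mul_assoc]
        module

end SuperDer

theorem super_kdv_darboux_gives_backlund_general
    {A : Type*} [Ring A] [Algebra ℚ A] (S : SuperCommRing A) (D : SuperDer S)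
    (p1 : ℚ) (β Λ φ0 G : A)
    (hΛod : S.od Λ)
    (hG1 : D.ds φ0 * G = 1)
    (hx : D.dx φ0 = Λ * D.ds φ0 - p1 • φ0)
    (hxx : D.dx (D.dx φ0) = (p1^2) • φ0 - D.dx β * D.ds φ0) :
    D.dx Λ + D.dx β - (2*p1) • Λ + Λ * D.ds Λ = 0 := by
  have hcompare := (SuperDer.dx_dx_of_dx_eq hΛod hx).symm.trans hxx
  have hmul_ds : (D.dx Λ + D.dx β - (2*p1) • Λ + Λ * D.ds Λ) * D.ds φ0 = 0 := by
    simp only [add_mul, sub_mul, smul_mul_assoc] at hcompare ⊢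
    linear_combination (norm := module) hcompare
  exact (isRightRegular_of_mul_eq_one hG1).mul_right_eq_zero_iff.mp hmul_ds

/-- From the defining relations of the Darboux transformation one
derives the Bäcklund transformation: if `α = β_x`, `Λ = ½(β₁ − β)`,
`φ₀_x = Λ(𝒟φ₀) − p₁φ₀` and `φ₀_{xx} = p₁²φ₀ − β_x(𝒟φ₀)` with `𝒟φ₀` invertible, then
`Λ_x + β_x − 2p₁Λ + Λ(𝒟Λ) = 0`. -/
theorem super_kdv_darboux_gives_backlund
    {A : Type*} [Ring A] [Algebra ℚ A] (S : SuperCommRing A) (D : SuperDer S)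
    (p1 : ℚ) (β β1 Λ φ0 G : A)
    (hβ : S.od β) (hβ1 : S.od β1) (hΛod : S.od Λ) (hφ0 : S.od φ0) (hG : S.ev G)
    (hG1 : D.ds φ0 * G = 1) (hG2 : G * D.ds φ0 = 1)
    (hΛ : Λ = ((1:ℚ)/2) • (β1 - β))
    (hx : D.dx φ0 = Λ * D.ds φ0 - p1 • φ0)
    (hxx : D.dx (D.dx φ0) = (p1^2) • φ0 - D.dx β * D.ds φ0) :
    D.dx Λ + D.dx β - (2*p1) • Λ + Λ * D.ds Λ = 0 :=
  super_kdv_darboux_gives_backlund_general S D p1 β Λ φ0 G hΛod hG1 hx hxx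
end

section
/- Both ξ_{[123]} and u_{[123]} computed from the super lattice potential KdV on a cube are independent of the initial value u (though u_{[123]} depends on ξ), hence the system does not possess the tetrahedron property. -/
section LatticeMaps

variable {A : Type*} [Ring A] [Algebra ℚ A]

/-- `f_{[ij]} = 2(p_i+p_j)/D_{ij}`, given a (two-sided) inverse `E` of the denominator
`D_{ij} = 2(p_j−p_i) + u_{[i]} − u_{[j]}`. -/
def latF (pi pj : ℚ) (E : A) : A := (2*(pi + pj)) • E

/-- `g_{[ij]} = −(p_i+p_j)(4(p_j−p_i) + u_{[i]} − u_{[j]})/D_{ij}²`. -/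
def latG (pi pj : ℚ) (ui uj E : A) : A :=
  -((pi + pj) • ((((4*(pj - pi)) • (1:A)) + ui - uj) * (E * E)))

/-- `ξ_{[ij]} = ξ + f_{[ij]}(ξ_{[i]} − ξ_{[j]})` (also used for the triple values). -/
def latXi (ξ ξi ξj f : A) : A := ξ + f * (ξi - ξj)

/-- `u_{[ij]} = u + f_{[ij]}(u_{[i]} − u_{[j]}) + g_{[ij]}(ξ_{[i]} − ξ_{[j]})(ξ_{[j]} − ξ)`. -/
def latU (u ui uj ξ ξi ξj f g : A) : A :=
  u + f * (ui - uj) + g * ((ξi - ξj) * (ξj - ξ))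

end LatticeMaps

/-!
The initial value `u` enters the two face values `u_{[13]}` and `u_{[23]}` as the same additive
summand, while the cube formula for `u_{[123]}`, including the denominator of `f_{[12]}` and
`g_{[12]}`, sees `u_{[13]}` and `u_{[23]}` only through their difference, in which `u` cancels.
The odd face values `ξ_{[13]}`, `ξ_{[23]}` do not involve `u` at all.
-/

section LatticeMapsDifferences

variable {A : Type*} [Ring A]

theorem latU_sub_latU_same_base (u u' ui uj ξ ξi ξj f g vi vj η ηi ηj f' g' : A) :
    latU u ui uj ξ ξi ξj f g - latU u vi vj η ηi ηj f' g'
      = latU u' ui uj ξ ξi ξj f g - latU u' vi vj η ηi ηj f' g' := by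
  simp only [latU]
  abel

theorem latG_eq_of_sub_eq [Algebra ℚ A] (pi pj : ℚ) {ui uj vi vj : A} (E : A)
    (h : ui - uj = vi - vj) :
    latG pi pj ui uj E = latG pi pj vi vj E := by
  simp only [latG, add_sub_assoc, h]

theorem latU_eq_of_sub_eq (u : A) {ui uj vi vj : A} (ξ ξi ξj f g : A)
    (h : ui - uj = vi - vj) :
    latU u ui uj ξ ξi ξj f g = latU u vi vj ξ ξi ξj f g := by
  simp only [latU, h]

end LatticeMapsDifferences

theorem super_lpkdv_triple_values_independent_of_u_general
    {A : Type*} [Ring A] [Algebra ℚ A]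
    (p1 p2 p3 : ℚ) (ξ ξ1 ξ2 ξ3 u1 u2 u3 : A)
    (E13 E23 E123 : A) :
    -- the triple values as functions of the initial datum u
    let u13 : A → A := fun w =>
      latU w u1 u3 ξ ξ1 ξ3 (latF p1 p3 E13) (latG p1 p3 u1 u3 E13)
    let u23 : A → A := fun w =>
      latU w u2 u3 ξ ξ2 ξ3 (latF p2 p3 E23) (latG p2 p3 u2 u3 E23)
    let ξ13 : A → A := fun _ => latXi ξ ξ1 ξ3 (latF p1 p3 E13)
    let ξ23 : A → A := fun _ => latXi ξ ξ2 ξ3 (latF p2 p3 E23)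
    let ξ123 : A → A := fun w => latXi ξ3 (ξ13 w) (ξ23 w) (latF p1 p2 E123)
    let u123 : A → A := fun w =>
      latU u3 (u13 w) (u23 w) ξ3 (ξ13 w) (ξ23 w) (latF p1 p2 E123)
        (latG p1 p2 (u13 w) (u23 w) E123)
    ∀ w w' : A, ξ123 w = ξ123 w' ∧ u123 w = u123 w' := by
  intro u13 u23 ξ13 ξ23 ξ123 u123 w w'
  have hdiff : u13 w - u23 w = u13 w' - u23 w' := latU_sub_latU_same_base ..
  refine ⟨rfl, ?_⟩
  simp only [u123]
  rw [latG_eq_of_sub_eq p1 p2 E123 hdiff, latU_eq_of_sub_eq u3 _ _ _ _ _ hdiff]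

/-- Both `ξ_{[123]}` and `u_{[123]}`, computed from the super lattice
potential KdV on a cube, are independent of the initial value `u`: the values obtained
from two different initial data `u` agree (hence the system does not possess the
tetrahedron property). All denominators are assumed invertible; note that they are
themselves independent of `u`, so the inverses `E₁₃, E₂₃, E₁₂₃` serve for every `u`. -/
theorem super_lpkdv_triple_values_independent_of_u
    {A : Type*} [Ring A] [Algebra ℚ A] (S : SuperCommRing A)
    (p1 p2 p3 : ℚ) (ξ ξ1 ξ2 ξ3 u0 u1 u2 u3 : A)
    (hξ : S.od ξ) (hξ1 : S.od ξ1) (hξ2 : S.od ξ2) (hξ3 : S.od ξ3)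
    (hu0 : S.ev u0) (hu1 : S.ev u1) (hu2 : S.ev u2) (hu3 : S.ev u3)
    (E13 E23 E123 : A)
    (hev : S.ev E13 ∧ S.ev E23 ∧ S.ev E123)
    (hE13 : ((2*(p3 - p1)) • (1:A) + u1 - u3) * E13 = 1
          ∧ E13 * ((2*(p3 - p1)) • (1:A) + u1 - u3) = 1)
    (hE23 : ((2*(p3 - p2)) • (1:A) + u2 - u3) * E23 = 1
          ∧ E23 * ((2*(p3 - p2)) • (1:A) + u2 - u3) = 1)
    (hE123 : ((2*(p2 - p1)) • (1:A)
          + latU u0 u1 u3 ξ ξ1 ξ3 (latF p1 p3 E13) (latG p1 p3 u1 u3 E13)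
          - latU u0 u2 u3 ξ ξ2 ξ3 (latF p2 p3 E23) (latG p2 p3 u2 u3 E23)) * E123 = 1
        ∧ E123 * ((2*(p2 - p1)) • (1:A)
          + latU u0 u1 u3 ξ ξ1 ξ3 (latF p1 p3 E13) (latG p1 p3 u1 u3 E13)
          - latU u0 u2 u3 ξ ξ2 ξ3 (latF p2 p3 E23) (latG p2 p3 u2 u3 E23)) = 1) :
    -- the triple values as functions of the initial datum u
    let u13 : A → A := fun w =>
      latU w u1 u3 ξ ξ1 ξ3 (latF p1 p3 E13) (latG p1 p3 u1 u3 E13)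
    let u23 : A → A := fun w =>
      latU w u2 u3 ξ ξ2 ξ3 (latF p2 p3 E23) (latG p2 p3 u2 u3 E23)
    let ξ13 : A → A := fun _ => latXi ξ ξ1 ξ3 (latF p1 p3 E13)
    let ξ23 : A → A := fun _ => latXi ξ ξ2 ξ3 (latF p2 p3 E23)
    let ξ123 : A → A := fun w => latXi ξ3 (ξ13 w) (ξ23 w) (latF p1 p2 E123)
    let u123 : A → A := fun w =>
      latU u3 (u13 w) (u23 w) ξ3 (ξ13 w) (ξ23 w) (latF p1 p2 E123)
        (latG p1 p2 (u13 w) (u23 w) E123)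
    ∀ w w' : A, ξ123 w = ξ123 w' ∧ u123 w = u123 w' :=
  super_lpkdv_triple_values_independent_of_u_general p1 p2 p3 ξ ξ1 ξ2 ξ3 u1 u2 u3 E13 E23 E123
end

section
/- Super consistency around the cube for the ξ-component: with face maps ξ_{[ij]} = ξ + f_{[ij]}(ξ_{[i]}−ξ_{[j]}) and triple maps ξ_{[ijl]} = ξ_{[l]} + f_{[ijl]}(ξ_{[il]}−ξ_{[jl]}) where f_{[ijl]} = 2(p_i+p_j)/(2(p_j−p_i)+u_{[il]}−u_{[jl]}) and the u-face values are given by the super lattice potential KdV, one has ξ_{[123]} = ξ_{[231]} = ξ_{[312]}. -/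
/-! ### Auxiliary machinery for the proof -/

namespace SLKdV
set_option linter.unusedSectionVars false

variable {A : Type*} [Ring A] [Algebra ℚ A]

/-- centrality -/
def Z (a : A) : Prop := ∀ b : A, a * b = b * a

lemma Z_one : Z (1 : A) := fun b => by simp
lemma Z_add {a b : A} (ha : Z a) (hb : Z b) : Z (a + b) := fun c => by
  rw [add_mul, mul_add, ha c, hb c]
lemma Z_neg {a : A} (ha : Z a) : Z (-a) := fun c => by rw [neg_mul, mul_neg, ha c]
lemma Z_sub {a b : A} (ha : Z a) (hb : Z b) : Z (a - b) := by
  rw [sub_eq_add_neg]; exact Z_add ha (Z_neg hb)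
lemma Z_mul {a b : A} (ha : Z a) (hb : Z b) : Z (a * b) := fun c => by
  rw [mul_assoc, hb c, ← mul_assoc, ha c, mul_assoc]
lemma Z_smul {a : A} (q : ℚ) (ha : Z a) : Z (q • a) := fun c => by
  rw [smul_mul_assoc, ha c, mul_smul_comm]

lemma Z_ev (S : SuperCommRing A) {a : A} (ha : S.ev a) : Z a := fun b => S.ev_comm b ha

lemma Z_odod (S : SuperCommRing A) {a b : A} (ha : S.od a) (hb : S.od b) : Z (a * b) :=
  Z_ev S (S.od_mul_od ha hb)

lemma Z_latF {E : A} (p q : ℚ) (hE : Z E) : Z (latF p q E) := Z_smul _ hE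

lemma Z_latG {ui uj E : A} (p q : ℚ) (hui : Z ui) (huj : Z uj) (hE : Z E) :
    Z (latG p q ui uj E) :=
  Z_neg (Z_smul _ (Z_mul (Z_sub (Z_add (Z_smul _ Z_one) hui) huj) (Z_mul hE hE)))

lemma od_sub (S : SuperCommRing A) {a b : A} (ha : S.od a) (hb : S.od b) : S.od (a - b) := by
  rw [sub_eq_add_neg]; exact S.od_add ha (S.od_neg hb)

section Grass
variable (S : SuperCommRing A)

lemma od_sq {x : A} (hx : S.od x) : x * x = 0 := by
  have h := S.od_anticomm hx hx
  have h2 : (2:ℚ) • (x * x) = 0 := by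
    rw [two_smul]; nth_rewrite 1 [h]; exact neg_add_cancel _
  calc x * x = ((2:ℚ)⁻¹ * 2) • (x*x) := by norm_num
  _ = (2:ℚ)⁻¹ • ((2:ℚ) • (x*x)) := by rw [mul_smul]
  _ = 0 := by rw [h2, smul_zero]

variable {x y z : A} (hx : S.od x) (hy : S.od y) (hz : S.od z)

include hz in
lemma g_sub_z (a : A) : (a - z) * z = a * z := by
  rw [sub_mul, od_sq S hz, sub_zero]

include hx hz in
lemma g_xz_xz : (x*z) * ((x:A)-z) = 0 := by
  have h1 : x*z*x = 0 := by
    rw [mul_assoc, S.od_anticomm hz hx, mul_neg, ← mul_assoc, od_sq S hx, zero_mul, neg_zero]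
  have h2 : x*z*z = 0 := by rw [mul_assoc, od_sq S hz, mul_zero]
  rw [mul_sub, h1, h2, sub_zero]

include hx hy hz in
lemma g_xz_yz : (x*z) * ((y:A)-z) = -(x*(y*z)) := by
  have h2 : x*z*z = 0 := by rw [mul_assoc, od_sq S hz, mul_zero]
  have h1 : x*z*y = -(x*(y*z)) := by
    rw [mul_assoc, S.od_anticomm hz hy, mul_neg]
  rw [mul_sub, h1, h2, sub_zero]

include hx hy hz in
lemma g_yz_xz : (y*z) * ((x:A)-z) = x*(y*z) := by
  have h2 : y*z*z = 0 := by rw [mul_assoc, od_sq S hz, mul_zero]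
  have h1 : y*z*x = x*(y*z) := by
    rw [mul_assoc, S.od_anticomm hz hx, mul_neg, ← mul_assoc, S.od_anticomm hy hx, neg_mul,
      neg_neg, mul_assoc]
  rw [mul_sub, h1, h2, sub_zero]

include hy hz in
lemma g_z_yz : z * ((y:A)*z) = 0 := by
  rw [← mul_assoc, S.od_anticomm hz hy, neg_mul, mul_assoc, od_sq S hz, mul_zero, neg_zero]

include hx hy hz in
lemma odd_cyc : y * (z * x) = x * (y * z) := by
  rw [S.od_anticomm hz hx, mul_neg, ← mul_assoc, S.od_anticomm hy hx, neg_mul, neg_neg,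
    mul_assoc]

end Grass

lemma Zswap {g : A} (hg : Z g) (a c : A) : a * (g * c) = g * (a * c) := by
  rw [← mul_assoc, ← hg a, mul_assoc]

lemma Zmul2 {g : A} (hg : Z g) (c a C : A) : (c*a)*(g*C) = (c*g)*(a*C) := by
  rw [mul_assoc, Zswap hg, ← mul_assoc]

lemma sub_mul_sub (a b c d : A) : (a-b)*(c-d) = a*c - a*d - (b*c - b*d) := by
  noncomm_ring

section NuEta
variable (S : SuperCommRing A) {x y z c d g h : A}
variable (hx : S.od x) (hy : S.od y) (hz : S.od z)
variable (hc : Z c) (hd : Z d) (hg : Z g) (hh : Z h)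

include hx hy hz hc hd hg hh in
lemma nu_eta :
    (c*((x-z)*z) - d*((y-z)*z)) * (g*(x-z) - h*(y-z))
      = (c*h - d*g)*(x*(y*z)) := by
  rw [g_sub_z S hz, g_sub_z S hz]
  have e1 : (c*(x*z))*(g*(x-z)) = (c*g)*((x*z)*(x-z)) := Zmul2 hg _ _ _
  have e2 : (c*(x*z))*(h*(y-z)) = (c*h)*((x*z)*(y-z)) := Zmul2 hh _ _ _
  have e3 : (d*(y*z))*(g*(x-z)) = (d*g)*((y*z)*(x-z)) := Zmul2 hg _ _ _
  have e4 : (d*(y*z))*(h*(y-z)) = (d*h)*((y*z)*(y-z)) := Zmul2 hh _ _ _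
  rw [sub_mul_sub (c*(x*z)) (d*(y*z)) (g*(x-z)) (h*(y-z)), e1, e2, e3, e4,
    g_xz_xz S hx hz, g_xz_yz S hx hy hz, g_yz_xz S hx hy hz, g_xz_xz S hy hz,
    mul_zero, mul_zero, mul_neg, sub_mul]
  abel

include hx hy hz hc hd in
lemma nu_nu0 :
    (c*(x*z) - d*(y*z)) * (c*(x*z) - d*(y*z)) = 0 := by
  have k1 : (x*z)*(x*z) = 0 := by rw [mul_assoc, g_z_yz S hx hz, mul_zero]
  have k2 : (x*z)*(y*z) = 0 := by rw [mul_assoc, g_z_yz S hy hz, mul_zero]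
  have k3 : (y*z)*(x*z) = 0 := by rw [mul_assoc, g_z_yz S hx hz, mul_zero]
  have k4 : (y*z)*(y*z) = 0 := by rw [mul_assoc, g_z_yz S hy hz, mul_zero]
  rw [sub_mul_sub (c*(x*z)) (d*(y*z)) (c*(x*z)) (d*(y*z)), Zmul2 hc, Zmul2 hd, Zmul2 hc,
    Zmul2 hd, k1, k2, k3, k4, mul_zero, mul_zero, mul_zero, mul_zero]
  abel

include hx hy hz hc hd in
lemma nu_nu :
    (c*((x-z)*z) - d*((y-z)*z)) * (c*((x-z)*z) - d*((y-z)*z)) = 0 := by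
  rw [g_sub_z S hz, g_sub_z S hz]
  exact nu_nu0 S hx hy hz hc hd

end NuEta

lemma toCenter {a : A} (ha : Z a) : a ∈ Subalgebra.center ℚ A :=
  Subalgebra.mem_center_iff.mpr (fun b => (ha b).symm)

lemma Bt_eq {e v : A} (he : Z e) (hv : Z v) (hvv : v*v = 0) :
    e = (e + (e*e)*v) - ((e + (e*e)*v) * (e + (e*e)*v))*v := by
  let E : Subalgebra.center ℚ A := ⟨e, toCenter he⟩
  let V : Subalgebra.center ℚ A := ⟨v, toCenter hv⟩
  have hvv' : V*V = 0 := by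
    apply Subtype.ext; push_cast; exact hvv
  have key : E = (E + (E*E)*V) - ((E + (E*E)*V) * (E + (E*E)*V))*V := by
    have gen : ∀ {R : Type _} [CommRing R] (E V : R), V*V = 0 →
        E = (E + (E*E)*V) - ((E + (E*E)*V) * (E + (E*E)*V))*V := by
      intro R _ E V hvv'
      linear_combination (2*E^3 + E^4*V) * hvv'
    exact gen E V hvv'
  have := congrArg Subtype.val key
  push_cast at this
  exact this

/-- Normal form for a triple application of the lattice `ξ`-map. -/
lemma key (S : SuperCommRing A) (p q : ℚ) (ξ yi yj yl : A)
    (hξ : S.od ξ) (hyi : S.od yi) (hyj : S.od yj) (hyl : S.od yl)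
    (fil fjl gil gjl Et Bt ft : A)
    (hfil : Z fil) (hfjl : Z fjl) (hgil : Z gil) (hgjl : Z gjl) (hZEt : Z Et)
    (hBt : Bt = Et + (Et*Et)*(gil*((yi-yl)*(yl-ξ)) - gjl*((yj-yl)*(yl-ξ))))
    (hft : ft = (2*(p+q)) • Et) :
    latXi yl (latXi ξ yi yl fil) (latXi ξ yj yl fjl) ft
      = ξ + ((2*(p+q))•(Bt*fil)) * (yi-ξ)
          + (-((2*(p+q))•(Bt*fjl))) * (yj-ξ)
          + (1 + (2*(p+q))•(Bt*(fjl-fil))) * (yl-ξ)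
          + (-((2*(p+q))•((Bt*Bt)*(gil*fjl - gjl*fil)))) * ((yi-ξ)*((yj-ξ)*(yl-ξ))) := by
  rw [hft]
  have hx : S.od (yi - ξ) := od_sub S hyi hξ
  have hy : S.od (yj - ξ) := od_sub S hyj hξ
  have hz : S.od (yl - ξ) := od_sub S hyl hξ
  have hiz : yi - yl = (yi-ξ) - (yl-ξ) := (sub_sub_sub_cancel_right yi yl ξ).symm
  have hjz : yj - yl = (yj-ξ) - (yl-ξ) := (sub_sub_sub_cancel_right yj yl ξ).symm
  have hBt' : Bt = Et + (Et*Et)*(gil*(((yi-ξ)-(yl-ξ))*(yl-ξ)) - gjl*(((yj-ξ)-(yl-ξ))*(yl-ξ))) := by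
    rw [hBt, hiz, hjz]
  have hZν : Z (gil*(((yi-ξ)-(yl-ξ))*(yl-ξ)) - gjl*(((yj-ξ)-(yl-ξ))*(yl-ξ))) :=
    Z_sub (Z_mul hgil (Z_odod S (od_sub S hx hz) hz)) (Z_mul hgjl (Z_odod S (od_sub S hy hz) hz))
  have hνν := nu_nu S (x := yi-ξ) (y := yj-ξ) (z := yl-ξ) hx hy hz hgil hgjl
  have hEt : Et = Bt - (Bt*Bt)*(gil*(((yi-ξ)-(yl-ξ))*(yl-ξ)) - gjl*(((yj-ξ)-(yl-ξ))*(yl-ξ))) := by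
    rw [hBt']
    exact Bt_eq hZEt hZν hνν
  have hνη := nu_eta S (x := yi-ξ) (y := yj-ξ) (z := yl-ξ) hx hy hz hgil hgjl hfil hfjl
  have h1 : latXi ξ yi yl fil - latXi ξ yj yl fjl
      = fil*((yi-ξ)-(yl-ξ)) - fjl*((yj-ξ)-(yl-ξ)) := by
    simp only [latXi, hiz, hjz]; abel
  calc latXi yl (latXi ξ yi yl fil) (latXi ξ yj yl fjl) ((2*(p+q)) • Et)
      = yl + ((2*(p+q)) • Et) * (fil*((yi-ξ)-(yl-ξ)) - fjl*((yj-ξ)-(yl-ξ))) := by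
        rw [latXi, h1]
    _ = yl + (2*(p+q)) • (Et * (fil*((yi-ξ)-(yl-ξ)) - fjl*((yj-ξ)-(yl-ξ)))) := by
        rw [smul_mul_assoc]
    _ = ξ + (yl - ξ) + (2*(p+q)) •
          (Bt * (fil*((yi-ξ)-(yl-ξ)) - fjl*((yj-ξ)-(yl-ξ)))
           - (Bt*Bt) * ((gil*fjl - gjl*fil)*((yi-ξ)*((yj-ξ)*(yl-ξ))))) := by
        rw [hEt, sub_mul, mul_assoc (Bt*Bt), hνη, add_sub_cancel]
    _ = ξ + ((2*(p+q))•(Bt*fil)) * (yi-ξ)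
          + (-((2*(p+q))•(Bt*fjl))) * (yj-ξ)
          + (1 + (2*(p+q))•(Bt*(fjl-fil))) * (yl-ξ)
          + (-((2*(p+q))•((Bt*Bt)*(gil*fjl - gjl*fil)))) * ((yi-ξ)*((yj-ξ)*(yl-ξ))) := by
        simp only [mul_sub, sub_mul, add_mul, one_mul, neg_mul, mul_assoc, smul_mul_assoc,
          smul_sub, smul_add]
        abel

lemma mulcancel {R : Type*} [CommRing R] {m n x y : R} (h : m * n = 1) (hx : m * x = m * y) :
    x = y := by
  have : n * (m * x) = n * (m * y) := by rw [hx]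
  rwa [← mul_assoc, ← mul_assoc, mul_comm n m, h, one_mul, one_mul] at this

lemma inv_shift {R : Type*} [CommRing R] {a v e : R} (h : (a + v)*e = 1) (hvv : v*v = 0) :
    a*(e + (e*e)*v) = 1 := by
  linear_combination (1 + e*v)*h - e^2*hvv

set_option maxHeartbeats 1600000 in
lemma stage2core {R : Type*} [CommRing R]
    (s12 s13 s23 γ12 γ13 γ23 d12 d13 d23 E12 E13 E23 B1 B2 B3 : R)
    (h12 : d12*E12 = 1) (h13 : d13*E13 = 1) (h23 : d23*E23 = 1)
    (qb1 : (4*(s12*s13)*d23 + 4*(s23*s13)*d12 - 4*(s23*s12)*d13)*B1 = d13*d23)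
    (qb2 : (4*(s12*s13)*d23 + 4*(s23*s13)*d12 - 4*(s23*s12)*d13)*B2 = d12*d13)
    (qb3 : (4*(s12*s13)*d23 + 4*(s23*s13)*d12 - 4*(s23*s12)*d13)*B3 = -(d12*d23))
    (hg : γ13*d23 - γ23*d13 = γ12*d13 - γ13*d12)
    (hg2 : γ12*d13 - γ13*d12 = γ12*d23 - γ23*d12) :
    (2*s12*(B1*(2*s13*E13)) = 1 + 2*s23*(B2*(2*s13*(-E13) - 2*s12*(-E12)))
    ∧ -(2*s12*(B1*(2*s23*E23))) = 2*s23*(B2*(2*s12*(-E12)))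
    ∧ 1 + 2*s12*(B1*(2*s23*E23 - 2*s13*E13)) = -(2*s23*(B2*(2*s13*(-E13))))
    ∧ -(2*s12*((B1*B1)*((-(s13*(γ13*(E13*E13))))*(2*s23*E23)
          - (-(s23*(γ23*(E23*E23))))*(2*s13*E13))))
      = -(2*s23*((B2*B2)*((-(s12*((-γ12)*((-E12)*(-E12)))))*(2*s13*(-E13))
          - (-(s13*((-γ13)*((-E13)*(-E13)))))*(2*s12*(-E12))))))
    ∧ (1 + 2*s23*(B2*(2*s13*(-E13) - 2*s12*(-E12))) = -(2*s13*(B3*(2*s12*E12)))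
    ∧ 2*s23*(B2*(2*s12*(-E12))) = 1 + 2*s13*(B3*(2*s12*E12 - 2*s23*(-E23)))
    ∧ -(2*s23*(B2*(2*s13*(-E13)))) = 2*s13*(B3*(2*s23*(-E23)))
    ∧ -(2*s23*((B2*B2)*((-(s12*((-γ12)*((-E12)*(-E12)))))*(2*s13*(-E13))
          - (-(s13*((-γ13)*((-E13)*(-E13)))))*(2*s12*(-E12)))))
      = -(2*s13*((B3*B3)*((-(s23*((-γ23)*((-E23)*(-E23)))))*(2*s12*E12)
          - (-(s12*(γ12*(E12*E12))))*(2*s23*(-E23)))))) := by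
  set Q : R := 4*(s12*s13)*d23 + 4*(s23*s13)*d12 - 4*(s23*s12)*d13 with hQ
  have t1 : Q*(B1*E13) = d23 := by linear_combination E13*qb1 + d23*h13
  have t2 : Q*(B1*E23) = d13 := by linear_combination E23*qb1 + d13*h23
  have t3 : Q*(B2*E12) = d13 := by linear_combination E12*qb2 + d13*h12
  have t4 : Q*(B2*E13) = d12 := by linear_combination E13*qb2 + d12*h13
  have t5 : Q*(B3*E12) = -d23 := by linear_combination E12*qb3 - d23*h12
  have t6 : Q*(B3*E23) = -d12 := by linear_combination E23*qb3 - d12*h23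
  have hQN : Q*(B1*(E13*E23)) = 1 := by linear_combination (E13*E23)*qb1 + (d23*E23)*h13 + h23
  have hM4 : (Q*(Q*(d13*d23))) * ((B1*(E13*E23))*((B1*(E13*E23))*(E13*E23))) = 1 := by
    linear_combination (Q*(B1*(E13*E23))*(d13*E13)*(d23*E23))*hQN + ((d13*E13)*(d23*E23))*hQN
      + (d23*E23)*h13 + h23
  refine ⟨⟨?_, ?_, ?_, ?_⟩, ?_, ?_, ?_, ?_⟩
  · exact mulcancel hQN (by
      linear_combination 4*(s12*s13)*t1 + 4*(s23*s13)*t4 - 4*(s23*s12)*t3)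
  · exact mulcancel hQN (by
      linear_combination -4*(s12*s23)*t2 + 4*(s23*s12)*t3)
  · exact mulcancel hQN (by
      linear_combination 4*(s12*s23)*t2 - 4*(s12*s13)*t1 - 4*(s23*s13)*t4)
  · exact mulcancel hM4 (by
      linear_combination (4*(s12*(s13*s23)))*γ13*(d13*d23*E23*(Q*(B1*E13)+d23))*t1
        + (4*(s12*(s13*s23)))*γ13*(d13*d23*d23)*h23
        - (4*(s12*(s13*s23)))*γ23*(d13*d23*E13*(Q*(B1*E23)+d13))*t2
        - (4*(s12*(s13*s23)))*γ23*(d13*d23*d13)*h13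
        - (4*(s12*(s13*s23)))*γ12*(d13*d23*E13*(Q*(B2*E12)+d13))*t3
        - (4*(s12*(s13*s23)))*γ12*(d13*d23*d13)*h13
        + (4*(s12*(s13*s23)))*γ13*(d13*d23*E12*(Q*(B2*E13)+d12))*t4
        + (4*(s12*(s13*s23)))*γ13*(d13*d23*d12)*h12
        + (4*(s12*(s13*s23)))*(d13*d23)*hg)
  · exact mulcancel hQN (by
      linear_combination -4*(s23*s13)*t4 + 4*(s23*s12)*t3 + 4*(s13*s12)*t5)
  · exact mulcancel hQN (by
      linear_combination -4*(s23*s12)*t3 - 4*(s13*s12)*t5 - 4*(s13*s23)*t6)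
  · exact mulcancel hQN (by
      linear_combination 4*(s23*s13)*t4 + 4*(s13*s23)*t6)
  · exact mulcancel hM4 (by
      linear_combination (4*(s12*(s13*s23)))*γ12*(d13*d23*E13*(Q*(B2*E12)+d13))*t3
        + (4*(s12*(s13*s23)))*γ12*(d13*d23*d13)*h13
        - (4*(s12*(s13*s23)))*γ13*(d13*d23*E12*(Q*(B2*E13)+d12))*t4
        - (4*(s12*(s13*s23)))*γ13*(d13*d23*d12)*h12
        + (4*(s12*(s13*s23)))*γ23*(d13*d23*E12*(Q*(B3*E23)-d12))*t6
        + (4*(s12*(s13*s23)))*γ23*(d12*d13*d23)*h12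
        - (4*(s12*(s13*s23)))*γ12*(d13*d23*E23*(Q*(B3*E12)-d23))*t5
        - (4*(s12*(s13*s23)))*γ12*(d13*d23*d23)*h23
        + (4*(s12*(s13*s23)))*(d13*d23)*hg2)

set_option maxHeartbeats 3200000 in
lemma stage2 {R : Type*} [CommRing R] [Algebra ℚ R]
    (p1 p2 p3 : ℚ) (U1 U2 U3 E12 E21 E13 E31 E23 E32 B1 B2 B3 : R)
    (h12 : ((2*(p2 - p1)) • (1:R) + U1 - U2) * E12 = 1)
    (h21 : ((2*(p1 - p2)) • (1:R) + U2 - U1) * E21 = 1)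
    (h13 : ((2*(p3 - p1)) • (1:R) + U1 - U3) * E13 = 1)
    (h31 : ((2*(p1 - p3)) • (1:R) + U3 - U1) * E31 = 1)
    (h23 : ((2*(p3 - p2)) • (1:R) + U2 - U3) * E23 = 1)
    (h32 : ((2*(p2 - p3)) • (1:R) + U3 - U2) * E32 = 1)
    (k1 : ((2*(p2 - p1)) • (1:R) + latF p1 p3 E13 * (U1 - U3) - latF p2 p3 E23 * (U2 - U3)) * B1 = 1)
    (k2 : ((2*(p3 - p2)) • (1:R) + latF p2 p1 E21 * (U2 - U1) - latF p3 p1 E31 * (U3 - U1)) * B2 = 1)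
    (k3 : ((2*(p1 - p3)) • (1:R) + latF p3 p2 E32 * (U3 - U2) - latF p1 p2 E12 * (U1 - U2)) * B3 = 1) :
    ((2*(p1+p2))•(B1 * latF p1 p3 E13) = 1 + (2*(p2+p3))•(B2*(latF p3 p1 E31 - latF p2 p1 E21))
    ∧ -((2*(p1+p2))•(B1 * latF p2 p3 E23)) = (2*(p2+p3))•(B2 * latF p2 p1 E21)
    ∧ 1 + (2*(p1+p2))•(B1*(latF p2 p3 E23 - latF p1 p3 E13)) = -((2*(p2+p3))•(B2 * latF p3 p1 E31))
    ∧ -((2*(p1+p2))•((B1*B1)*(latG p1 p3 U1 U3 E13 * latF p2 p3 E23 - latG p2 p3 U2 U3 E23 * latF p1 p3 E13)))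
      = -((2*(p2+p3))•((B2*B2)*(latG p2 p1 U2 U1 E21 * latF p3 p1 E31 - latG p3 p1 U3 U1 E31 * latF p2 p1 E21))))
    ∧ (1 + (2*(p2+p3))•(B2*(latF p3 p1 E31 - latF p2 p1 E21)) = -((2*(p3+p1))•(B3 * latF p1 p2 E12))
    ∧ (2*(p2+p3))•(B2 * latF p2 p1 E21) = 1 + (2*(p3+p1))•(B3*(latF p1 p2 E12 - latF p3 p2 E32))
    ∧ -((2*(p2+p3))•(B2 * latF p3 p1 E31)) = (2*(p3+p1))•(B3 * latF p3 p2 E32)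
    ∧ -((2*(p2+p3))•((B2*B2)*(latG p2 p1 U2 U1 E21 * latF p3 p1 E31 - latG p3 p1 U3 U1 E31 * latF p2 p1 E21)))
      = -((2*(p3+p1))•((B3*B3)*(latG p3 p2 U3 U2 E32 * latF p1 p2 E12 - latG p1 p2 U1 U2 E12 * latF p3 p2 E32)))) := by
  simp only [latF, latG, Algebra.smul_def, map_ofNat, map_mul, map_add, map_sub, mul_one]
    at h12 h21 h13 h31 h23 h32 k1 k2 k3 ⊢
  set P1 := algebraMap ℚ R p1 with hP1
  set P2 := algebraMap ℚ R p2 with hP2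
  set P3 := algebraMap ℚ R p3 with hP3
  have hE21 : E21 = -E12 := by linear_combination (-E21)*h12 + (-E12)*h21
  have hE31 : E31 = -E13 := by linear_combination (-E31)*h13 + (-E13)*h31
  have hE32 : E32 = -E23 := by linear_combination (-E32)*h23 + (-E23)*h32
  rw [hE21, hE31] at k2
  rw [hE32] at k3
  rw [hE21, hE31, hE32]
  have qb1 : (4*((P1+P2)*(P1+P3))*(2*(P3-P2) + U2 - U3)
      + 4*((P2+P3)*(P1+P3))*(2*(P2-P1) + U1 - U2)
      - 4*((P2+P3)*(P1+P2))*(2*(P3-P1) + U1 - U3))*B1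
      = (2*(P3-P1) + U1 - U3)*(2*(P3-P2) + U2 - U3) := by
    linear_combination ((2*(P3-P1) + U1 - U3)*(2*(P3-P2) + U2 - U3))*k1
      - (2*(P1+P3)*(U1-U3)*(2*(P3-P2) + U2 - U3)*B1)*h13
      + (2*(P2+P3)*(U2-U3)*(2*(P3-P1) + U1 - U3)*B1)*h23
  have qb2 : (4*((P1+P2)*(P1+P3))*(2*(P3-P2) + U2 - U3)
      + 4*((P2+P3)*(P1+P3))*(2*(P2-P1) + U1 - U2)
      - 4*((P2+P3)*(P1+P2))*(2*(P3-P1) + U1 - U3))*B2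
      = (2*(P2-P1) + U1 - U2)*(2*(P3-P1) + U1 - U3) := by
    linear_combination ((2*(P2-P1) + U1 - U2)*(2*(P3-P1) + U1 - U3))*k2
      + (2*(P1+P2)*(U2-U1)*(2*(P3-P1) + U1 - U3)*B2)*h12
      - (2*(P1+P3)*(U3-U1)*(2*(P2-P1) + U1 - U2)*B2)*h13
  have qb3 : (4*((P1+P2)*(P1+P3))*(2*(P3-P2) + U2 - U3)
      + 4*((P2+P3)*(P1+P3))*(2*(P2-P1) + U1 - U2)
      - 4*((P2+P3)*(P1+P2))*(2*(P3-P1) + U1 - U3))*B3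
      = -((2*(P2-P1) + U1 - U2)*(2*(P3-P2) + U2 - U3)) := by
    linear_combination (-((2*(P2-P1) + U1 - U2)*(2*(P3-P2) + U2 - U3)))*k3
      - (2*(P2+P3)*(U3-U2)*(2*(P2-P1) + U1 - U2)*B3)*h23
      - (2*(P1+P2)*(U1-U2)*(2*(P3-P2) + U2 - U3)*B3)*h12
  have hg : (4*(P3-P1)+U1-U3)*(2*(P3-P2) + U2 - U3) - (4*(P3-P2)+U2-U3)*(2*(P3-P1) + U1 - U3)
      = (4*(P2-P1)+U1-U2)*(2*(P3-P1) + U1 - U3) - (4*(P3-P1)+U1-U3)*(2*(P2-P1) + U1 - U2) := by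
    ring
  have hg2 : (4*(P2-P1)+U1-U2)*(2*(P3-P1) + U1 - U3) - (4*(P3-P1)+U1-U3)*(2*(P2-P1) + U1 - U2)
      = (4*(P2-P1)+U1-U2)*(2*(P3-P2) + U2 - U3) - (4*(P3-P2)+U2-U3)*(2*(P2-P1) + U1 - U2) := by
    ring
  obtain ⟨⟨cc1, cc2, cc3, cc4⟩, cc5, cc6, cc7, cc8⟩ :=
    stage2core (P1+P2) (P1+P3) (P2+P3)
      (4*(P2-P1)+U1-U2) (4*(P3-P1)+U1-U3) (4*(P3-P2)+U2-U3)
      (2*(P2-P1) + U1 - U2) (2*(P3-P1) + U1 - U3) (2*(P3-P2) + U2 - U3)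
      E12 E13 E23 B1 B2 B3 h12 h13 h23 qb1 qb2 qb3 hg hg2
  refine ⟨⟨?_, ?_, ?_, ?_⟩, ?_, ?_, ?_, ?_⟩
  · linear_combination cc1
  · linear_combination cc2
  · linear_combination cc3
  · linear_combination cc4
  · linear_combination cc5
  · linear_combination cc6
  · linear_combination cc7
  · linear_combination cc8

lemma coe_latF (p q : ℚ) (E : Subalgebra.center ℚ A) :
    ((latF p q E : Subalgebra.center ℚ A) : A) = latF p q (E : A) := by
  simp [latF]

lemma coe_latG (p q : ℚ) (ui uj E : Subalgebra.center ℚ A) :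
    ((latG p q ui uj E : Subalgebra.center ℚ A) : A) = latG p q (ui : A) (uj : A) (E : A) := by
  push_cast [latG]
  rfl

end SLKdV

open SLKdV

/-- Super consistency around the cube for the ξ-component of the super
lattice potential KdV: `ξ_{[123]} = ξ_{[231]} = ξ_{[312]}` (all denominators assumed
invertible, with the provided two-sided inverses `E_{ij}`, `E_{ijl}`). -/
theorem super_lpkdv_cac_xi
    {A : Type*} [Ring A] [Algebra ℚ A] (S : SuperCommRing A)
    (p1 p2 p3 : ℚ) (ξ ξ1 ξ2 ξ3 u u1 u2 u3 : A)
    (hξ : S.od ξ) (hξ1 : S.od ξ1) (hξ2 : S.od ξ2) (hξ3 : S.od ξ3)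
    (hu : S.ev u) (hu1 : S.ev u1) (hu2 : S.ev u2) (hu3 : S.ev u3)
    (E12 E21 E13 E31 E23 E32 : A)
    (hev1 : S.ev E12 ∧ S.ev E21 ∧ S.ev E13 ∧ S.ev E31 ∧ S.ev E23 ∧ S.ev E32)
    (hE12 : ((2*(p2 - p1)) • (1:A) + u1 - u2) * E12 = 1
          ∧ E12 * ((2*(p2 - p1)) • (1:A) + u1 - u2) = 1)
    (hE21 : ((2*(p1 - p2)) • (1:A) + u2 - u1) * E21 = 1
          ∧ E21 * ((2*(p1 - p2)) • (1:A) + u2 - u1) = 1)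
    (hE13 : ((2*(p3 - p1)) • (1:A) + u1 - u3) * E13 = 1
          ∧ E13 * ((2*(p3 - p1)) • (1:A) + u1 - u3) = 1)
    (hE31 : ((2*(p1 - p3)) • (1:A) + u3 - u1) * E31 = 1
          ∧ E31 * ((2*(p1 - p3)) • (1:A) + u3 - u1) = 1)
    (hE23 : ((2*(p3 - p2)) • (1:A) + u2 - u3) * E23 = 1
          ∧ E23 * ((2*(p3 - p2)) • (1:A) + u2 - u3) = 1)
    (hE32 : ((2*(p2 - p3)) • (1:A) + u3 - u2) * E32 = 1
          ∧ E32 * ((2*(p2 - p3)) • (1:A) + u3 - u2) = 1)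
    (E123 E231 E312 : A)
    (hev2 : S.ev E123 ∧ S.ev E231 ∧ S.ev E312)
    (hE123 : ((2*(p2 - p1)) • (1:A)
          + latU u u1 u3 ξ ξ1 ξ3 (latF p1 p3 E13) (latG p1 p3 u1 u3 E13)
          - latU u u2 u3 ξ ξ2 ξ3 (latF p2 p3 E23) (latG p2 p3 u2 u3 E23)) * E123 = 1
        ∧ E123 * ((2*(p2 - p1)) • (1:A)
          + latU u u1 u3 ξ ξ1 ξ3 (latF p1 p3 E13) (latG p1 p3 u1 u3 E13)
          - latU u u2 u3 ξ ξ2 ξ3 (latF p2 p3 E23) (latG p2 p3 u2 u3 E23)) = 1)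
    (hE231 : ((2*(p3 - p2)) • (1:A)
          + latU u u2 u1 ξ ξ2 ξ1 (latF p2 p1 E21) (latG p2 p1 u2 u1 E21)
          - latU u u3 u1 ξ ξ3 ξ1 (latF p3 p1 E31) (latG p3 p1 u3 u1 E31)) * E231 = 1
        ∧ E231 * ((2*(p3 - p2)) • (1:A)
          + latU u u2 u1 ξ ξ2 ξ1 (latF p2 p1 E21) (latG p2 p1 u2 u1 E21)
          - latU u u3 u1 ξ ξ3 ξ1 (latF p3 p1 E31) (latG p3 p1 u3 u1 E31)) = 1)
    (hE312 : ((2*(p1 - p3)) • (1:A)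
          + latU u u3 u2 ξ ξ3 ξ2 (latF p3 p2 E32) (latG p3 p2 u3 u2 E32)
          - latU u u1 u2 ξ ξ1 ξ2 (latF p1 p2 E12) (latG p1 p2 u1 u2 E12)) * E312 = 1
        ∧ E312 * ((2*(p1 - p3)) • (1:A)
          + latU u u3 u2 ξ ξ3 ξ2 (latF p3 p2 E32) (latG p3 p2 u3 u2 E32)
          - latU u u1 u2 ξ ξ1 ξ2 (latF p1 p2 E12) (latG p1 p2 u1 u2 E12)) = 1) :
    latXi ξ3 (latXi ξ ξ1 ξ3 (latF p1 p3 E13)) (latXi ξ ξ2 ξ3 (latF p2 p3 E23))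
        (latF p1 p2 E123)
      = latXi ξ1 (latXi ξ ξ2 ξ1 (latF p2 p1 E21)) (latXi ξ ξ3 ξ1 (latF p3 p1 E31))
        (latF p2 p3 E231)
    ∧ latXi ξ1 (latXi ξ ξ2 ξ1 (latF p2 p1 E21)) (latXi ξ ξ3 ξ1 (latF p3 p1 E31))
        (latF p2 p3 E231)
      = latXi ξ2 (latXi ξ ξ3 ξ2 (latF p3 p2 E32)) (latXi ξ ξ1 ξ2 (latF p1 p2 E12))
        (latF p3 p1 E312) := by
  obtain ⟨hev12, hev21, hev13, hev31, hev23, hev32⟩ := hev1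
  obtain ⟨hev123, hev231, hev312⟩ := hev2
  have zu1 : Z u1 := Z_ev S hu1
  have zu2 : Z u2 := Z_ev S hu2
  have zu3 : Z u3 := Z_ev S hu3
  have zE12 : Z E12 := Z_ev S hev12
  have zE21 : Z E21 := Z_ev S hev21
  have zE13 : Z E13 := Z_ev S hev13
  have zE31 : Z E31 := Z_ev S hev31
  have zE23 : Z E23 := Z_ev S hev23
  have zE32 : Z E32 := Z_ev S hev32
  have zE123 : Z E123 := Z_ev S hev123
  have zE231 : Z E231 := Z_ev S hev231
  have zE312 : Z E312 := Z_ev S hev312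
  have zG13 : Z (latG p1 p3 u1 u3 E13) := Z_latG p1 p3 zu1 zu3 zE13
  have zG23 : Z (latG p2 p3 u2 u3 E23) := Z_latG p2 p3 zu2 zu3 zE23
  have zG21 : Z (latG p2 p1 u2 u1 E21) := Z_latG p2 p1 zu2 zu1 zE21
  have zG31 : Z (latG p3 p1 u3 u1 E31) := Z_latG p3 p1 zu3 zu1 zE31
  have zG32 : Z (latG p3 p2 u3 u2 E32) := Z_latG p3 p2 zu3 zu2 zE32
  have zG12 : Z (latG p1 p2 u1 u2 E12) := Z_latG p1 p2 zu1 zu2 zE12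
  set ν1 : A := latG p1 p3 u1 u3 E13 * ((ξ1-ξ3)*(ξ3-ξ))
      - latG p2 p3 u2 u3 E23 * ((ξ2-ξ3)*(ξ3-ξ)) with hν1
  set ν2 : A := latG p2 p1 u2 u1 E21 * ((ξ2-ξ1)*(ξ1-ξ))
      - latG p3 p1 u3 u1 E31 * ((ξ3-ξ1)*(ξ1-ξ)) with hν2
  set ν3 : A := latG p3 p2 u3 u2 E32 * ((ξ3-ξ2)*(ξ2-ξ))
      - latG p1 p2 u1 u2 E12 * ((ξ1-ξ2)*(ξ2-ξ)) with hν3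
  have zν1 : Z ν1 := by
    rw [hν1]
    exact Z_sub (Z_mul zG13 (Z_odod S (od_sub S hξ1 hξ3) (od_sub S hξ3 hξ)))
      (Z_mul zG23 (Z_odod S (od_sub S hξ2 hξ3) (od_sub S hξ3 hξ)))
  have zν2 : Z ν2 := by
    rw [hν2]
    exact Z_sub (Z_mul zG21 (Z_odod S (od_sub S hξ2 hξ1) (od_sub S hξ1 hξ)))
      (Z_mul zG31 (Z_odod S (od_sub S hξ3 hξ1) (od_sub S hξ1 hξ)))
  have zν3 : Z ν3 := by
    rw [hν3]
    exact Z_sub (Z_mul zG32 (Z_odod S (od_sub S hξ3 hξ2) (od_sub S hξ2 hξ)))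
      (Z_mul zG12 (Z_odod S (od_sub S hξ1 hξ2) (od_sub S hξ2 hξ)))
  have hνν1 : ν1*ν1 = 0 := by
    rw [hν1]
    exact nu_nu0 S (od_sub S hξ1 hξ3) (od_sub S hξ2 hξ3) (od_sub S hξ3 hξ) zG13 zG23
  have hνν2 : ν2*ν2 = 0 := by
    rw [hν2]
    exact nu_nu0 S (od_sub S hξ2 hξ1) (od_sub S hξ3 hξ1) (od_sub S hξ1 hξ) zG21 zG31
  have hνν3 : ν3*ν3 = 0 := by
    rw [hν3]
    exact nu_nu0 S (od_sub S hξ3 hξ2) (od_sub S hξ1 hξ2) (od_sub S hξ2 hξ) zG32 zG12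
  set B1v : A := E123 + (E123*E123)*ν1 with hB1v
  set B2v : A := E231 + (E231*E231)*ν2 with hB2v
  set B3v : A := E312 + (E312*E312)*ν3 with hB3v
  have zB1 : Z B1v := by rw [hB1v]; exact Z_add zE123 (Z_mul (Z_mul zE123 zE123) zν1)
  have zB2 : Z B2v := by rw [hB2v]; exact Z_add zE231 (Z_mul (Z_mul zE231 zE231) zν2)
  have zB3 : Z B3v := by rw [hB3v]; exact Z_add zE312 (Z_mul (Z_mul zE312 zE312) zν3)
  have hq1 : ((2*(p2-p1))•(1:A) + latF p1 p3 E13*(u1-u3) - latF p2 p3 E23*(u2-u3)) * B1v = 1 := by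
    have hd : (2*(p2 - p1))•(1:A)
        + latU u u1 u3 ξ ξ1 ξ3 (latF p1 p3 E13) (latG p1 p3 u1 u3 E13)
        - latU u u2 u3 ξ ξ2 ξ3 (latF p2 p3 E23) (latG p2 p3 u2 u3 E23)
        = ((2*(p2-p1))•(1:A) + latF p1 p3 E13*(u1-u3) - latF p2 p3 E23*(u2-u3)) + ν1 := by
      rw [hν1]; simp only [latU]; abel
    have hi : (((2*(p2-p1))•(1:A) + latF p1 p3 E13*(u1-u3) - latF p2 p3 E23*(u2-u3)) + ν1)
        * E123 = 1 := by rw [← hd]; exact hE123.1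
    have za : Z ((2*(p2-p1))•(1:A) + latF p1 p3 E13*(u1-u3) - latF p2 p3 E23*(u2-u3)) :=
      Z_sub (Z_add (Z_smul _ Z_one) (Z_mul (Z_latF p1 p3 zE13) (Z_sub zu1 zu3)))
        (Z_mul (Z_latF p2 p3 zE23) (Z_sub zu2 zu3))
    have lifted := inv_shift (R := Subalgebra.center ℚ A)
      (a := ⟨_, toCenter za⟩) (v := ⟨ν1, toCenter zν1⟩) (e := ⟨E123, toCenter zE123⟩)
      (by apply Subtype.ext; push_cast; exact hi) (by apply Subtype.ext; push_cast; exact hνν1)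
    have hval := congrArg Subtype.val lifted
    push_cast at hval
    rw [hB1v]
    exact hval
  have hq2 : ((2*(p3-p2))•(1:A) + latF p2 p1 E21*(u2-u1) - latF p3 p1 E31*(u3-u1)) * B2v = 1 := by
    have hd : (2*(p3 - p2))•(1:A)
        + latU u u2 u1 ξ ξ2 ξ1 (latF p2 p1 E21) (latG p2 p1 u2 u1 E21)
        - latU u u3 u1 ξ ξ3 ξ1 (latF p3 p1 E31) (latG p3 p1 u3 u1 E31)
        = ((2*(p3-p2))•(1:A) + latF p2 p1 E21*(u2-u1) - latF p3 p1 E31*(u3-u1)) + ν2 := by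
      rw [hν2]; simp only [latU]; abel
    have hi : (((2*(p3-p2))•(1:A) + latF p2 p1 E21*(u2-u1) - latF p3 p1 E31*(u3-u1)) + ν2)
        * E231 = 1 := by rw [← hd]; exact hE231.1
    have za : Z ((2*(p3-p2))•(1:A) + latF p2 p1 E21*(u2-u1) - latF p3 p1 E31*(u3-u1)) :=
      Z_sub (Z_add (Z_smul _ Z_one) (Z_mul (Z_latF p2 p1 zE21) (Z_sub zu2 zu1)))
        (Z_mul (Z_latF p3 p1 zE31) (Z_sub zu3 zu1))
    have lifted := inv_shift (R := Subalgebra.center ℚ A)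
      (a := ⟨_, toCenter za⟩) (v := ⟨ν2, toCenter zν2⟩) (e := ⟨E231, toCenter zE231⟩)
      (by apply Subtype.ext; push_cast; exact hi) (by apply Subtype.ext; push_cast; exact hνν2)
    have hval := congrArg Subtype.val lifted
    push_cast at hval
    rw [hB2v]
    exact hval
  have hq3 : ((2*(p1-p3))•(1:A) + latF p3 p2 E32*(u3-u2) - latF p1 p2 E12*(u1-u2)) * B3v = 1 := by
    have hd : (2*(p1 - p3))•(1:A)
        + latU u u3 u2 ξ ξ3 ξ2 (latF p3 p2 E32) (latG p3 p2 u3 u2 E32)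
        - latU u u1 u2 ξ ξ1 ξ2 (latF p1 p2 E12) (latG p1 p2 u1 u2 E12)
        = ((2*(p1-p3))•(1:A) + latF p3 p2 E32*(u3-u2) - latF p1 p2 E12*(u1-u2)) + ν3 := by
      rw [hν3]; simp only [latU]; abel
    have hi : (((2*(p1-p3))•(1:A) + latF p3 p2 E32*(u3-u2) - latF p1 p2 E12*(u1-u2)) + ν3)
        * E312 = 1 := by rw [← hd]; exact hE312.1
    have za : Z ((2*(p1-p3))•(1:A) + latF p3 p2 E32*(u3-u2) - latF p1 p2 E12*(u1-u2)) :=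
      Z_sub (Z_add (Z_smul _ Z_one) (Z_mul (Z_latF p3 p2 zE32) (Z_sub zu3 zu2)))
        (Z_mul (Z_latF p1 p2 zE12) (Z_sub zu1 zu2))
    have lifted := inv_shift (R := Subalgebra.center ℚ A)
      (a := ⟨_, toCenter za⟩) (v := ⟨ν3, toCenter zν3⟩) (e := ⟨E312, toCenter zE312⟩)
      (by apply Subtype.ext; push_cast; exact hi) (by apply Subtype.ext; push_cast; exact hνν3)
    have hval := congrArg Subtype.val lifted
    push_cast at hval
    rw [hB3v]
    exact hval
  obtain ⟨⟨cc1, cc2, cc3, cc4⟩, cc5, cc6, cc7, cc8⟩ :=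
    stage2 (R := Subalgebra.center ℚ A) p1 p2 p3
      ⟨u1, toCenter zu1⟩ ⟨u2, toCenter zu2⟩ ⟨u3, toCenter zu3⟩
      ⟨E12, toCenter zE12⟩ ⟨E21, toCenter zE21⟩ ⟨E13, toCenter zE13⟩
      ⟨E31, toCenter zE31⟩ ⟨E23, toCenter zE23⟩ ⟨E32, toCenter zE32⟩
      ⟨B1v, toCenter zB1⟩ ⟨B2v, toCenter zB2⟩ ⟨B3v, toCenter zB3⟩
      (by apply Subtype.ext; push_cast; exact hE12.1)
      (by apply Subtype.ext; push_cast; exact hE21.1)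
      (by apply Subtype.ext; push_cast; exact hE13.1)
      (by apply Subtype.ext; push_cast; exact hE31.1)
      (by apply Subtype.ext; push_cast; exact hE23.1)
      (by apply Subtype.ext; push_cast; exact hE32.1)
      (by apply Subtype.ext; push_cast [coe_latF]; exact hq1)
      (by apply Subtype.ext; push_cast [coe_latF]; exact hq2)
      (by apply Subtype.ext; push_cast [coe_latF]; exact hq3)
  have co1 : (2*(p1+p2))•(B1v * latF p1 p3 E13)
      = 1 + (2*(p2+p3))•(B2v*(latF p3 p1 E31 - latF p2 p1 E21)) := by
    have h := congrArg Subtype.val cc1; push_cast [coe_latF, coe_latG] at h; exact h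
  have co2 : -((2*(p1+p2))•(B1v * latF p2 p3 E23)) = (2*(p2+p3))•(B2v * latF p2 p1 E21) := by
    have h := congrArg Subtype.val cc2; push_cast [coe_latF, coe_latG] at h; exact h
  have co3 : 1 + (2*(p1+p2))•(B1v*(latF p2 p3 E23 - latF p1 p3 E13))
      = -((2*(p2+p3))•(B2v * latF p3 p1 E31)) := by
    have h := congrArg Subtype.val cc3; push_cast [coe_latF, coe_latG] at h; exact h
  have co4 : -((2*(p1+p2))•((B1v*B1v)*(latG p1 p3 u1 u3 E13 * latF p2 p3 E23
        - latG p2 p3 u2 u3 E23 * latF p1 p3 E13)))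
      = -((2*(p2+p3))•((B2v*B2v)*(latG p2 p1 u2 u1 E21 * latF p3 p1 E31
        - latG p3 p1 u3 u1 E31 * latF p2 p1 E21))) := by
    have h := congrArg Subtype.val cc4; push_cast [coe_latF, coe_latG] at h; exact h
  have co5 : 1 + (2*(p2+p3))•(B2v*(latF p3 p1 E31 - latF p2 p1 E21))
      = -((2*(p3+p1))•(B3v * latF p1 p2 E12)) := by
    have h := congrArg Subtype.val cc5; push_cast [coe_latF, coe_latG] at h; exact h
  have co6 : (2*(p2+p3))•(B2v * latF p2 p1 E21)
      = 1 + (2*(p3+p1))•(B3v*(latF p1 p2 E12 - latF p3 p2 E32)) := by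
    have h := congrArg Subtype.val cc6; push_cast [coe_latF, coe_latG] at h; exact h
  have co7 : -((2*(p2+p3))•(B2v * latF p3 p1 E31)) = (2*(p3+p1))•(B3v * latF p3 p2 E32) := by
    have h := congrArg Subtype.val cc7; push_cast [coe_latF, coe_latG] at h; exact h
  have co8 : -((2*(p2+p3))•((B2v*B2v)*(latG p2 p1 u2 u1 E21 * latF p3 p1 E31
        - latG p3 p1 u3 u1 E31 * latF p2 p1 E21)))
      = -((2*(p3+p1))•((B3v*B3v)*(latG p3 p2 u3 u2 E32 * latF p1 p2 E12
        - latG p1 p2 u1 u2 E12 * latF p3 p2 E32))) := by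
    have h := congrArg Subtype.val cc8; push_cast [coe_latF, coe_latG] at h; exact h
  have hK1 := key S p1 p2 ξ ξ1 ξ2 ξ3 hξ hξ1 hξ2 hξ3
    (latF p1 p3 E13) (latF p2 p3 E23) (latG p1 p3 u1 u3 E13) (latG p2 p3 u2 u3 E23)
    E123 B1v (latF p1 p2 E123)
    (Z_latF p1 p3 zE13) (Z_latF p2 p3 zE23) zG13 zG23 zE123 (by rw [hB1v, hν1]) rfl
  have hK2 := key S p2 p3 ξ ξ2 ξ3 ξ1 hξ hξ2 hξ3 hξ1
    (latF p2 p1 E21) (latF p3 p1 E31) (latG p2 p1 u2 u1 E21) (latG p3 p1 u3 u1 E31)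
    E231 B2v (latF p2 p3 E231)
    (Z_latF p2 p1 zE21) (Z_latF p3 p1 zE31) zG21 zG31 zE231 (by rw [hB2v, hν2]) rfl
  have hK3 := key S p3 p1 ξ ξ3 ξ1 ξ2 hξ hξ3 hξ1 hξ2
    (latF p3 p2 E32) (latF p1 p2 E12) (latG p3 p2 u3 u2 E32) (latG p1 p2 u1 u2 E12)
    E312 B3v (latF p3 p1 E312)
    (Z_latF p3 p2 zE32) (Z_latF p1 p2 zE12) zG32 zG12 zE312 (by rw [hB3v, hν3]) rfl
  have hm2 : (ξ2-ξ)*((ξ3-ξ)*(ξ1-ξ)) = (ξ1-ξ)*((ξ2-ξ)*(ξ3-ξ)) :=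
    odd_cyc S (od_sub S hξ1 hξ) (od_sub S hξ2 hξ) (od_sub S hξ3 hξ)
  have hm3 : (ξ3-ξ)*((ξ1-ξ)*(ξ2-ξ)) = (ξ1-ξ)*((ξ2-ξ)*(ξ3-ξ)) := by
    rw [odd_cyc S (od_sub S hξ2 hξ) (od_sub S hξ3 hξ) (od_sub S hξ1 hξ), hm2]
  constructor
  · rw [hK1, hK2, hm2, co1, co2, co3, co4]
    abel
  · rw [hK2, hK3, hm2, hm3, co5, co6, co7, co8]
    abel
end

section
/- Semi-discrete Lax pair compatibility: the matrices 𝒲_N (4×4, given below) and 𝒯_N satisfy 𝒲_{N,τ}𝒲_{N−1} + 𝒲_N𝒯_{N−1} − 𝒯_N𝒲_{N−1} = 0 for all λ if and only if (ξ_N, u_N) satisfy the super Kac–van Moerbeke system ξ_{N,τ} = 2(ξ_{N+1}−ξ_{N−1})/(u_{N+1}−u_{N−1}−4p₁), u_{N,τ} = 2(u_{N+1}−u_{N−1})/(u_{N+1}−u_{N−1}−4p₁) + (u_{N+1}−u_{N−1}−8p₁)(ξ_{N+1}−ξ_{N−1})(ξ_N−ξ_{N−1})/(u_{N+1}−u_{N−1}−4p₁)².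 -/
set_option maxHeartbeats 4000000

private lemma mch {A : Type*} [Ring A] {a b : A} (hc : b * a = a * b) (t : A) :
    b * (a * t) = a * (b * t) := by rw [← mul_assoc, hc, mul_assoc]

private lemma mah {A : Type*} [Ring A] {a b : A} (hc : b * a = -(a * b)) (t : A) :
    b * (a * t) = -(a * (b * t)) := by rw [← mul_assoc, hc, neg_mul, mul_assoc]

private lemma msqh {A : Type*} [Ring A] {a : A} (hc : a * a = 0) (t : A) :
    a * (a * t) = 0 := by rw [← mul_assoc, hc, zero_mul]

private lemma minvh {A : Type*} [Ring A] {a b : A} (hc : a * b = 1) (t : A) :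
    a * (b * t) = t := by rw [← mul_assoc, hc, one_mul]

private lemma odd_sq {A : Type*} [Ring A] [Algebra ℚ A] {a : A} (hc : a * a = -(a * a)) :
    a * a = 0 := by
  have h2 : a * a + a * a = 0 := add_eq_zero_iff_eq_neg.mpr hc
  calc a * a = ((1:ℚ)/2) • ((2:ℚ) • (a * a)) := by rw [smul_smul]; norm_num
    _ = ((1:ℚ)/2) • (a * a + a * a) := by rw [two_smul]
    _ = 0 := by rw [h2, smul_zero]

private lemma mat4_zero {α : Type*} [Zero α] {M : Matrix (Fin 4) (Fin 4) α}
    (h00 : M 0 0 = 0) (h01 : M 0 1 = 0) (h02 : M 0 2 = 0) (h03 : M 0 3 = 0)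
    (h10 : M 1 0 = 0) (h11 : M 1 1 = 0) (h12 : M 1 2 = 0) (h13 : M 1 3 = 0)
    (h20 : M 2 0 = 0) (h21 : M 2 1 = 0) (h22 : M 2 2 = 0) (h23 : M 2 3 = 0)
    (h30 : M 3 0 = 0) (h31 : M 3 1 = 0) (h32 : M 3 2 = 0) (h33 : M 3 3 = 0) : M = 0 := by
  ext i j
  fin_cases i <;> fin_cases j
  exacts [h00, h01, h02, h03, h10, h11, h12, h13, h20, h21, h22, h23, h30, h31, h32, h33]


/-- Semi-discrete Lax pair compatibility: the 4×4 matrices `𝒲_N` and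
`𝒯_N` satisfy `𝒲_{N,τ}𝒲_{N−1} + 𝒲_N𝒯_{N−1} − 𝒯_N𝒲_{N−1} = 0` for all `N` and all
values of the spectral parameter `λ` iff `(ξ_N, u_N)` satisfies the super
Kac–van Moerbeke system. Here `ζ_N = ½(ξ_{N+1}−ξ_N)`, `h_N = ½(u_{N+1}−u_N)`, `dτ` is
the τ-derivative, and `Einv N` is the two-sided inverse of `u_{N+1} − u_{N−1} − 4p₁`. -/
theorem super_kvm_lax_compatibility
    {A : Type*} [Ring A] [Algebra ℚ A] (S : SuperCommRing A)
    (dτ : A → A)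
    (hdτ_add : ∀ a b : A, dτ (a + b) = dτ a + dτ b)
    (hdτ_smul : ∀ (q : ℚ) (a : A), dτ (q • a) = q • dτ a)
    (hdτ_mul : ∀ a b : A, dτ (a * b) = dτ a * b + a * dτ b)
    (hdτ_ev : ∀ a : A, S.ev a → S.ev (dτ a)) (hdτ_od : ∀ a : A, S.od a → S.od (dτ a))
    (p1 : ℚ) (ξ u Einv : ℤ → A)
    (hξ : ∀ N : ℤ, S.od (ξ N)) (hu : ∀ N : ℤ, S.ev (u N))
    (hEinvev : ∀ N : ℤ, S.ev (Einv N))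
    (hEinv : ∀ N : ℤ,
      (u (N+1) - u (N-1) - (4*p1) • (1:A)) * Einv N = 1 ∧
      Einv N * (u (N+1) - u (N-1) - (4*p1) • (1:A)) = 1) :
    let ζ : ℤ → A := fun N => ((1:ℚ)/2) • (ξ (N+1) - ξ N)
    let h : ℤ → A := fun N => ((1:ℚ)/2) • (u (N+1) - u N)
    let t23 : ℤ → A := fun N =>
      -(p1 • dτ (ξ (N+1))) - (2:ℚ) • ζ N
        + ((1:ℚ)/2) • (h N * dτ (ξ (N+1)) + ζ N * dτ (u (N+1)))
    let t43 : ℤ → A := fun N =>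
      -(p1 • dτ (u (N+1))) - (2:ℚ) • h N + h N * dτ (u (N+1))
    let W : ℤ → ℚ → Matrix (Fin 4) (Fin 4) A := fun N lam =>
      !![p1 • (1:A), 1, -(ζ N), 0;
         (lam^2) • (1:A), p1 • (1:A), (h N - (2*p1) • (1:A)) * ζ N, -(ζ N);
         0, ζ N, p1 • (1:A) - h N, 1;
         (lam^2) • ζ N, ((2*p1) • (1:A) - h N) * ζ N,
           (lam^2) • (1:A) + (h N - (2*p1) • (1:A)) * h N, p1 • (1:A) - h N]
    let T : ℤ → ℚ → Matrix (Fin 4) (Fin 4) A := fun N lam =>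
      !![1, 0, -(((1:ℚ)/2) • dτ (ξ (N+1))), 0;
         0, 1, t23 N, -(((1:ℚ)/2) • dτ (ξ (N+1)));
         0, ((1:ℚ)/2) • dτ (ξ (N+1)), 1 - ((1:ℚ)/2) • dτ (u (N+1)), 0;
         ((lam^2)/2) • dτ (ξ (N+1)), -(t23 N), t43 N, 1 - ((1:ℚ)/2) • dτ (u (N+1))]
    ((∀ (N : ℤ) (lam : ℚ),
        (W N lam).map dτ * W (N-1) lam + W N lam * T (N-1) lam
          - T N lam * W (N-1) lam = 0)
      ↔ (∀ N : ℤ,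
          dτ (ξ N) = (2:ℚ) • ((ξ (N+1) - ξ (N-1)) * Einv N)
          ∧ dτ (u N) = (2:ℚ) • ((u (N+1) - u (N-1)) * Einv N)
              + (u (N+1) - u (N-1) - (8*p1) • (1:A)) * (ξ (N+1) - ξ (N-1))
                  * (ξ N - ξ (N-1)) * (Einv N * Einv N))) := by
  intro ζ h t23 t43 W T
  have dτ_zero : dτ (0 : A) = 0 := by
    have h0 := hdτ_smul 0 0
    simpa using h0
  have dτ_one : dτ (1 : A) = 0 := by
    have h1 := hdτ_mul 1 1
    simp only [one_mul, mul_one] at h1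
    exact left_eq_add.mp h1
  have dτ_neg : ∀ a : A, dτ (-a) = -(dτ a) := by
    intro a
    have hh := hdτ_add a (-a)
    rw [add_neg_cancel, dτ_zero] at hh
    exact (neg_eq_of_add_eq_zero_right hh.symm).symm
  have dτ_sub : ∀ a b : A, dτ (a - b) = dτ a - dτ b := by
    intro a b
    rw [sub_eq_add_neg, hdτ_add, dτ_neg, ← sub_eq_add_neg]
  constructor
  · intro HH N
    obtain ⟨hE1, hE2⟩ := hEinv N
    have h13 := Matrix.ext_iff.2 (HH N 0) 1 3
    have h22 := Matrix.ext_iff.2 (HH N 0) 2 2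
    simp only [W, T, t23, t43, ζ, h] at h13 h22
    simp only [Matrix.map_apply, Matrix.add_apply, Matrix.sub_apply, Matrix.mul_apply, Matrix.zero_apply, Matrix.of_apply, Matrix.cons_val', Matrix.cons_val_zero, Matrix.cons_val_one, Matrix.cons_val_two, Matrix.cons_val_three, Matrix.head_cons, Matrix.tail_cons, Matrix.empty_val', Matrix.cons_val_fin_one, Matrix.head_fin_const, Fin.sum_univ_four] at h13 h22
    have hidx : N - 1 + 1 = N := by ring
    simp only [hidx] at h13 h22
    simp only [hdτ_mul, hdτ_add, hdτ_smul, dτ_sub, dτ_neg, dτ_one, dτ_zero, smul_zero, mul_zero, zero_mul, add_zero, zero_add, neg_zero, sub_zero, zero_sub] at h13 h22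
    set du3 := dτ (u (N + 1)) with hdu3
    set EE := u (N + 1) - u (N - 1) - (4 * p1) • (1 : A) with hEE
    have du3_ev : S.ev du3 := by rw [hdu3]; exact hdτ_ev (u (N + 1)) (hu (N + 1))
    have hu3 : u (N + 1) = EE + u (N - 1) + (4 * p1) • (1 : A) := by rw [hEE]; abel
    simp only [hu3] at h13 h22 ⊢
    have hEEc : ∀ b : A, EE * b = b * EE := by
      intro b
      rw [hEE]
      simp only [sub_mul, mul_sub, smul_mul_assoc, mul_smul_comm, one_mul, mul_one,
        S.ev_comm b (hu (N + 1)), S.ev_comm b (hu (N - 1))]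
    have cb_0_1 := S.ev_comm (u (N - 1)) (hu N)
    have ch_0_1 := mch (S.ev_comm (u (N - 1)) (hu N))
    have cb_0_2 := S.ev_comm (u (N - 1)) (hdτ_ev (u N) (hu N))
    have ch_0_2 := mch (S.ev_comm (u (N - 1)) (hdτ_ev (u N) (hu N)))
    have cb_0_3 := S.ev_comm (u (N - 1)) (du3_ev)
    have ch_0_3 := mch (S.ev_comm (u (N - 1)) (du3_ev))
    have cb_0_4 := hEEc (u (N - 1))
    have ch_0_4 := mch (hEEc (u (N - 1)))
    have cb_0_5 := S.ev_comm (u (N - 1)) (hEinvev N)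
    have ch_0_5 := mch (S.ev_comm (u (N - 1)) (hEinvev N))
    have cb_0_6 := (S.ev_comm (dτ (ξ N)) (hu (N - 1))).symm
    have ch_0_6 := mch ((S.ev_comm (dτ (ξ N)) (hu (N - 1))).symm)
    have cb_0_7 := (S.ev_comm (ξ (N - 1)) (hu (N - 1))).symm
    have ch_0_7 := mch ((S.ev_comm (ξ (N - 1)) (hu (N - 1))).symm)
    have cb_0_8 := (S.ev_comm (ξ N) (hu (N - 1))).symm
    have ch_0_8 := mch ((S.ev_comm (ξ N) (hu (N - 1))).symm)
    have cb_0_9 := (S.ev_comm (ξ (N + 1)) (hu (N - 1))).symm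
    have ch_0_9 := mch ((S.ev_comm (ξ (N + 1)) (hu (N - 1))).symm)
    have cb_0_10 := (S.ev_comm (dτ (ξ (N + 1))) (hu (N - 1))).symm
    have ch_0_10 := mch ((S.ev_comm (dτ (ξ (N + 1))) (hu (N - 1))).symm)
    have cb_1_2 := S.ev_comm (u N) (hdτ_ev (u N) (hu N))
    have ch_1_2 := mch (S.ev_comm (u N) (hdτ_ev (u N) (hu N)))
    have cb_1_3 := S.ev_comm (u N) (du3_ev)
    have ch_1_3 := mch (S.ev_comm (u N) (du3_ev))
    have cb_1_4 := hEEc (u N)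
    have ch_1_4 := mch (hEEc (u N))
    have cb_1_5 := S.ev_comm (u N) (hEinvev N)
    have ch_1_5 := mch (S.ev_comm (u N) (hEinvev N))
    have cb_1_6 := (S.ev_comm (dτ (ξ N)) (hu N)).symm
    have ch_1_6 := mch ((S.ev_comm (dτ (ξ N)) (hu N)).symm)
    have cb_1_7 := (S.ev_comm (ξ (N - 1)) (hu N)).symm
    have ch_1_7 := mch ((S.ev_comm (ξ (N - 1)) (hu N)).symm)
    have cb_1_8 := (S.ev_comm (ξ N) (hu N)).symm
    have ch_1_8 := mch ((S.ev_comm (ξ N) (hu N)).symm)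
    have cb_1_9 := (S.ev_comm (ξ (N + 1)) (hu N)).symm
    have ch_1_9 := mch ((S.ev_comm (ξ (N + 1)) (hu N)).symm)
    have cb_1_10 := (S.ev_comm (dτ (ξ (N + 1))) (hu N)).symm
    have ch_1_10 := mch ((S.ev_comm (dτ (ξ (N + 1))) (hu N)).symm)
    have cb_2_3 := S.ev_comm (dτ (u N)) (du3_ev)
    have ch_2_3 := mch (S.ev_comm (dτ (u N)) (du3_ev))
    have cb_2_4 := hEEc (dτ (u N))
    have ch_2_4 := mch (hEEc (dτ (u N)))
    have cb_2_5 := S.ev_comm (dτ (u N)) (hEinvev N)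
    have ch_2_5 := mch (S.ev_comm (dτ (u N)) (hEinvev N))
    have cb_2_6 := (S.ev_comm (dτ (ξ N)) (hdτ_ev (u N) (hu N))).symm
    have ch_2_6 := mch ((S.ev_comm (dτ (ξ N)) (hdτ_ev (u N) (hu N))).symm)
    have cb_2_7 := (S.ev_comm (ξ (N - 1)) (hdτ_ev (u N) (hu N))).symm
    have ch_2_7 := mch ((S.ev_comm (ξ (N - 1)) (hdτ_ev (u N) (hu N))).symm)
    have cb_2_8 := (S.ev_comm (ξ N) (hdτ_ev (u N) (hu N))).symm
    have ch_2_8 := mch ((S.ev_comm (ξ N) (hdτ_ev (u N) (hu N))).symm)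
    have cb_2_9 := (S.ev_comm (ξ (N + 1)) (hdτ_ev (u N) (hu N))).symm
    have ch_2_9 := mch ((S.ev_comm (ξ (N + 1)) (hdτ_ev (u N) (hu N))).symm)
    have cb_2_10 := (S.ev_comm (dτ (ξ (N + 1))) (hdτ_ev (u N) (hu N))).symm
    have ch_2_10 := mch ((S.ev_comm (dτ (ξ (N + 1))) (hdτ_ev (u N) (hu N))).symm)
    have cb_3_4 := hEEc (du3)
    have ch_3_4 := mch (hEEc (du3))
    have cb_3_5 := S.ev_comm (du3) (hEinvev N)
    have ch_3_5 := mch (S.ev_comm (du3) (hEinvev N))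
    have cb_3_6 := (S.ev_comm (dτ (ξ N)) (du3_ev)).symm
    have ch_3_6 := mch ((S.ev_comm (dτ (ξ N)) (du3_ev)).symm)
    have cb_3_7 := (S.ev_comm (ξ (N - 1)) (du3_ev)).symm
    have ch_3_7 := mch ((S.ev_comm (ξ (N - 1)) (du3_ev)).symm)
    have cb_3_8 := (S.ev_comm (ξ N) (du3_ev)).symm
    have ch_3_8 := mch ((S.ev_comm (ξ N) (du3_ev)).symm)
    have cb_3_9 := (S.ev_comm (ξ (N + 1)) (du3_ev)).symm
    have ch_3_9 := mch ((S.ev_comm (ξ (N + 1)) (du3_ev)).symm)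
    have cb_3_10 := (S.ev_comm (dτ (ξ (N + 1))) (du3_ev)).symm
    have ch_3_10 := mch ((S.ev_comm (dτ (ξ (N + 1))) (du3_ev)).symm)
    have cb_4_6 := (hEEc (dτ (ξ N))).symm
    have ch_4_6 := mch ((hEEc (dτ (ξ N))).symm)
    have cb_4_7 := (hEEc (ξ (N - 1))).symm
    have ch_4_7 := mch ((hEEc (ξ (N - 1))).symm)
    have cb_4_8 := (hEEc (ξ N)).symm
    have ch_4_8 := mch ((hEEc (ξ N)).symm)
    have cb_4_9 := (hEEc (ξ (N + 1))).symm
    have ch_4_9 := mch ((hEEc (ξ (N + 1))).symm)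
    have cb_4_10 := (hEEc (dτ (ξ (N + 1)))).symm
    have ch_4_10 := mch ((hEEc (dτ (ξ (N + 1)))).symm)
    have cb_5_6 := (S.ev_comm (dτ (ξ N)) (hEinvev N)).symm
    have ch_5_6 := mch ((S.ev_comm (dτ (ξ N)) (hEinvev N)).symm)
    have cb_5_7 := (S.ev_comm (ξ (N - 1)) (hEinvev N)).symm
    have ch_5_7 := mch ((S.ev_comm (ξ (N - 1)) (hEinvev N)).symm)
    have cb_5_8 := (S.ev_comm (ξ N) (hEinvev N)).symm
    have ch_5_8 := mch ((S.ev_comm (ξ N) (hEinvev N)).symm)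
    have cb_5_9 := (S.ev_comm (ξ (N + 1)) (hEinvev N)).symm
    have ch_5_9 := mch ((S.ev_comm (ξ (N + 1)) (hEinvev N)).symm)
    have cb_5_10 := (S.ev_comm (dτ (ξ (N + 1))) (hEinvev N)).symm
    have ch_5_10 := mch ((S.ev_comm (dτ (ξ (N + 1))) (hEinvev N)).symm)
    have cb_6_7 := S.od_anticomm (hξ (N - 1)) (hdτ_od (ξ N) (hξ N))
    have ch_6_7 := mah (S.od_anticomm (hξ (N - 1)) (hdτ_od (ξ N) (hξ N)))
    have cb_6_8 := S.od_anticomm (hξ N) (hdτ_od (ξ N) (hξ N))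
    have ch_6_8 := mah (S.od_anticomm (hξ N) (hdτ_od (ξ N) (hξ N)))
    have cb_6_9 := S.od_anticomm (hξ (N + 1)) (hdτ_od (ξ N) (hξ N))
    have ch_6_9 := mah (S.od_anticomm (hξ (N + 1)) (hdτ_od (ξ N) (hξ N)))
    have cb_6_10 := S.od_anticomm (hdτ_od (ξ (N + 1)) (hξ (N + 1))) (hdτ_od (ξ N) (hξ N))
    have ch_6_10 := mah (S.od_anticomm (hdτ_od (ξ (N + 1)) (hξ (N + 1))) (hdτ_od (ξ N) (hξ N)))
    have cb_7_8 := S.od_anticomm (hξ N) (hξ (N - 1))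
    have ch_7_8 := mah (S.od_anticomm (hξ N) (hξ (N - 1)))
    have cb_7_9 := S.od_anticomm (hξ (N + 1)) (hξ (N - 1))
    have ch_7_9 := mah (S.od_anticomm (hξ (N + 1)) (hξ (N - 1)))
    have cb_7_10 := S.od_anticomm (hdτ_od (ξ (N + 1)) (hξ (N + 1))) (hξ (N - 1))
    have ch_7_10 := mah (S.od_anticomm (hdτ_od (ξ (N + 1)) (hξ (N + 1))) (hξ (N - 1)))
    have cb_8_9 := S.od_anticomm (hξ (N + 1)) (hξ N)
    have ch_8_9 := mah (S.od_anticomm (hξ (N + 1)) (hξ N))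
    have cb_8_10 := S.od_anticomm (hdτ_od (ξ (N + 1)) (hξ (N + 1))) (hξ N)
    have ch_8_10 := mah (S.od_anticomm (hdτ_od (ξ (N + 1)) (hξ (N + 1))) (hξ N))
    have cb_9_10 := S.od_anticomm (hdτ_od (ξ (N + 1)) (hξ (N + 1))) (hξ (N + 1))
    have ch_9_10 := mah (S.od_anticomm (hdτ_od (ξ (N + 1)) (hξ (N + 1))) (hξ (N + 1)))
    have sq_6 : (dτ (ξ N)) * (dτ (ξ N)) = 0 := odd_sq (S.od_anticomm (hdτ_od (ξ N) (hξ N)) (hdτ_od (ξ N) (hξ N)))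
    have sqh_6 := msqh sq_6
    have sq_7 : (ξ (N - 1)) * (ξ (N - 1)) = 0 := odd_sq (S.od_anticomm (hξ (N - 1)) (hξ (N - 1)))
    have sqh_7 := msqh sq_7
    have sq_8 : (ξ N) * (ξ N) = 0 := odd_sq (S.od_anticomm (hξ N) (hξ N))
    have sqh_8 := msqh sq_8
    have sq_9 : (ξ (N + 1)) * (ξ (N + 1)) = 0 := odd_sq (S.od_anticomm (hξ (N + 1)) (hξ (N + 1)))
    have sqh_9 := msqh sq_9
    have sq_10 : (dτ (ξ (N + 1))) * (dτ (ξ (N + 1))) = 0 := odd_sq (S.od_anticomm (hdτ_od (ξ (N + 1)) (hξ (N + 1))) (hdτ_od (ξ (N + 1)) (hξ (N + 1))))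
    have sqh_10 := msqh sq_10
    have hivh1 := minvh hE1
    have hivh2 := minvh hE2
    have hg1 : dτ (ξ N) = (2:ℚ) • ((ξ (N + 1) - ξ (N - 1)) * Einv N) := by
      have key := congrArg (fun z => dτ (ξ N) + (4 : ℚ) • (Einv N * z)) h13
      simp only [mul_zero, smul_zero, add_zero] at key
      rw [← key]
      simp only [mul_add, add_mul, mul_sub, sub_mul, smul_add, smul_sub, smul_smul, smul_mul_assoc, mul_smul_comm, mul_assoc, mul_neg, neg_mul, smul_neg, neg_smul, neg_neg, one_mul, mul_one, mul_zero, zero_mul, smul_zero, zero_smul, add_zero, zero_add, neg_zero, sub_zero, zero_sub]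
      simp only [mul_neg, neg_mul, neg_neg, smul_neg, neg_smul, mul_zero, zero_mul, smul_zero, zero_smul, add_zero, zero_add, one_mul, mul_one, mul_assoc, smul_mul_assoc, mul_smul_comm, smul_smul, cb_0_1, ch_0_1, cb_0_2, ch_0_2, cb_0_3, ch_0_3, cb_0_4, ch_0_4, cb_0_5, ch_0_5, cb_0_6, ch_0_6, cb_0_7, ch_0_7, cb_0_8, ch_0_8, cb_0_9, ch_0_9, cb_0_10, ch_0_10, cb_1_2, ch_1_2, cb_1_3, ch_1_3, cb_1_4, ch_1_4, cb_1_5, ch_1_5, cb_1_6, ch_1_6, cb_1_7, ch_1_7, cb_1_8, ch_1_8, cb_1_9, ch_1_9, cb_1_10, ch_1_10, cb_2_3, ch_2_3, cb_2_4, ch_2_4, cb_2_5, ch_2_5, cb_2_6, ch_2_6, cb_2_7, ch_2_7, cb_2_8, ch_2_8, cb_2_9, ch_2_9, cb_2_10, ch_2_10, cb_3_4, ch_3_4, cb_3_5, ch_3_5, cb_3_6, ch_3_6, cb_3_7, ch_3_7, cb_3_8, ch_3_8, cb_3_9, ch_3_9, cb_3_10, ch_3_10, cb_4_6, ch_4_6,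 cb_4_7, ch_4_7, cb_4_8, ch_4_8, cb_4_9, ch_4_9, cb_4_10, ch_4_10, cb_5_6, ch_5_6, cb_5_7, ch_5_7, cb_5_8, ch_5_8, cb_5_9, ch_5_9, cb_5_10, ch_5_10, cb_6_7, ch_6_7, cb_6_8, ch_6_8, cb_6_9, ch_6_9, cb_6_10, ch_6_10, cb_7_8, ch_7_8, cb_7_9, ch_7_9, cb_7_10, ch_7_10, cb_8_9, ch_8_9, cb_8_10, ch_8_10, cb_9_10, ch_9_10, sq_6, sqh_6, sq_7, sqh_7, sq_8, sqh_8, sq_9, sqh_9, sq_10, sqh_10, hE1, hE2, hivh1, hivh2]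
      try module
    refine ⟨hg1, ?_⟩
    rw [hg1] at h22
    have key2 := congrArg (fun z => dτ (u N) - ((4 : ℚ) • Einv N + (2 : ℚ) •
      (Einv N * Einv N * (ξ (N - 1) * ξ N - ξ (N - 1) * ξ (N + 1) + ξ N * ξ (N + 1)))) * z) h22
    simp only [mul_zero, sub_zero] at key2
    rw [← key2]
    simp only [mul_add, add_mul, mul_sub, sub_mul, smul_add, smul_sub, smul_smul, smul_mul_assoc, mul_smul_comm, mul_assoc, mul_neg, neg_mul, smul_neg, neg_smul, neg_neg, one_mul, mul_one, mul_zero, zero_mul, smul_zero, zero_smul, add_zero, zero_add, neg_zero, sub_zero, zero_sub]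
    simp only [mul_neg, neg_mul, neg_neg, smul_neg, neg_smul, mul_zero, zero_mul, smul_zero, zero_smul, add_zero, zero_add, one_mul, mul_one, mul_assoc, smul_mul_assoc, mul_smul_comm, smul_smul, cb_0_1, ch_0_1, cb_0_2, ch_0_2, cb_0_3, ch_0_3, cb_0_4, ch_0_4, cb_0_5, ch_0_5, cb_0_6, ch_0_6, cb_0_7, ch_0_7, cb_0_8, ch_0_8, cb_0_9, ch_0_9, cb_0_10, ch_0_10, cb_1_2, ch_1_2, cb_1_3, ch_1_3, cb_1_4, ch_1_4, cb_1_5, ch_1_5, cb_1_6, ch_1_6, cb_1_7, ch_1_7, cb_1_8, ch_1_8, cb_1_9, ch_1_9, cb_1_10, ch_1_10, cb_2_3, ch_2_3, cb_2_4, ch_2_4, cb_2_5, ch_2_5, cb_2_6, ch_2_6, cb_2_7, ch_2_7, cb_2_8, ch_2_8, cb_2_9, ch_2_9, cb_2_10, ch_2_10, cb_3_4, ch_3_4, cb_3_5, ch_3_5, cb_3_6, ch_3_6, cb_3_7, ch_3_7, cb_3_8, ch_3_8, cb_3_9, ch_3_9, cb_3_10, ch_3_10, cb_4_6, ch_4_6,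 cb_4_7, ch_4_7, cb_4_8, ch_4_8, cb_4_9, ch_4_9, cb_4_10, ch_4_10, cb_5_6, ch_5_6, cb_5_7, ch_5_7, cb_5_8, ch_5_8, cb_5_9, ch_5_9, cb_5_10, ch_5_10, cb_6_7, ch_6_7, cb_6_8, ch_6_8, cb_6_9, ch_6_9, cb_6_10, ch_6_10, cb_7_8, ch_7_8, cb_7_9, ch_7_9, cb_7_10, ch_7_10, cb_8_9, ch_8_9, cb_8_10, ch_8_10, cb_9_10, ch_9_10, sq_6, sqh_6, sq_7, sqh_7, sq_8, sqh_8, sq_9, sqh_9, sq_10, sqh_10, hE1, hE2, hivh1, hivh2]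
    module
  · intro HH N lam
    obtain ⟨hk1, hk2⟩ := HH N
    obtain ⟨hE1, hE2⟩ := hEinv N
    set du3 := dτ (u (N + 1)) with hdu3
    set EE := u (N + 1) - u (N - 1) - (4 * p1) • (1 : A) with hEE
    have du3_ev : S.ev du3 := by rw [hdu3]; exact hdτ_ev (u (N + 1)) (hu (N + 1))
    have hu3 : u (N + 1) = EE + u (N - 1) + (4 * p1) • (1 : A) := by rw [hEE]; abel
    have hidx : N - 1 + 1 = N := by ring
    have hEEc : ∀ b : A, EE * b = b * EE := by
      intro b
      rw [hEE]
      simp only [sub_mul, mul_sub, smul_mul_assoc, mul_smul_comm, one_mul, mul_one,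
        S.ev_comm b (hu (N + 1)), S.ev_comm b (hu (N - 1))]
    have cb_0_1 := S.ev_comm (u (N - 1)) (hu N)
    have ch_0_1 := mch (S.ev_comm (u (N - 1)) (hu N))
    have cb_0_2 := S.ev_comm (u (N - 1)) (hdτ_ev (u N) (hu N))
    have ch_0_2 := mch (S.ev_comm (u (N - 1)) (hdτ_ev (u N) (hu N)))
    have cb_0_3 := S.ev_comm (u (N - 1)) (du3_ev)
    have ch_0_3 := mch (S.ev_comm (u (N - 1)) (du3_ev))
    have cb_0_4 := hEEc (u (N - 1))
    have ch_0_4 := mch (hEEc (u (N - 1)))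
    have cb_0_5 := S.ev_comm (u (N - 1)) (hEinvev N)
    have ch_0_5 := mch (S.ev_comm (u (N - 1)) (hEinvev N))
    have cb_0_6 := (S.ev_comm (dτ (ξ N)) (hu (N - 1))).symm
    have ch_0_6 := mch ((S.ev_comm (dτ (ξ N)) (hu (N - 1))).symm)
    have cb_0_7 := (S.ev_comm (ξ (N - 1)) (hu (N - 1))).symm
    have ch_0_7 := mch ((S.ev_comm (ξ (N - 1)) (hu (N - 1))).symm)
    have cb_0_8 := (S.ev_comm (ξ N) (hu (N - 1))).symm
    have ch_0_8 := mch ((S.ev_comm (ξ N) (hu (N - 1))).symm)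
    have cb_0_9 := (S.ev_comm (ξ (N + 1)) (hu (N - 1))).symm
    have ch_0_9 := mch ((S.ev_comm (ξ (N + 1)) (hu (N - 1))).symm)
    have cb_0_10 := (S.ev_comm (dτ (ξ (N + 1))) (hu (N - 1))).symm
    have ch_0_10 := mch ((S.ev_comm (dτ (ξ (N + 1))) (hu (N - 1))).symm)
    have cb_1_2 := S.ev_comm (u N) (hdτ_ev (u N) (hu N))
    have ch_1_2 := mch (S.ev_comm (u N) (hdτ_ev (u N) (hu N)))
    have cb_1_3 := S.ev_comm (u N) (du3_ev)
    have ch_1_3 := mch (S.ev_comm (u N) (du3_ev))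
    have cb_1_4 := hEEc (u N)
    have ch_1_4 := mch (hEEc (u N))
    have cb_1_5 := S.ev_comm (u N) (hEinvev N)
    have ch_1_5 := mch (S.ev_comm (u N) (hEinvev N))
    have cb_1_6 := (S.ev_comm (dτ (ξ N)) (hu N)).symm
    have ch_1_6 := mch ((S.ev_comm (dτ (ξ N)) (hu N)).symm)
    have cb_1_7 := (S.ev_comm (ξ (N - 1)) (hu N)).symm
    have ch_1_7 := mch ((S.ev_comm (ξ (N - 1)) (hu N)).symm)
    have cb_1_8 := (S.ev_comm (ξ N) (hu N)).symm
    have ch_1_8 := mch ((S.ev_comm (ξ N) (hu N)).symm)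
    have cb_1_9 := (S.ev_comm (ξ (N + 1)) (hu N)).symm
    have ch_1_9 := mch ((S.ev_comm (ξ (N + 1)) (hu N)).symm)
    have cb_1_10 := (S.ev_comm (dτ (ξ (N + 1))) (hu N)).symm
    have ch_1_10 := mch ((S.ev_comm (dτ (ξ (N + 1))) (hu N)).symm)
    have cb_2_3 := S.ev_comm (dτ (u N)) (du3_ev)
    have ch_2_3 := mch (S.ev_comm (dτ (u N)) (du3_ev))
    have cb_2_4 := hEEc (dτ (u N))
    have ch_2_4 := mch (hEEc (dτ (u N)))
    have cb_2_5 := S.ev_comm (dτ (u N)) (hEinvev N)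
    have ch_2_5 := mch (S.ev_comm (dτ (u N)) (hEinvev N))
    have cb_2_6 := (S.ev_comm (dτ (ξ N)) (hdτ_ev (u N) (hu N))).symm
    have ch_2_6 := mch ((S.ev_comm (dτ (ξ N)) (hdτ_ev (u N) (hu N))).symm)
    have cb_2_7 := (S.ev_comm (ξ (N - 1)) (hdτ_ev (u N) (hu N))).symm
    have ch_2_7 := mch ((S.ev_comm (ξ (N - 1)) (hdτ_ev (u N) (hu N))).symm)
    have cb_2_8 := (S.ev_comm (ξ N) (hdτ_ev (u N) (hu N))).symm
    have ch_2_8 := mch ((S.ev_comm (ξ N) (hdτ_ev (u N) (hu N))).symm)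
    have cb_2_9 := (S.ev_comm (ξ (N + 1)) (hdτ_ev (u N) (hu N))).symm
    have ch_2_9 := mch ((S.ev_comm (ξ (N + 1)) (hdτ_ev (u N) (hu N))).symm)
    have cb_2_10 := (S.ev_comm (dτ (ξ (N + 1))) (hdτ_ev (u N) (hu N))).symm
    have ch_2_10 := mch ((S.ev_comm (dτ (ξ (N + 1))) (hdτ_ev (u N) (hu N))).symm)
    have cb_3_4 := hEEc (du3)
    have ch_3_4 := mch (hEEc (du3))
    have cb_3_5 := S.ev_comm (du3) (hEinvev N)
    have ch_3_5 := mch (S.ev_comm (du3) (hEinvev N))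
    have cb_3_6 := (S.ev_comm (dτ (ξ N)) (du3_ev)).symm
    have ch_3_6 := mch ((S.ev_comm (dτ (ξ N)) (du3_ev)).symm)
    have cb_3_7 := (S.ev_comm (ξ (N - 1)) (du3_ev)).symm
    have ch_3_7 := mch ((S.ev_comm (ξ (N - 1)) (du3_ev)).symm)
    have cb_3_8 := (S.ev_comm (ξ N) (du3_ev)).symm
    have ch_3_8 := mch ((S.ev_comm (ξ N) (du3_ev)).symm)
    have cb_3_9 := (S.ev_comm (ξ (N + 1)) (du3_ev)).symm
    have ch_3_9 := mch ((S.ev_comm (ξ (N + 1)) (du3_ev)).symm)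
    have cb_3_10 := (S.ev_comm (dτ (ξ (N + 1))) (du3_ev)).symm
    have ch_3_10 := mch ((S.ev_comm (dτ (ξ (N + 1))) (du3_ev)).symm)
    have cb_4_6 := (hEEc (dτ (ξ N))).symm
    have ch_4_6 := mch ((hEEc (dτ (ξ N))).symm)
    have cb_4_7 := (hEEc (ξ (N - 1))).symm
    have ch_4_7 := mch ((hEEc (ξ (N - 1))).symm)
    have cb_4_8 := (hEEc (ξ N)).symm
    have ch_4_8 := mch ((hEEc (ξ N)).symm)
    have cb_4_9 := (hEEc (ξ (N + 1))).symm
    have ch_4_9 := mch ((hEEc (ξ (N + 1))).symm)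
    have cb_4_10 := (hEEc (dτ (ξ (N + 1)))).symm
    have ch_4_10 := mch ((hEEc (dτ (ξ (N + 1)))).symm)
    have cb_5_6 := (S.ev_comm (dτ (ξ N)) (hEinvev N)).symm
    have ch_5_6 := mch ((S.ev_comm (dτ (ξ N)) (hEinvev N)).symm)
    have cb_5_7 := (S.ev_comm (ξ (N - 1)) (hEinvev N)).symm
    have ch_5_7 := mch ((S.ev_comm (ξ (N - 1)) (hEinvev N)).symm)
    have cb_5_8 := (S.ev_comm (ξ N) (hEinvev N)).symm
    have ch_5_8 := mch ((S.ev_comm (ξ N) (hEinvev N)).symm)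
    have cb_5_9 := (S.ev_comm (ξ (N + 1)) (hEinvev N)).symm
    have ch_5_9 := mch ((S.ev_comm (ξ (N + 1)) (hEinvev N)).symm)
    have cb_5_10 := (S.ev_comm (dτ (ξ (N + 1))) (hEinvev N)).symm
    have ch_5_10 := mch ((S.ev_comm (dτ (ξ (N + 1))) (hEinvev N)).symm)
    have cb_6_7 := S.od_anticomm (hξ (N - 1)) (hdτ_od (ξ N) (hξ N))
    have ch_6_7 := mah (S.od_anticomm (hξ (N - 1)) (hdτ_od (ξ N) (hξ N)))
    have cb_6_8 := S.od_anticomm (hξ N) (hdτ_od (ξ N) (hξ N))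
    have ch_6_8 := mah (S.od_anticomm (hξ N) (hdτ_od (ξ N) (hξ N)))
    have cb_6_9 := S.od_anticomm (hξ (N + 1)) (hdτ_od (ξ N) (hξ N))
    have ch_6_9 := mah (S.od_anticomm (hξ (N + 1)) (hdτ_od (ξ N) (hξ N)))
    have cb_6_10 := S.od_anticomm (hdτ_od (ξ (N + 1)) (hξ (N + 1))) (hdτ_od (ξ N) (hξ N))
    have ch_6_10 := mah (S.od_anticomm (hdτ_od (ξ (N + 1)) (hξ (N + 1))) (hdτ_od (ξ N) (hξ N)))
    have cb_7_8 := S.od_anticomm (hξ N) (hξ (N - 1))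
    have ch_7_8 := mah (S.od_anticomm (hξ N) (hξ (N - 1)))
    have cb_7_9 := S.od_anticomm (hξ (N + 1)) (hξ (N - 1))
    have ch_7_9 := mah (S.od_anticomm (hξ (N + 1)) (hξ (N - 1)))
    have cb_7_10 := S.od_anticomm (hdτ_od (ξ (N + 1)) (hξ (N + 1))) (hξ (N - 1))
    have ch_7_10 := mah (S.od_anticomm (hdτ_od (ξ (N + 1)) (hξ (N + 1))) (hξ (N - 1)))
    have cb_8_9 := S.od_anticomm (hξ (N + 1)) (hξ N)
    have ch_8_9 := mah (S.od_anticomm (hξ (N + 1)) (hξ N))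
    have cb_8_10 := S.od_anticomm (hdτ_od (ξ (N + 1)) (hξ (N + 1))) (hξ N)
    have ch_8_10 := mah (S.od_anticomm (hdτ_od (ξ (N + 1)) (hξ (N + 1))) (hξ N))
    have cb_9_10 := S.od_anticomm (hdτ_od (ξ (N + 1)) (hξ (N + 1))) (hξ (N + 1))
    have ch_9_10 := mah (S.od_anticomm (hdτ_od (ξ (N + 1)) (hξ (N + 1))) (hξ (N + 1)))
    have sq_6 : (dτ (ξ N)) * (dτ (ξ N)) = 0 := odd_sq (S.od_anticomm (hdτ_od (ξ N) (hξ N)) (hdτ_od (ξ N) (hξ N)))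
    have sqh_6 := msqh sq_6
    have sq_7 : (ξ (N - 1)) * (ξ (N - 1)) = 0 := odd_sq (S.od_anticomm (hξ (N - 1)) (hξ (N - 1)))
    have sqh_7 := msqh sq_7
    have sq_8 : (ξ N) * (ξ N) = 0 := odd_sq (S.od_anticomm (hξ N) (hξ N))
    have sqh_8 := msqh sq_8
    have sq_9 : (ξ (N + 1)) * (ξ (N + 1)) = 0 := odd_sq (S.od_anticomm (hξ (N + 1)) (hξ (N + 1)))
    have sqh_9 := msqh sq_9
    have sq_10 : (dτ (ξ (N + 1))) * (dτ (ξ (N + 1))) = 0 := odd_sq (S.od_anticomm (hdτ_od (ξ (N + 1)) (hξ (N + 1))) (hdτ_od (ξ (N + 1)) (hξ (N + 1))))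
    have sqh_10 := msqh sq_10
    have hivh1 := minvh hE1
    have hivh2 := minvh hE2
    have hs1 : dτ (ξ N) = (2:ℚ) • (Einv N * ξ (N + 1)) - (2:ℚ) • (Einv N * ξ (N - 1)) := by
      rw [hk1]
      simp only [mul_add, add_mul, mul_sub, sub_mul, smul_add, smul_sub, smul_smul, smul_mul_assoc, mul_smul_comm, mul_assoc, mul_neg, neg_mul, smul_neg, neg_smul, neg_neg, one_mul, mul_one, mul_zero, zero_mul, smul_zero, zero_smul, add_zero, zero_add, neg_zero, sub_zero, zero_sub]
      simp only [mul_neg, neg_mul, neg_neg, smul_neg, neg_smul, mul_zero, zero_mul, smul_zero, zero_smul, add_zero, zero_add, one_mul, mul_one, mul_assoc, smul_mul_assoc, mul_smul_comm, smul_smul, cb_0_1, ch_0_1, cb_0_2, ch_0_2, cb_0_3, ch_0_3, cb_0_4, ch_0_4, cb_0_5, ch_0_5, cb_0_6, ch_0_6, cb_0_7, ch_0_7, cb_0_8, ch_0_8, cb_0_9, ch_0_9, cb_0_10, ch_0_10, cb_1_2, ch_1_2, cb_1_3, ch_1_3, cb_1_4, ch_1_4, cb_1_5, ch_1_5, cb_1_6,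 ch_1_6, cb_1_7, ch_1_7, cb_1_8, ch_1_8, cb_1_9, ch_1_9, cb_1_10, ch_1_10, cb_2_3, ch_2_3, cb_2_4, ch_2_4, cb_2_5, ch_2_5, cb_2_6, ch_2_6, cb_2_7, ch_2_7, cb_2_8, ch_2_8, cb_2_9, ch_2_9, cb_2_10, ch_2_10, cb_3_4, ch_3_4, cb_3_5, ch_3_5, cb_3_6, ch_3_6, cb_3_7, ch_3_7, cb_3_8, ch_3_8, cb_3_9, ch_3_9, cb_3_10, ch_3_10, cb_4_6, ch_4_6, cb_4_7, ch_4_7, cb_4_8, ch_4_8, cb_4_9, ch_4_9, cb_4_10, ch_4_10, cb_5_6, ch_5_6, cb_5_7, ch_5_7, cb_5_8, ch_5_8, cb_5_9, ch_5_9, cb_5_10, ch_5_10, cb_6_7, ch_6_7, cb_6_8, ch_6_8, cb_6_9, ch_6_9, cb_6_10, ch_6_10, cb_7_8, ch_7_8, cb_7_9, ch_7_9, cb_7_10, ch_7_10, cb_8_9, ch_8_9, cb_8_10, ch_8_10, cb_9_10, ch_9_10, sq_6, sqh_6, sq_7, sqh_7, sq_8, sqh_8, sq_9, sqh_9, sq_10,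 sqh_10, hE1, hE2, hivh1, hivh2]
      try module
    have hs2 : dτ (u N) = (2:ℚ) • (1:A) + (8 * p1) • Einv N
        - Einv N * (ξ (N - 1) * ξ N) + Einv N * (ξ (N - 1) * ξ (N + 1))
        - Einv N * (ξ N * ξ (N + 1))
        + (4 * p1) • (Einv N * (Einv N * (ξ (N - 1) * ξ N)))
        - (4 * p1) • (Einv N * (Einv N * (ξ (N - 1) * ξ (N + 1))))
        + (4 * p1) • (Einv N * (Einv N * (ξ N * ξ (N + 1)))) := by
      rw [hk2]
      simp only [hu3]
      simp only [mul_add, add_mul, mul_sub, sub_mul, smul_add, smul_sub, smul_smul, smul_mul_assoc, mul_smul_comm, mul_assoc, mul_neg, neg_mul, smul_neg, neg_smul, neg_neg, one_mul, mul_one, mul_zero, zero_mul, smul_zero, zero_smul, add_zero, zero_add, neg_zero, sub_zero, zero_sub]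
      simp only [mul_neg, neg_mul, neg_neg, smul_neg, neg_smul, mul_zero, zero_mul, smul_zero, zero_smul, add_zero, zero_add, one_mul, mul_one, mul_assoc, smul_mul_assoc, mul_smul_comm, smul_smul, cb_0_1, ch_0_1, cb_0_2, ch_0_2, cb_0_3, ch_0_3, cb_0_4, ch_0_4, cb_0_5, ch_0_5, cb_0_6, ch_0_6, cb_0_7, ch_0_7, cb_0_8, ch_0_8, cb_0_9, ch_0_9, cb_0_10, ch_0_10, cb_1_2, ch_1_2, cb_1_3, ch_1_3, cb_1_4, ch_1_4, cb_1_5, ch_1_5, cb_1_6, ch_1_6, cb_1_7, ch_1_7, cb_1_8, ch_1_8, cb_1_9, ch_1_9, cb_1_10, ch_1_10, cb_2_3, ch_2_3, cb_2_4, ch_2_4, cb_2_5, ch_2_5, cb_2_6, ch_2_6, cb_2_7, ch_2_7, cb_2_8, ch_2_8, cb_2_9, ch_2_9, cb_2_10, ch_2_10, cb_3_4, ch_3_4, cb_3_5, ch_3_5, cb_3_6, ch_3_6, cb_3_7, ch_3_7, cb_3_8, ch_3_8, cb_3_9, ch_3_9, cb_3_10, ch_3_10, cb_4_6, ch_4_6,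 cb_4_7, ch_4_7, cb_4_8, ch_4_8, cb_4_9, ch_4_9, cb_4_10, ch_4_10, cb_5_6, ch_5_6, cb_5_7, ch_5_7, cb_5_8, ch_5_8, cb_5_9, ch_5_9, cb_5_10, ch_5_10, cb_6_7, ch_6_7, cb_6_8, ch_6_8, cb_6_9, ch_6_9, cb_6_10, ch_6_10, cb_7_8, ch_7_8, cb_7_9, ch_7_9, cb_7_10, ch_7_10, cb_8_9, ch_8_9, cb_8_10, ch_8_10, cb_9_10, ch_9_10, sq_6, sqh_6, sq_7, sqh_7, sq_8, sqh_8, sq_9, sqh_9, sq_10, sqh_10, hE1, hE2, hivh1, hivh2]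
      try module
    simp only [W, T, t23, t43, ζ, h]
    apply mat4_zero
    all_goals
      simp only [Matrix.map_apply, Matrix.add_apply, Matrix.sub_apply, Matrix.mul_apply, Matrix.zero_apply, Matrix.of_apply, Matrix.cons_val', Matrix.cons_val_zero, Matrix.cons_val_one, Matrix.cons_val_two, Matrix.cons_val_three, Matrix.head_cons, Matrix.tail_cons, Matrix.empty_val', Matrix.cons_val_fin_one, Matrix.head_fin_const, Fin.sum_univ_four]
      try simp only [hidx]
      simp only [hdτ_mul, hdτ_add, hdτ_smul, dτ_sub, dτ_neg, dτ_one, dτ_zero, smul_zero, mul_zero, zero_mul, add_zero, zero_add, neg_zero, sub_zero, zero_sub]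
      try simp only [← hdu3]
      try simp only [hs1, hs2]
      try simp only [hu3]
      simp only [mul_add, add_mul, mul_sub, sub_mul, smul_add, smul_sub, smul_smul, smul_mul_assoc, mul_smul_comm, mul_assoc, mul_neg, neg_mul, smul_neg, neg_smul, neg_neg, one_mul, mul_one, mul_zero, zero_mul, smul_zero, zero_smul, add_zero, zero_add, neg_zero, sub_zero, zero_sub, cb_0_1, ch_0_1, cb_0_2, ch_0_2, cb_0_3, ch_0_3, cb_0_4, ch_0_4, cb_0_5, ch_0_5, cb_0_6, ch_0_6, cb_0_7, ch_0_7, cb_0_8, ch_0_8, cb_0_9, ch_0_9, cb_0_10, ch_0_10, cb_1_2, ch_1_2, cb_1_3, ch_1_3, cb_1_4, ch_1_4, cb_1_5, ch_1_5, cb_1_6, ch_1_6, cb_1_7, ch_1_7, cb_1_8, ch_1_8, cb_1_9, ch_1_9, cb_1_10, ch_1_10, cb_2_3, ch_2_3, cb_2_4, ch_2_4, cb_2_5, ch_2_5, cb_2_6, ch_2_6, cb_2_7, ch_2_7, cb_2_8, ch_2_8, cb_2_9, ch_2_9, cb_2_10, ch_2_10, cb_3_4, ch_3_4, cb_3_5,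 ch_3_5, cb_3_6, ch_3_6, cb_3_7, ch_3_7, cb_3_8, ch_3_8, cb_3_9, ch_3_9, cb_3_10, ch_3_10, cb_4_6, ch_4_6, cb_4_7, ch_4_7, cb_4_8, ch_4_8, cb_4_9, ch_4_9, cb_4_10, ch_4_10, cb_5_6, ch_5_6, cb_5_7, ch_5_7, cb_5_8, ch_5_8, cb_5_9, ch_5_9, cb_5_10, ch_5_10, cb_6_7, ch_6_7, cb_6_8, ch_6_8, cb_6_9, ch_6_9, cb_6_10, ch_6_10, cb_7_8, ch_7_8, cb_7_9, ch_7_9, cb_7_10, ch_7_10, cb_8_9, ch_8_9, cb_8_10, ch_8_10, cb_9_10, ch_9_10, sq_6, sqh_6, sq_7, sqh_7, sq_8, sqh_8, sq_9, sqh_9, sq_10, sqh_10, hE1, hE2, hivh1, hivh2]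
      try module
end
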